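/- arXiv:1802.02362 — 10 statements merged into one kernel-verified Lean document; each statement's English description precedes it below -/
import Mathlib

section
/- Let f = (f^1, …, f^d) be functions with each f^i ∈ C²_{b,0}(U) and f^i(u) = u_i·(1 + o(|u|)) as u → 0 in U, for i = 1, …, d. Then every H ∈ C²_{b,0}(U) admits a unique decomposition H = Σ_{i=1}^d α^f_i(H) f^i + Σ_{i,j=1}^d β^f_{ij}(H) f^i f^j + H̄^f, where the α^f_i(H) are real numbers, (β^f_{ij}(H)) is a symmetric real d×d matrix, and H̄^f : U → ℝ is continuous, bounded, and satisfies H̄^f(u) = o(|f(u)|²) as u → 0 in U. -/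
/-!
Because `fᵢ(u) = uᵢ + o(|u|²)`, a polynomial of degree at most two in `f(u)` differs from the
same polynomial in `u` by `o(|u|²)`; in particular `Σ fᵢ(u)² ~ |u|²`. For existence, expand `H` to
second order in `u`, symmetrize the quadratic coefficients, and let `H̄` be `H` minus that
polynomial evaluated at `f(u)`. For uniqueness, two decompositions differ by a polynomial `P` with
`P(u) = o(|u|²)` on a neighbourhood of `0`; along each line `t ↦ t • v` this forces the linear and
the quadratic part of `P` to vanish at `v`, and polarization of the symmetric quadratic part
leaves all coefficients zero.
-/

open Filter Asymptotics Topology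

/-- `H ∈ C²_{b,0}(U)` : `H` is continuous and bounded on `U` and admits a second order
expansion `H(u) = Σ αᵢ uᵢ + Σ βᵢⱼ uᵢ uⱼ + o(|u|²)` as `u → 0` in `U`. -/
def MemCb20 {d : ℕ} (U : Set (EuclideanSpace ℝ (Fin d)))
    (H : EuclideanSpace ℝ (Fin d) → ℝ) : Prop :=
  ContinuousOn H U ∧ (∃ M : ℝ, ∀ u ∈ U, |H u| ≤ M) ∧
    ∃ (a : Fin d → ℝ) (b : Fin d → Fin d → ℝ),
      (fun u : EuclideanSpace ℝ (Fin d) =>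
          H u - (∑ i, a i * u i) - ∑ i, ∑ j, b i j * u i * u j)
        =o[𝓝[U] 0] fun u => ‖u‖ ^ 2

lemma eq_zero_of_const_mul_isLittleO {α : Type*} {l : Filter α} {g : α → ℝ} {c : ℝ}
    (hg : ∃ᶠ x in l, g x ≠ 0) (h : (fun x => c * g x) =o[l] g) : c = 0 := by
  by_contra hc
  exact isLittleO_irrefl hg ((isLittleO_const_mul_left_iff hc).1 h)

lemma eq_zero_of_isLittleO_sq {L Q : ℝ}
    (h : (fun t : ℝ => t * L + t ^ 2 * Q) =o[𝓝 0] fun t => t ^ 2) : L = 0 ∧ Q = 0 := by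
  have hne : ∀ n : ℕ, ∃ᶠ t in 𝓝 (0 : ℝ), t ^ n ≠ 0 := fun n =>
    ((eventually_nhdsWithin_of_forall (s := {0}ᶜ) fun t (ht : t ≠ 0) =>
      pow_ne_zero n ht).frequently).filter_mono nhdsWithin_le_nhds
  have hsq : (fun t : ℝ => t ^ 2) =o[𝓝 0] fun t => t := isLittleO_pow_id one_lt_two
  have hL : L = 0 := by
    refine eq_zero_of_const_mul_isLittleO (by simpa using hne 1) ?_
    have := (h.trans hsq).sub (hsq.const_mul_left Q)
    exact this.congr_left fun t => by ring
  subst hL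
  exact ⟨rfl, eq_zero_of_const_mul_isLittleO (hne 2) (h.congr_left fun t => by ring)⟩

lemma isBigO_one_principal_iff {α : Type*} {s : Set α} {g : α → ℝ} :
    g =O[𝓟 s] (fun _ => (1 : ℝ)) ↔ ∃ M, ∀ u ∈ s, |g u| ≤ M := by
  simp only [isBigO_principal, norm_one, mul_one, Real.norm_eq_abs]

lemma isLittleO_mul_sub_mul {α : Type*} {l : Filter α} {x x' y y' r : α → ℝ}
    (hxx' : (fun u => x u - x' u) =o[l] r) (hyy' : (fun u => y u - y' u) =o[l] r)
    (hx' : x' =O[l] fun _ => (1 : ℝ)) (hy : y =O[l] fun _ => (1 : ℝ)) :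
    (fun u => x u * y u - x' u * y' u) =o[l] r := by
  have h1 := hxx'.mul_isBigO hy
  have h2 := hx'.mul_isLittleO hyy'
  simp only [mul_one, one_mul] at h1 h2
  exact (h1.add h2).congr_left fun u => by ring

def quadPoly {ι : Type*} [Fintype ι] (a : ι → ℝ) (b : ι → ι → ℝ) (x : ι → ℝ) : ℝ :=
  ∑ i, a i * x i + ∑ i, ∑ j, b i j * x i * x j

section quadPoly

variable {α ι : Type*} [Fintype ι]

lemma quadPoly_sub (a a' : ι → ℝ) (b b' : ι → ι → ℝ) (x : ι → ℝ) :
    quadPoly (a - a') (b - b') x = quadPoly a b x - quadPoly a' b' x := by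
  simp only [quadPoly, Pi.sub_apply, sub_mul, Finset.sum_sub_distrib]
  ring

lemma quadPoly_symmetrize (a : ι → ℝ) (b : ι → ι → ℝ) (x : ι → ℝ) :
    quadPoly a (fun i j => (b i j + b j i) / 2) x = quadPoly a b x := by
  have hswap : ∑ i, ∑ j, b j i * x i * x j = ∑ i, ∑ j, b i j * x i * x j := by
    rw [Finset.sum_comm]
    exact Finset.sum_congr rfl fun i _ => Finset.sum_congr rfl fun j _ => by ring
  simp only [quadPoly, add_div, add_mul, Finset.sum_add_distrib, div_mul_eq_mul_div,
    ← Finset.sum_div, hswap]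
  ring

lemma quadPoly_smul (a : ι → ℝ) (b : ι → ι → ℝ) (t : ℝ) (x : ι → ℝ) :
    quadPoly a b (t • x) = t * quadPoly a 0 x + t ^ 2 * quadPoly 0 b x := by
  simp only [quadPoly, Pi.smul_apply, smul_eq_mul, Pi.zero_apply, zero_mul,
    Finset.sum_const_zero, zero_add, add_zero, Finset.mul_sum]
  congr 1 <;> refine Finset.sum_congr rfl fun i _ => ?_
  · ring
  · exact Finset.sum_congr rfl fun j _ => by ring

lemma quadPoly_single [DecidableEq ι] (a : ι → ℝ) (b : ι → ι → ℝ) (i : ι) :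
    quadPoly a b (Pi.single i 1) = a i + b i i := by
  simp [quadPoly, Pi.single_apply]

lemma quadPoly_zero_single_add_single [DecidableEq ι] (b : ι → ι → ℝ) (i j : ι) :
    quadPoly 0 b (Pi.single i 1 + Pi.single j 1) = b i i + b i j + b j i + b j j := by
  simp only [quadPoly, Pi.zero_apply, Pi.add_apply, Pi.single_apply, mul_add, mul_ite, mul_one,
    mul_zero, ite_self, add_zero, Finset.sum_const_zero, Finset.sum_add_distrib,
    Finset.sum_ite_eq', Finset.mem_univ, ↓reduceIte, zero_add]
  ring

lemma eq_zero_of_forall_quadPoly_eq_zero {a : ι → ℝ} {b : ι → ι → ℝ}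
    (hb : ∀ i j, b i j = b j i) (h : ∀ x, quadPoly a 0 x = 0 ∧ quadPoly 0 b x = 0) :
    a = 0 ∧ b = 0 := by
  classical
  have ha : a = 0 := funext fun i => by simpa [quadPoly_single] using (h (Pi.single i 1)).1
  have hdiag : ∀ i, b i i = 0 := fun i => by simpa [quadPoly_single] using (h (Pi.single i 1)).2
  refine ⟨ha, funext fun i => funext fun j => ?_⟩
  have := (h (Pi.single i 1 + Pi.single j 1)).2
  rw [quadPoly_zero_single_add_single, hdiag, hdiag, hb j i] at this
  simp only [Pi.zero_apply]
  linarith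

lemma isLittleO_quadPoly_sub {l : Filter α} {x y : α → ι → ℝ}
    {r : α → ℝ} (hxy : ∀ i, (fun u => x u i - y u i) =o[l] r)
    (hx : ∀ i, (fun u => x u i) =O[l] fun _ => (1 : ℝ))
    (hy : ∀ i, (fun u => y u i) =O[l] fun _ => (1 : ℝ)) (a : ι → ℝ) (b : ι → ι → ℝ) :
    (fun u => quadPoly a b (x u) - quadPoly a b (y u)) =o[l] r := by
  have hlin : (fun u => ∑ i, a i * (x u i - y u i)) =o[l] r :=
    IsLittleO.fun_sum fun i _ => (hxy i).const_mul_left (a i)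
  have hquad : (fun u => ∑ i, ∑ j, b i j * (x u i * x u j - y u i * y u j)) =o[l] r :=
    IsLittleO.fun_sum fun i _ => IsLittleO.fun_sum fun j _ =>
      (isLittleO_mul_sub_mul (hxy i) (hxy j) (hy i) (hx j)).const_mul_left (b i j)
  refine (hlin.add hquad).congr_left fun u => ?_
  simp only [quadPoly, mul_sub, Finset.sum_sub_distrib, mul_assoc]
  ring

lemma quadPoly_eq_zero_of_isLittleO {a : ι → ℝ} {b : ι → ι → ℝ}
    (hb : ∀ i j, b i j = b j i)
    (h : (fun u : EuclideanSpace ℝ ι => quadPoly a b u) =o[𝓝 0] fun u => ‖u‖ ^ 2) :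
    a = 0 ∧ b = 0 := by
  refine eq_zero_of_forall_quadPoly_eq_zero hb fun x => eq_zero_of_isLittleO_sq ?_
  let v : EuclideanSpace ℝ ι := WithLp.toLp 2 x
  have hline : Tendsto (fun t : ℝ => t • v) (𝓝 0) (𝓝 0) := by
    simpa using (tendsto_id (x := 𝓝 (0 : ℝ))).smul_const v
  have hnorm : (fun t : ℝ => ‖t • v‖ ^ 2) =O[𝓝 0] fun t => t ^ 2 :=
    (isBigO_refl (fun t : ℝ => t ^ 2) _).const_mul_left (‖v‖ ^ 2) |>.congr_left fun t => by
      rw [norm_smul, mul_pow, Real.norm_eq_abs, sq_abs, mul_comm]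
  refine ((h.comp_tendsto hline).trans_isBigO hnorm).congr_left fun t => ?_
  simp [v, quadPoly_smul]

lemma isBigO_one_quadPoly {l : Filter α} {x : α → ι → ℝ}
    (hx : ∀ i, (fun u => x u i) =O[l] fun _ => (1 : ℝ)) (a : ι → ℝ) (b : ι → ι → ℝ) :
    (fun u => quadPoly a b (x u)) =O[l] fun _ => (1 : ℝ) := by
  have hquad : ∀ i j, (fun u => b i j * x u i * x u j) =O[l] fun _ => (1 : ℝ) := fun i j => by
    simpa only [mul_one, mul_assoc] using ((hx i).mul (hx j)).const_mul_left (b i j)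
  exact (IsBigO.fun_sum fun i _ => (hx i).const_mul_left (a i)).add
    (IsBigO.fun_sum fun i _ => IsBigO.fun_sum fun j _ => hquad i j)

lemma continuousOn_quadPoly {X : Type*} [TopologicalSpace X] {s : Set X}
    {x : ι → X → ℝ} (hx : ∀ i, ContinuousOn (x i) s) (a : ι → ℝ) (b : ι → ι → ℝ) :
    ContinuousOn (fun u => quadPoly a b (fun i => x i u)) s :=
  (continuousOn_finsetSum _ fun i _ => continuousOn_const.mul (hx i)).add
    (continuousOn_finsetSum _ fun i _ => continuousOn_finsetSum _ fun j _ =>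
      (continuousOn_const.mul (hx i)).mul (hx j))

end quadPoly

lemma isLittleO_sub_apply_of_eq_mul {ι : Type*} [Fintype ι] {l : Filter (EuclideanSpace ℝ ι)}
    {g ε : EuclideanSpace ℝ ι → ℝ} {i : ι} (hε : ε =o[l] fun u => ‖u‖)
    (hg : ∀ᶠ u in l, g u = u i * (1 + ε u)) :
    (fun u => g u - u i) =o[l] fun u => ‖u‖ ^ 2 := by
  have happly : (fun u : EuclideanSpace ℝ ι => u i) =O[l] fun u => ‖u‖ :=
    isBigO_of_le _ fun u => (PiLp.norm_apply_le u i).trans (le_abs_self _)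
  refine (happly.mul_isLittleO hε).congr' ?_ (.of_eq (funext fun u => (sq _).symm))
  filter_upwards [hg] with u hu
  rw [hu]
  ring

lemma MemCb20.isBigO_one_principal {d : ℕ} {U : Set (EuclideanSpace ℝ (Fin d))}
    {H : EuclideanSpace ℝ (Fin d) → ℝ} (hH : MemCb20 U H) : H =O[𝓟 U] fun _ => (1 : ℝ) :=
  isBigO_one_principal_iff.2 hH.2.1

lemma MemCb20.isBigO_one {d : ℕ} {U : Set (EuclideanSpace ℝ (Fin d))}
    {H : EuclideanSpace ℝ (Fin d) → ℝ} (hH : MemCb20 U H) : H =O[𝓝[U] 0] fun _ => (1 : ℝ) :=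
  hH.isBigO_one_principal.mono (le_principal_iff.2 self_mem_nhdsWithin)

def IsDecomposition {ι : Type*} [Fintype ι] (U : Set (EuclideanSpace ℝ ι))
    (f : ι → EuclideanSpace ℝ ι → ℝ) (H : EuclideanSpace ℝ ι → ℝ) (α : ι → ℝ)
    (β : ι → ι → ℝ) (Hbar : EuclideanSpace ℝ ι → ℝ) : Prop :=
  (∀ i j, β i j = β j i) ∧ ContinuousOn Hbar U ∧ (∃ M : ℝ, ∀ u ∈ U, |Hbar u| ≤ M) ∧
    (Hbar =o[𝓝[U] 0] fun u => ∑ i, (f i u) ^ 2) ∧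
    ∀ u ∈ U, H u = quadPoly α β (fun i => f i u) + Hbar u

section Decomposition

variable {ι : Type*} [Fintype ι] {U : Set (EuclideanSpace ℝ ι)} {f : ι → EuclideanSpace ℝ ι → ℝ}

lemma isLittleO_quadPoly_comp_sub (hfb : ∀ i, f i =O[𝓝[U] 0] fun _ => (1 : ℝ))
    (hfu : ∀ i, (fun u => f i u - u i) =o[𝓝[U] 0] fun u => ‖u‖ ^ 2) (a : ι → ℝ)
    (b : ι → ι → ℝ) :
    (fun u => quadPoly a b (fun i => f i u) - quadPoly a b u) =o[𝓝[U] 0] fun u => ‖u‖ ^ 2 :=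
  isLittleO_quadPoly_sub hfu hfb (fun i => ((by fun_prop :
    Continuous fun u : EuclideanSpace ℝ ι => u i).tendsto 0).mono_left nhdsWithin_le_nhds
      |>.isBigO_one ℝ) a b

lemma isEquivalent_sum_sq_norm_sq (hfb : ∀ i, f i =O[𝓝[U] 0] fun _ => (1 : ℝ))
    (hfu : ∀ i, (fun u => f i u - u i) =o[𝓝[U] 0] fun u => ‖u‖ ^ 2) :
    (fun u => ∑ i, (f i u) ^ 2) ~[𝓝[U] 0] fun u => ‖u‖ ^ 2 := by
  classical
  -- `Σ xᵢ²` is `quadPoly 0 δ x` for the Kronecker delta `δ`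
  refine (isLittleO_quadPoly_comp_sub hfb hfu 0 (fun i j => if i = j then 1 else 0)).congr_left
    fun u => ?_
  simp [quadPoly, EuclideanSpace.real_norm_sq_eq, ← sq]

lemma IsDecomposition.unique (hU0 : U ∈ 𝓝 0) (hfb : ∀ i, f i =O[𝓝[U] 0] fun _ => (1 : ℝ))
    (hfu : ∀ i, (fun u => f i u - u i) =o[𝓝[U] 0] fun u => ‖u‖ ^ 2)
    {H Hbar Hbar' : EuclideanSpace ℝ ι → ℝ} {α α' : ι → ℝ} {β β' : ι → ι → ℝ}
    (h : IsDecomposition U f H α β Hbar) (h' : IsDecomposition U f H α' β' Hbar') :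
    α' = α ∧ β' = β ∧ Set.EqOn Hbar' Hbar U := by
  obtain ⟨hβ, -, -, ho, heq⟩ := h
  obtain ⟨hβ', -, -, ho', heq'⟩ := h'
  have hf_diff : (fun u => quadPoly (α' - α) (β' - β) (fun i => f i u))
      =o[𝓝[U] 0] fun u => ‖u‖ ^ 2 := by
    refine ((ho.sub ho').trans_isBigO (isEquivalent_sum_sq_norm_sq hfb hfu).isBigO).congr'
      ?_ .rfl
    filter_upwards [self_mem_nhdsWithin] with u hu
    rw [quadPoly_sub]
    linarith [heq u hu, heq' u hu]
  have hu_diff : (fun u : EuclideanSpace ℝ ι => quadPoly (α' - α) (β' - β) u)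
      =o[𝓝 0] fun u => ‖u‖ ^ 2 := by
    rw [← nhdsWithin_eq_nhds.2 hU0]
    exact (hf_diff.sub (isLittleO_quadPoly_comp_sub hfb hfu _ _)).congr_left fun u => by ring
  obtain ⟨hα0, hβ0⟩ :=
    quadPoly_eq_zero_of_isLittleO (fun i j => by simp only [Pi.sub_apply, hβ i j, hβ' i j]) hu_diff
  obtain rfl := sub_eq_zero.1 hα0
  obtain rfl := sub_eq_zero.1 hβ0
  exact ⟨rfl, rfl, fun u hu => by linarith [heq u hu, heq' u hu]⟩

end Decomposition

lemma exists_isDecomposition {d : ℕ} {U : Set (EuclideanSpace ℝ (Fin d))}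
    {f : Fin d → EuclideanSpace ℝ (Fin d) → ℝ} (hf : ∀ i, MemCb20 U (f i))
    (hfu : ∀ i, (fun u => f i u - u i) =o[𝓝[U] 0] fun u => ‖u‖ ^ 2)
    {H : EuclideanSpace ℝ (Fin d) → ℝ} (hH : MemCb20 U H) :
    ∃ α β Hbar, IsDecomposition U f H α β Hbar := by
  obtain ⟨hHc, hHb, a, b, hHo⟩ := hH
  have hfb i := (hf i).isBigO_one
  set β : Fin d → Fin d → ℝ := fun i j => (b i j + b j i) / 2
  refine ⟨a, β, fun u => H u - quadPoly a β (fun i => f i u), fun i j => by simp only [β]; ring,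
    hHc.sub (continuousOn_quadPoly (fun i => (hf i).1) a β), ?_, ?_, fun u _ => by ring⟩
  · exact isBigO_one_principal_iff.1 <| (isBigO_one_principal_iff.2 hHb).sub
      (isBigO_one_quadPoly (fun i => (hf i).isBigO_one_principal) a β)
  · refine ((hHo.sub (isLittleO_quadPoly_comp_sub hfb hfu a β)).congr_left fun u => ?_)
      |>.trans_isBigO (isEquivalent_sum_sq_norm_sq hfb hfu).symm.isBigO
    rw [quadPoly_symmetrize, quadPoly_symmetrize]
    simp only [quadPoly]
    ring

theorem stmt0_general {d : ℕ} (U : Set (EuclideanSpace ℝ (Fin d)))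
    (hU0 : U ∈ 𝓝 (0 : EuclideanSpace ℝ (Fin d)))
    (f : Fin d → EuclideanSpace ℝ (Fin d) → ℝ)
    (hf : ∀ i, MemCb20 U (f i))
    (hfid : ∀ i, ∃ ε : EuclideanSpace ℝ (Fin d) → ℝ,
      (ε =o[𝓝[U] 0] fun u : EuclideanSpace ℝ (Fin d) => ‖u‖) ∧
        ∀ u ∈ U, f i u = u i * (1 + ε u))
    (H : EuclideanSpace ℝ (Fin d) → ℝ) (hH : MemCb20 U H) :
    ∃ (α : Fin d → ℝ) (β : Fin d → Fin d → ℝ)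
      (Hbar : EuclideanSpace ℝ (Fin d) → ℝ),
      ((∀ i j, β i j = β j i) ∧ ContinuousOn Hbar U ∧
        (∃ M : ℝ, ∀ u ∈ U, |Hbar u| ≤ M) ∧
        (Hbar =o[𝓝[U] 0] fun u : EuclideanSpace ℝ (Fin d) => ∑ i, (f i u) ^ 2) ∧
        ∀ u ∈ U, H u = (∑ i, α i * f i u) + (∑ i, ∑ j, β i j * f i u * f j u) + Hbar u) ∧
      ∀ (α' : Fin d → ℝ) (β' : Fin d → Fin d → ℝ)
        (Hbar' : EuclideanSpace ℝ (Fin d) → ℝ),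
        ((∀ i j, β' i j = β' j i) ∧ ContinuousOn Hbar' U ∧
          (∃ M : ℝ, ∀ u ∈ U, |Hbar' u| ≤ M) ∧
          (Hbar' =o[𝓝[U] 0] fun u : EuclideanSpace ℝ (Fin d) => ∑ i, (f i u) ^ 2) ∧
          ∀ u ∈ U, H u = (∑ i, α' i * f i u) + (∑ i, ∑ j, β' i j * f i u * f j u) + Hbar' u) →
        α' = α ∧ β' = β ∧ Set.EqOn Hbar' Hbar U := by
  have hfu : ∀ i, (fun u => f i u - u i) =o[𝓝[U] 0] fun u => ‖u‖ ^ 2 := fun i =>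
    have ⟨_, hε, hfε⟩ := hfid i
    isLittleO_sub_apply_of_eq_mul hε (eventually_nhdsWithin_of_forall hfε)
  obtain ⟨α, β, Hbar, hdec⟩ := exists_isDecomposition hf hfu hH
  exact ⟨α, β, Hbar, hdec, fun α' β' Hbar' hdec' =>
    hdec.unique hU0 (fun i => (hf i).isBigO_one) hfu hdec'⟩

/-- Lemma 2.1 (unique decomposition with respect to a specific function `f`). -/
theorem stmt0 {d : ℕ} (hd : 1 ≤ d) (U : Set (EuclideanSpace ℝ (Fin d)))
    (hUc : IsClosed U) (hU0 : U ∈ 𝓝 (0 : EuclideanSpace ℝ (Fin d)))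
    (f : Fin d → EuclideanSpace ℝ (Fin d) → ℝ)
    (hf : ∀ i, MemCb20 U (f i))
    (hfid : ∀ i, ∃ ε : EuclideanSpace ℝ (Fin d) → ℝ,
      (ε =o[𝓝[U] 0] fun u : EuclideanSpace ℝ (Fin d) => ‖u‖) ∧
        ∀ u ∈ U, f i u = u i * (1 + ε u))
    (H : EuclideanSpace ℝ (Fin d) → ℝ) (hH : MemCb20 U H) :
    ∃ (α : Fin d → ℝ) (β : Fin d → Fin d → ℝ)
      (Hbar : EuclideanSpace ℝ (Fin d) → ℝ),
      ((∀ i j, β i j = β j i) ∧ ContinuousOn Hbar U ∧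
        (∃ M : ℝ, ∀ u ∈ U, |Hbar u| ≤ M) ∧
        (Hbar =o[𝓝[U] 0] fun u : EuclideanSpace ℝ (Fin d) => ∑ i, (f i u) ^ 2) ∧
        ∀ u ∈ U, H u = (∑ i, α i * f i u) + (∑ i, ∑ j, β i j * f i u * f j u) + Hbar u) ∧
      ∀ (α' : Fin d → ℝ) (β' : Fin d → Fin d → ℝ)
        (Hbar' : EuclideanSpace ℝ (Fin d) → ℝ),
        ((∀ i j, β' i j = β' j i) ∧ ContinuousOn Hbar' U ∧
          (∃ M : ℝ, ∀ u ∈ U, |Hbar' u| ≤ M) ∧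
          (Hbar' =o[𝓝[U] 0] fun u : EuclideanSpace ℝ (Fin d) => ∑ i, (f i u) ^ 2) ∧
          ∀ u ∈ U, H u = (∑ i, α' i * f i u) + (∑ i, ∑ j, β' i j * f i u * f j u) + Hbar' u) →
        α' = α ∧ β' = β ∧ Set.EqOn Hbar' Hbar U :=
  stmt0_general U hU0 f hf hfid H hH
end

section
/- Assume (H0) and (H1). Then for each x ∈ 𝒳 there exists a linear functional G_x on C²_{b,0}(U), agreeing with the given values G_x(H) for H ∈ ℋ, such that for every H ∈ C²_{b,0}(U) one has lim_{N→∞} sup_{x∈𝒳} |G^N_x(H) − G_x(H)| = 0 and sup_{x∈𝒳} |G_x(H)| ≤ sup_{N≥1, x∈𝒳} |G^N_x(H)| < ∞. -/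
open MeasureTheory Filter Asymptotics Topology Set

/-!
On `C²_{b,0}(U)` the maps `H ↦ G^N_x(H)` are integrals against `v_N` times the law of
`F^N_x - x`, hence linear and positive, and by (H1)(3) they converge uniformly in `x` on the
span of `ℋ`. A general `H` differs from the span element `L = Σ aᵢ hⁱ + Σ bᵢⱼ hⁱ hʲ` built from
its second-order coefficients by `K = o(|u|²)`; as `|h|²` is comparable to `|u|²` near `0`,
`K = |h|² g` with `g` continuous and `g(0) = 0`. Cut `g` off outside a large ball (the rest is
uniformly small by (H0)) and approximate it uniformly by the `gₙ` of (H1)(2): then `G^N_x(K)` is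
uniformly close to the uniformly Cauchy `G^N_x(|h|² gₙ)`, so `G^N_x(H)` is uniformly Cauchy for
every `H`, and `G_x(H)` is its limit.
-/

section UniformCauchy

variable {ι α β : Type*} {s : Set α}

theorem UniformCauchySeqOn.congr [UniformSpace β] {p : Filter ι} {F F' : ι → α → β}
    (hF : UniformCauchySeqOn F p s) (hFF' : ∀ n, EqOn (F n) (F' n) s) :
    UniformCauchySeqOn F' p s := fun u hu => by
  filter_upwards [hF u hu] with m hm x hx
  rw [← hFF' m.1 hx, ← hFF' m.2 hx]
  exact hm x hx

theorem UniformCauchySeqOn.const_mul {p : Filter ι} {F : ι → α → ℝ}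
    (hF : UniformCauchySeqOn F p s) (c : ℝ) :
    UniformCauchySeqOn (fun n x => c * F n x) p s :=
  (uniformContinuous_const_smul c).comp_uniformCauchySeqOn hF

variable [Nonempty ι] [SemilatticeSup ι]

theorem uniformCauchySeqOn_of_forall_approx [PseudoMetricSpace β] {F : ι → α → β}
    (h : ∀ ε > 0, ∃ G : ι → α → β, UniformCauchySeqOn G atTop s ∧
      ∀ᶠ n in atTop, ∀ x ∈ s, dist (F n x) (G n x) ≤ ε) :
    UniformCauchySeqOn F atTop s := by
  rw [Metric.uniformCauchySeqOn_iff]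
  intro ε hε
  obtain ⟨G, hG, hFG⟩ := h (ε / 3) (by positivity)
  obtain ⟨N₁, hN₁⟩ := Metric.uniformCauchySeqOn_iff.1 hG (ε / 3) (by positivity)
  obtain ⟨N₂, hN₂⟩ := eventually_atTop.1 hFG
  refine ⟨N₁ ⊔ N₂, fun m hm n hn x hx => ?_⟩
  have hm' := hN₂ m (le_sup_right.trans hm) x hx
  have hn' := hN₂ n (le_sup_right.trans hn) x hx
  have hmn := hN₁ m (le_sup_left.trans hm) n (le_sup_left.trans hn) x hx
  calc dist (F m x) (F n x) ≤ dist (F m x) (G m x) + dist (G m x) (G n x) + dist (G n x) (F n x) :=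
        dist_triangle4 _ _ _ _
    _ < ε := by rw [dist_comm (G n x)]; linarith

theorem tendstoUniformlyOn_atTop_iff_abs_sub_le {F : ι → α → ℝ} {f : α → ℝ} :
    TendstoUniformlyOn F f atTop s ↔
      ∀ ε > 0, ∃ N₀, ∀ N ≥ N₀, ∀ x ∈ s, |F N x - f x| ≤ ε := by
  simp_rw [Metric.tendstoUniformlyOn_iff, eventually_atTop, dist_comm (f _), Real.dist_eq]
  refine ⟨fun h ε hε => ?_, fun h ε hε => ?_⟩
  · obtain ⟨N₀, hN₀⟩ := h ε hε
    exact ⟨N₀, fun N hN x hx => (hN₀ N hN x hx).le⟩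
  · obtain ⟨N₀, hN₀⟩ := h (ε / 2) (by positivity)
    exact ⟨N₀, fun N hN x hx => (hN₀ N hN x hx).trans_lt (by linarith)⟩

theorem UniformCauchySeqOn.tendstoUniformlyOn_limUnder [UniformSpace β] [CompleteSpace β]
    [Nonempty β] {F : ι → α → β} (hF : UniformCauchySeqOn F atTop s) :
    TendstoUniformlyOn F (fun x => limUnder atTop fun n => F n x) atTop s :=
  hF.tendstoUniformlyOn_of_tendsto fun _ hx => (hF.cauchySeq hx).tendsto_limUnder

end UniformCauchy

theorem UniformCauchySeqOn.exists_forall_abs_le {α : Type*} {s : Set α} {F : ℕ → α → ℝ}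
    (hF : UniformCauchySeqOn F atTop s) (hbdd : ∀ n, ∃ M, ∀ x ∈ s, |F n x| ≤ M) :
    ∃ M, ∀ n, ∀ x ∈ s, |F n x| ≤ M := by
  choose B hB using hbdd
  obtain ⟨N₀, hN₀⟩ := Metric.uniformCauchySeqOn_iff.1 hF 1 one_pos
  have hB_le : ∀ n ≤ N₀, B n ≤ ∑ k ∈ Finset.range (N₀ + 1), |B k| := fun n hn =>
    (le_abs_self _).trans <| Finset.single_le_sum (f := fun k => |B k|)
      (fun _ _ => abs_nonneg _) (Finset.mem_range.2 (Nat.lt_succ_of_le hn))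
  refine ⟨∑ k ∈ Finset.range (N₀ + 1), |B k| + 1, fun n x hx => ?_⟩
  rcases le_total n N₀ with hn | hn
  · linarith [hB n x hx, hB_le n hn]
  · have h₁ : |F n x - F N₀ x| < 1 := by simpa [Real.dist_eq] using hN₀ n hn N₀ le_rfl x hx
    linarith [abs_sub_abs_le_abs_sub (F n x) (F N₀ x), hB N₀ x hx, hB_le N₀ le_rfl]

theorem uniformCauchySeqOn_of_mem_span {ι α β : Type*} {p : Filter ι} {s : Set α}
    {T : ι → α → (β → ℝ) → ℝ} {V : Submodule ℝ (β → ℝ)} {ℋ : Set (β → ℝ)}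
    (hℋV : Submodule.span ℝ ℋ ≤ V)
    (hadd : ∀ n, ∀ x ∈ s, ∀ H₁ ∈ V, ∀ H₂ ∈ V, T n x (H₁ + H₂) = T n x H₁ + T n x H₂)
    (hsmul : ∀ n x (c : ℝ) H, T n x (c • H) = c * T n x H)
    (hℋ : ∀ H ∈ ℋ, UniformCauchySeqOn (fun n x => T n x H) p s) :
    ∀ H ∈ Submodule.span ℝ ℋ, UniformCauchySeqOn (fun n x => T n x H) p s := by
  intro H hH
  induction hH using Submodule.span_induction with
  | mem H hH => exact hℋ H hH
  | zero =>
    refine (tendsto_const_nhds (x := (0 : ℝ))).tendstoUniformlyOn_const s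
      |>.uniformCauchySeqOn.congr fun n x _ => ?_
    simpa using (hsmul n x 0 0).symm
  | add H₁ H₂ h₁ h₂ ih₁ ih₂ =>
    exact (ih₁.add ih₂).congr fun n x hx =>
      (hadd n x hx H₁ (hℋV h₁) H₂ (hℋV h₂)).symm
  | smul c H _ ih => simpa only [hsmul] using ih.const_mul c

section Cb20

variable {d : ℕ} {U : Set (EuclideanSpace ℝ (Fin d))}

theorem MemCb20.add {H₁ H₂ : EuclideanSpace ℝ (Fin d) → ℝ}
    (h₁ : MemCb20 U H₁) (h₂ : MemCb20 U H₂) : MemCb20 U (H₁ + H₂) := by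
  obtain ⟨c₁, ⟨M₁, hM₁⟩, a₁, b₁, o₁⟩ := h₁
  obtain ⟨c₂, ⟨M₂, hM₂⟩, a₂, b₂, o₂⟩ := h₂
  refine ⟨c₁.add c₂, ⟨M₁ + M₂, fun u hu => ?_⟩, a₁ + a₂, b₁ + b₂, ?_⟩
  · exact (abs_add_le _ _).trans (add_le_add (hM₁ u hu) (hM₂ u hu))
  · refine (o₁.add o₂).congr_left fun u => ?_
    simp only [Pi.add_apply, add_mul, Finset.sum_add_distrib]
    ring

theorem MemCb20.const_smul {H : EuclideanSpace ℝ (Fin d) → ℝ} (h : MemCb20 U H) (c : ℝ) :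
    MemCb20 U (c • H) := by
  obtain ⟨hc, ⟨M, hM⟩, a, b, o⟩ := h
  refine ⟨hc.const_smul c, ⟨|c| * M, fun u hu => ?_⟩, c • a, c • b, ?_⟩
  · rw [Pi.smul_apply, smul_eq_mul, abs_mul]
    exact mul_le_mul_of_nonneg_left (hM u hu) (abs_nonneg c)
  · refine (o.const_mul_left c).congr_left fun u => ?_
    simp only [Pi.smul_apply, smul_eq_mul, mul_sub, Finset.mul_sum, mul_assoc]

theorem memCb20_zero : MemCb20 U (0 : EuclideanSpace ℝ (Fin d) → ℝ) :=
  ⟨continuousOn_const, ⟨0, fun u _ => by simp⟩, 0, 0, by simp⟩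

variable (U) in
def cb20 : Submodule ℝ (EuclideanSpace ℝ (Fin d) → ℝ) where
  carrier := {H | MemCb20 U H}
  add_mem' := MemCb20.add
  zero_mem' := memCb20_zero
  smul_mem' c _ hH := hH.const_smul c

end Cb20

section IntegralComp

variable {Ω E : Type*} [MeasurableSpace Ω] {P : Measure Ω} {U : Set E} {H : E → ℝ} {f : Ω → E}

theorem ContinuousOn.measurable_comp_of_forall_mem [TopologicalSpace E] [MeasurableSpace E]
    [OpensMeasurableSpace E] (hH : ContinuousOn H U) (hf : Measurable f) (hfU : ∀ ω, f ω ∈ U) :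
    Measurable fun ω => H (f ω) :=
  hH.domRestrict.measurable.comp (hf.subtype_mk (h := hfU))

theorem ContinuousOn.integrable_comp_of_forall_mem [TopologicalSpace E] [MeasurableSpace E]
    [OpensMeasurableSpace E] [IsFiniteMeasure P] (hH : ContinuousOn H U)
    (hHb : ∃ M, ∀ u ∈ U, |H u| ≤ M) (hf : Measurable f) (hfU : ∀ ω, f ω ∈ U) :
    Integrable (fun ω => H (f ω)) P := by
  obtain ⟨M, hM⟩ := hHb
  exact (integrable_const M).mono' (hH.measurable_comp_of_forall_mem hf hfU).aestronglyMeasurable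
    (ae_of_all _ fun ω => hM _ (hfU ω))

theorem abs_integral_comp_le_of_abs_le [NormedAddCommGroup E] [MeasurableSpace E]
    [OpensMeasurableSpace E] [IsFiniteMeasure P] {R D : E → ℝ} {δ M b : ℝ}
    (hf : Measurable f) (hfU : ∀ ω, f ω ∈ U) (hD : Integrable (fun ω => D (f ω)) P)
    (hR : ∀ u ∈ U, |R u| ≤ δ * D u + {u | b < ‖u‖}.indicator (fun _ => M) u) :
    |∫ ω, R (f ω) ∂P| ≤ δ * ∫ ω, D (f ω) ∂P + M * (P {ω | b < ‖f ω‖}).toReal := by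
  have hS : MeasurableSet {ω | b < ‖f ω‖} := measurableSet_lt measurable_const hf.norm
  calc |∫ ω, R (f ω) ∂P| ≤ ∫ ω, |R (f ω)| ∂P := abs_integral_le_integral_abs
    _ ≤ ∫ ω, δ * D (f ω) + {ω | b < ‖f ω‖}.indicator (fun _ => M) ω ∂P :=
        integral_mono_of_nonneg (ae_of_all _ fun _ => abs_nonneg _)
          ((hD.const_mul δ).add ((integrable_const M).indicator hS))
          (ae_of_all _ fun ω => hR _ (hfU ω))
    _ = δ * ∫ ω, D (f ω) ∂P + M * (P {ω | b < ‖f ω‖}).toReal := by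
        rw [integral_add (hD.const_mul δ) ((integrable_const M).indicator hS),
          integral_const_mul, integral_indicator_const _ hS, smul_eq_mul, measureReal_def,
          mul_comm M]

end IntegralComp

section SecondOrder

variable {d : ℕ} {U : Set (EuclideanSpace ℝ (Fin d))} {ε φ ψ : EuclideanSpace ℝ (Fin d) → ℝ}
  {i j : Fin d}

theorem isBigO_coord_norm (l : Filter (EuclideanSpace ℝ (Fin d))) (i : Fin d) :
    (fun u : EuclideanSpace ℝ (Fin d) => u i) =O[l] fun u => ‖u‖ :=
  isBigO_of_le l fun u => by simpa using PiLp.norm_apply_le u i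

theorem tendsto_coord_nhdsWithin_zero (U : Set (EuclideanSpace ℝ (Fin d))) (i : Fin d) :
    Tendsto (fun u : EuclideanSpace ℝ (Fin d) => u i) (𝓝[U] 0) (𝓝 0) :=
  ((PiLp.continuous_apply 2 _ i).tendsto' 0 0 rfl).mono_left nhdsWithin_le_nhds

theorem tendsto_nhdsWithin_zero_of_isLittleO_norm
    (hε : ε =o[𝓝[U] 0] fun u => ‖u‖) : Tendsto ε (𝓝[U] 0) (𝓝 0) :=
  hε.trans_tendsto (tendsto_norm_zero.mono_left nhdsWithin_le_nhds)

theorem isLittleO_sub_coord (hε : ε =o[𝓝[U] 0] fun u => ‖u‖)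
    (hφ : ∀ u ∈ U, φ u = u i * (1 + ε u)) :
    (fun u => φ u - u i) =o[𝓝[U] 0] fun u => ‖u‖ ^ 2 := by
  refine ((isBigO_coord_norm _ i).mul_isLittleO hε).congr' ?_ (.of_forall fun u => (sq _).symm)
  filter_upwards [self_mem_nhdsWithin] with u hu
  rw [hφ u hu]
  ring

theorem tendsto_of_eq_coord_mul (hε : ε =o[𝓝[U] 0] fun u => ‖u‖)
    (hφ : ∀ u ∈ U, φ u = u i * (1 + ε u)) : Tendsto φ (𝓝[U] 0) (𝓝 0) := by
  have := (tendsto_coord_nhdsWithin_zero U i).mul ((tendsto_nhdsWithin_zero_of_isLittleO_norm hε).const_add 1)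
  rw [zero_mul] at this
  exact this.congr' (eventually_nhdsWithin_of_forall fun u hu => (hφ u hu).symm)

theorem isLittleO_mul_sub_coord_mul (hεφ : ε =o[𝓝[U] 0] fun u => ‖u‖)
    (hφ : ∀ u ∈ U, φ u = u i * (1 + ε u)) {η : EuclideanSpace ℝ (Fin d) → ℝ}
    (hηψ : η =o[𝓝[U] 0] fun u => ‖u‖) (hψ : ∀ u ∈ U, ψ u = u j * (1 + η u)) :
    (fun u => φ u * ψ u - u i * u j) =o[𝓝[U] 0] fun u => ‖u‖ ^ 2 := by
  have hψ1 := (tendsto_of_eq_coord_mul hηψ hψ).isBigO_one ℝ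
  have h₁ := (isLittleO_sub_coord hεφ hφ).mul_isBigO hψ1
  have h₂ := ((tendsto_coord_nhdsWithin_zero U i).isBigO_one ℝ).mul_isLittleO (isLittleO_sub_coord hηψ hψ)
  simp only [mul_one, one_mul] at h₁ h₂
  exact (h₁.add h₂).congr_left fun u => by ring

theorem coord_sq_le_four_mul_sq (hε : ε =o[𝓝[U] 0] fun u => ‖u‖)
    (hφ : ∀ u ∈ U, φ u = u i * (1 + ε u)) : ∀ᶠ u in 𝓝[U] 0, u i ^ 2 ≤ 4 * φ u ^ 2 := by
  filter_upwards [(tendsto_nhdsWithin_zero_of_isLittleO_norm hε).eventually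
    (Metric.ball_mem_nhds 0 (by norm_num : (0 : ℝ) < 1 / 2)), self_mem_nhdsWithin] with u hεu hu
  rw [Real.dist_eq, sub_zero] at hεu
  have h1 : 1 ≤ 4 * (1 + ε u) ^ 2 := by nlinarith [abs_lt.1 hεu]
  rw [hφ u hu, mul_pow]
  nlinarith [mul_le_mul_of_nonneg_left h1 (sq_nonneg (u i))]

end SecondOrder

theorem ContinuousOn.div_of_isLittleO {X : Type*} [TopologicalSpace X] {U : Set X} {x₀ : X}
    {K D : X → ℝ} (hx₀ : x₀ ∈ U) (hK : ContinuousOn K U) (hD : ContinuousOn D U)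
    (hD0 : ∀ u ∈ U, u ≠ x₀ → D u ≠ 0) (hKD : K =o[𝓝[U] x₀] D) :
    ContinuousOn (fun u => K u / D u) U := by
  intro u hu
  by_cases hux₀ : u = x₀
  · subst hux₀
    have hlim := hKD.tendsto_div_nhds_zero
    have hval : K u / D u = 0 :=
      tendsto_nhds_unique (tendsto_pure_nhds _ u) (hlim.mono_left (pure_le_nhdsWithin hx₀))
    rw [ContinuousWithinAt, hval]
    exact hlim
  · exact (hK u hu).div (hD u hu) (hD0 u hu hux₀)

section Decomposition

variable {d : ℕ} {U : Set (EuclideanSpace ℝ (Fin d))} {h ε : Fin d → EuclideanSpace ℝ (Fin d) → ℝ}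

theorem norm_sq_isBigO_sum_sq (hε : ∀ i, ε i =o[𝓝[U] 0] fun u => ‖u‖)
    (hh : ∀ i, ∀ u ∈ U, h i u = u i * (1 + ε i u)) :
    (fun u => ‖u‖ ^ 2) =O[𝓝[U] 0] fun u => ∑ i, h i u ^ 2 := by
  refine IsBigO.of_bound 4 ?_
  filter_upwards [eventually_all.2 fun i => coord_sq_le_four_mul_sq (hε i) (hh i)] with u hu
  rw [Real.norm_of_nonneg (by positivity), Real.norm_of_nonneg (by positivity),
    EuclideanSpace.real_norm_sq_eq, Finset.mul_sum]
  exact Finset.sum_le_sum fun i _ => hu i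

theorem isLittleO_sub_sum_mul (hε : ∀ i, ε i =o[𝓝[U] 0] fun u => ‖u‖)
    (hh : ∀ i, ∀ u ∈ U, h i u = u i * (1 + ε i u)) {H : EuclideanSpace ℝ (Fin d) → ℝ}
    {a : Fin d → ℝ} {b : Fin d → Fin d → ℝ}
    (hab : (fun u : EuclideanSpace ℝ (Fin d) =>
      H u - (∑ i, a i * u i) - ∑ i, ∑ j, b i j * u i * u j) =o[𝓝[U] 0] fun u => ‖u‖ ^ 2) :
    (fun u => H u - (∑ i, a i * h i u + ∑ i, ∑ j, b i j * (h i u * h j u)))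
      =o[𝓝[U] 0] fun u => ‖u‖ ^ 2 := by
  have h₁ := IsLittleO.fun_sum (s := Finset.univ) fun i _ =>
    (isLittleO_sub_coord (hε i) (hh i)).const_mul_left (a i)
  have h₂ := IsLittleO.fun_sum (s := Finset.univ) fun i _ =>
    IsLittleO.fun_sum (s := Finset.univ) fun j _ =>
    (isLittleO_mul_sub_coord_mul (hε i) (hh i) (hε j) (hh j)).const_mul_left (b i j)
  refine ((hab.sub h₁).sub h₂).congr_left fun u => ?_
  simp only [mul_sub, Finset.sum_sub_distrib, mul_assoc]
  ring

theorem sum_sq_ne_zero (hhne : ∀ i, ∀ u ∈ U, u ≠ 0 → h i u ≠ 0) {u : EuclideanSpace ℝ (Fin d)}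
    (hu : u ∈ U) (hu0 : u ≠ 0) : ∑ i, h i u ^ 2 ≠ 0 := by
  obtain ⟨i, -⟩ : ∃ i, u i ≠ 0 := by
    by_contra! h0
    exact hu0 (by ext i; simp [h0 i])
  have := hhne i u hu hu0
  exact (Finset.sum_pos' (fun j _ => sq_nonneg _) ⟨i, Finset.mem_univ _, by positivity⟩).ne'

theorem sum_sq_mem {V : Submodule ℝ (EuclideanSpace ℝ (Fin d) → ℝ)}
    (hhhV : ∀ i j, (fun u => h i u * h j u) ∈ V) : (fun u => ∑ i, h i u ^ 2) ∈ V := by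
  simpa [sq, Finset.sum_fn] using V.sum_mem (t := Finset.univ) fun i _ => hhhV i i

theorem exists_sub_eq_sum_sq_mul (hU0 : (0 : EuclideanSpace ℝ (Fin d)) ∈ U)
    (hε : ∀ i, ε i =o[𝓝[U] 0] fun u => ‖u‖) (hh : ∀ i, ∀ u ∈ U, h i u = u i * (1 + ε i u))
    (hhne : ∀ i, ∀ u ∈ U, u ≠ 0 → h i u ≠ 0) {V : Submodule ℝ (EuclideanSpace ℝ (Fin d) → ℝ)}
    (hV : V ≤ cb20 U) (hhV : ∀ i, h i ∈ V) (hhhV : ∀ i j, (fun u => h i u * h j u) ∈ V)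
    {H : EuclideanSpace ℝ (Fin d) → ℝ} (hH : MemCb20 U H) :
    ∃ L ∈ V, ∃ g : EuclideanSpace ℝ (Fin d) → ℝ, ContinuousOn g U ∧ g 0 = 0 ∧
      ∀ u ∈ U, H u - L u = (∑ i, h i u ^ 2) * g u := by
  obtain ⟨hHc, -, a, b, hab⟩ := hH
  set L := ∑ i, a i • h i + ∑ i, ∑ j, b i j • fun u => h i u * h j u
  have hL : L ∈ V := V.add_mem (V.sum_mem fun i _ => V.smul_mem _ (hhV i))
    (V.sum_mem fun i _ => V.sum_mem fun j _ => V.smul_mem _ (hhhV i j))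
  have hKo : (fun u => H u - L u) =o[𝓝[U] 0] fun u => ‖u‖ ^ 2 := by
    simpa [L, Finset.sum_apply] using isLittleO_sub_sum_mul hε hh hab
  have hK0 : H 0 - L 0 = 0 := hKo.isBigO.eq_zero_imp.self_of_nhdsWithin hU0 (by simp)
  have hDc : ContinuousOn (fun u => ∑ i, h i u ^ 2) U := (hV (sum_sq_mem hhhV)).1
  refine ⟨L, hL, fun u => (H u - L u) / ∑ i, h i u ^ 2,
    ContinuousOn.div_of_isLittleO hU0 (hHc.sub (hV hL).1) hDc (fun u hu => sum_sq_ne_zero hhne hu)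
      (hKo.trans_isBigO (norm_sq_isBigO_sum_sq hε hh)), by simp [hK0], fun u hu => ?_⟩
  by_cases hu0 : u = 0
  · subst hu0
    simp [hK0]
  · rw [mul_div_cancel₀ _ (sum_sq_ne_zero hhne hu hu0)]

end Decomposition

theorem abs_sub_mul_le_of_cutoff {K D g g' χ δ M : ℝ} (hKg : K = D * g) (hD : 0 ≤ D)
    (hχ : χ ∈ Icc (0 : ℝ) 1) (hg' : |g * χ - g'| ≤ δ) (hK : |K| ≤ M) :
    |K - D * g'| ≤ δ * D + M * (1 - χ) := by
  have hsplit : K - D * g' = D * (g * χ - g') + K * (1 - χ) := by rw [hKg]; ring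
  have h₁ : |D * (g * χ - g')| ≤ δ * D := by
    rw [abs_mul, abs_of_nonneg hD, mul_comm]
    exact mul_le_mul_of_nonneg_right hg' hD
  have h₂ : |K * (1 - χ)| ≤ M * (1 - χ) := by
    rw [abs_mul, abs_of_nonneg (sub_nonneg.2 hχ.2)]
    exact mul_le_mul_of_nonneg_right hK (sub_nonneg.2 hχ.2)
  rw [hsplit]
  exact (abs_add_le _ _).trans (add_le_add h₁ h₂)

section Characteristics

variable {d : ℕ} {Ω : Type*} [MeasurableSpace Ω] {P : Measure Ω}
  {𝒳 U : Set (EuclideanSpace ℝ (Fin d))} {v : ℕ → ℝ}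
  {F : ℕ → EuclideanSpace ℝ (Fin d) → Ω → EuclideanSpace ℝ (Fin d)}
  {GN : ℕ → EuclideanSpace ℝ (Fin d) → (EuclideanSpace ℝ (Fin d) → ℝ) → ℝ}

theorem GN_add [IsFiniteMeasure P] (hFmeas : ∀ N, ∀ x ∈ 𝒳, Measurable (F N x))
    (hFU : ∀ N, ∀ x ∈ 𝒳, ∀ ω, F N x ω - x ∈ U)
    (hGN : ∀ N x H, GN N x H = v N * ∫ ω, H (F N x ω - x) ∂P) :
    ∀ N, ∀ x ∈ 𝒳, ∀ H₁ ∈ cb20 U, ∀ H₂ ∈ cb20 U, GN N x (H₁ + H₂) = GN N x H₁ + GN N x H₂ := by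
  intro N x hx H₁ h₁ H₂ h₂
  have hf := (hFmeas N x hx).sub_const x
  simp only [hGN, ← mul_add, Pi.add_apply]
  rw [integral_add (h₁.1.integrable_comp_of_forall_mem h₁.2.1 hf (hFU N x hx))
    (h₂.1.integrable_comp_of_forall_mem h₂.2.1 hf (hFU N x hx))]

theorem GN_smul (hGN : ∀ N x H, GN N x H = v N * ∫ ω, H (F N x ω - x) ∂P) (N x) (c : ℝ) (H) :
    GN N x (c • H) = c * GN N x H := by
  simp only [hGN, Pi.smul_apply, smul_eq_mul, integral_const_mul]
  ring

theorem exists_forall_abs_GN_le [IsFiniteMeasure P] (hFU : ∀ N, ∀ x ∈ 𝒳, ∀ ω, F N x ω - x ∈ U)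
    (hGN : ∀ N x H, GN N x H = v N * ∫ ω, H (F N x ω - x) ∂P) {H : EuclideanSpace ℝ (Fin d) → ℝ}
    (hH : ∃ M, ∀ u ∈ U, |H u| ≤ M) (N : ℕ) : ∃ M, ∀ x ∈ 𝒳, |GN N x H| ≤ M := by
  obtain ⟨M, hM⟩ := hH
  refine ⟨|v N| * (M * P.real univ), fun x hx => ?_⟩
  have hint := norm_integral_le_of_norm_le_const (μ := P) (f := fun ω => H (F N x ω - x))
    (ae_of_all _ fun ω => hM _ (hFU N x hx ω))
  rw [hGN, abs_mul]
  exact mul_le_mul_of_nonneg_left hint (abs_nonneg _)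

theorem abs_GN_sub_le [IsFiniteMeasure P] (hFmeas : ∀ N, ∀ x ∈ 𝒳, Measurable (F N x))
    (hFU : ∀ N, ∀ x ∈ 𝒳, ∀ ω, F N x ω - x ∈ U)
    (hGN : ∀ N x H, GN N x H = v N * ∫ ω, H (F N x ω - x) ∂P) {N : ℕ} (hvN : 0 ≤ v N)
    {x : EuclideanSpace ℝ (Fin d)} (hx : x ∈ 𝒳) {H₁ H₂ D : EuclideanSpace ℝ (Fin d) → ℝ}
    (h₁ : MemCb20 U H₁) (h₂ : MemCb20 U H₂) (hD : MemCb20 U D) {δ M b : ℝ}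
    (h₁₂ : ∀ u ∈ U, |H₁ u - H₂ u| ≤ δ * D u + {u | b < ‖u‖}.indicator (fun _ => M) u) :
    |GN N x H₁ - GN N x H₂| ≤
      δ * GN N x D + M * (v N * (P {ω | b < ‖F N x ω - x‖}).toReal) := by
  have hf := (hFmeas N x hx).sub_const x
  have hfU := hFU N x hx
  rw [hGN, hGN, hGN, ← mul_sub, ← integral_sub (h₁.1.integrable_comp_of_forall_mem h₁.2.1 hf hfU)
    (h₂.1.integrable_comp_of_forall_mem h₂.2.1 hf hfU), abs_mul, abs_of_nonneg hvN]
  calc v N * |∫ ω, H₁ (F N x ω - x) - H₂ (F N x ω - x) ∂P|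
      ≤ v N * (δ * ∫ ω, D (F N x ω - x) ∂P + M * (P {ω | b < ‖F N x ω - x‖}).toReal) :=
        mul_le_mul_of_nonneg_left (abs_integral_comp_le_of_abs_le (R := fun u => H₁ u - H₂ u) hf
          hfU (hD.1.integrable_comp_of_forall_mem hD.2.1 hf hfU) h₁₂) hvN
    _ = _ := by ring

theorem uniformCauchySeqOn_GN_of_sub_eq_mul [IsFiniteMeasure P] (hv : ∀ N, 0 ≤ v N)
    (hFmeas : ∀ N, ∀ x ∈ 𝒳, Measurable (F N x)) (hFU : ∀ N, ∀ x ∈ 𝒳, ∀ ω, F N x ω - x ∈ U)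
    (hGN : ∀ N x H, GN N x H = v N * ∫ ω, H (F N x ω - x) ∂P)
    (hH0 : ∀ ε > (0 : ℝ), ∃ b₀ : ℝ, ∀ b ≥ b₀, ∀ N ≥ 1, ∀ x ∈ 𝒳,
      v N * (P {ω | b < ‖F N x ω - x‖}).toReal ≤ ε)
    {V : Submodule ℝ (EuclideanSpace ℝ (Fin d) → ℝ)} (hV : V ≤ cb20 U)
    (hVUC : ∀ H ∈ V, UniformCauchySeqOn (fun N x => GN N x H) atTop 𝒳)
    {D : EuclideanSpace ℝ (Fin d) → ℝ} (hDV : D ∈ V) (hD0 : ∀ u ∈ U, 0 ≤ D u)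
    (happrox : ∀ g : EuclideanSpace ℝ (Fin d) → ℝ, ContinuousOn g U →
      (∃ K : Set (EuclideanSpace ℝ (Fin d)), IsCompact K ∧ ∀ u ∈ U, u ∉ K → g u = 0) →
      g 0 = 0 → ∃ gs : ℕ → EuclideanSpace ℝ (Fin d) → ℝ,
        (∀ ε > (0 : ℝ), ∃ n₀, ∀ n ≥ n₀, ∀ u ∈ U, |g u - gs n u| ≤ ε) ∧
        ∀ n, (fun u => D u * gs n u) ∈ V)
    {H L g : EuclideanSpace ℝ (Fin d) → ℝ} (hH : MemCb20 U H) (hL : L ∈ V)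
    (hg : ContinuousOn g U) (hg0 : g 0 = 0) (hHLg : ∀ u ∈ U, H u - L u = D u * g u) :
    UniformCauchySeqOn (fun N x => GN N x H) atTop 𝒳 := by
  apply uniformCauchySeqOn_of_forall_approx
  intro ε hε
  have hsmall : ∀ a : ℝ, 0 ≤ a → ε / (2 * (a + 1)) * a ≤ ε / 2 := fun a ha => by
    rw [div_mul_eq_mul_div, div_le_div_iff₀ (by positivity) (by positivity)]
    nlinarith
  obtain ⟨C, hC⟩ :=
    (hVUC D hDV).exists_forall_abs_le (exists_forall_abs_GN_le hFU hGN (hV hDV).2.1)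
  obtain ⟨M, hM⟩ := ((cb20 U).sub_mem hH (hV hL)).2.1
  obtain ⟨b, hb⟩ := hH0 (ε / (2 * (|M| + 1))) (by positivity)
  obtain ⟨χ, hχ1, -, hχc, hχ01⟩ := exists_continuous_one_zero_of_isCompact
    (isCompact_closedBall (0 : EuclideanSpace ℝ (Fin d)) b) isClosed_empty (disjoint_empty _)
  obtain ⟨gs, hgs, hgsV⟩ := happrox (fun u => g u * χ u) (hg.mul χ.continuous.continuousOn)
    ⟨tsupport χ, hχc, fun u _ hu => by simp [image_eq_zero_of_notMem_tsupport hu]⟩ (by simp [hg0])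
  obtain ⟨n, hn⟩ := hgs (ε / (2 * (|C| + 1))) (by positivity)
  have hpt : ∀ u ∈ U, |H u - (L + fun u => D u * gs n u) u| ≤
      ε / (2 * (|C| + 1)) * D u + {u | b < ‖u‖}.indicator (fun _ => |M|) u := by
    intro u hu
    rw [Pi.add_apply, ← sub_sub]
    refine (abs_sub_mul_le_of_cutoff (hHLg u hu) (hD0 u hu) (hχ01 u) (hn n le_rfl u hu)
      ((hM u hu).trans (le_abs_self M))).trans (add_le_add_right ?_ _)
    by_cases hbu : b < ‖u‖
    · rw [indicator_of_mem (show u ∈ {u | b < ‖u‖} from hbu)]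
      exact mul_le_of_le_one_right (abs_nonneg M) (by linarith [(hχ01 u).1])
    · rw [indicator_of_notMem (show u ∉ {u | b < ‖u‖} from hbu),
        hχ1 (mem_closedBall_zero_iff.2 (not_lt.1 hbu))]
      simp
  have hLn : (L + fun u => D u * gs n u) ∈ V := V.add_mem hL (hgsV n)
  refine ⟨_, hVUC _ hLn, eventually_atTop.2 ⟨1, fun N hN x hx => ?_⟩⟩
  rw [Real.dist_eq]
  calc |GN N x H - GN N x (L + fun u => D u * gs n u)|
      ≤ ε / (2 * (|C| + 1)) * GN N x D + |M| * (v N * (P {ω | b < ‖F N x ω - x‖}).toReal) :=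
        abs_GN_sub_le hFmeas hFU hGN (hv N) hx hH (hV hLn) (hV hDV) hpt
    _ ≤ ε / (2 * (|C| + 1)) * |C| + |M| * (ε / (2 * (|M| + 1))) := by
        gcongr
        · exact (le_abs_self _).trans ((hC N x hx).trans (le_abs_self C))
        · exact hb b le_rfl N hN x hx
    _ ≤ ε := by linarith [hsmall _ (abs_nonneg C), hsmall _ (abs_nonneg M)]

end Characteristics

theorem stmt1_general {d : ℕ}
    {Ω : Type*} [MeasurableSpace Ω] (P : Measure Ω) [IsProbabilityMeasure P]
    (𝒳 U : Set (EuclideanSpace ℝ (Fin d)))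
    (hU0 : U ∈ 𝓝 (0 : EuclideanSpace ℝ (Fin d)))
    (v : ℕ → ℝ) (hv : ∀ N, 0 < v N)
    (F : ℕ → EuclideanSpace ℝ (Fin d) → Ω → EuclideanSpace ℝ (Fin d))
    (hFmeas : ∀ N, ∀ x ∈ 𝒳, Measurable (F N x))
    (hFU : ∀ N, ∀ x ∈ 𝒳, ∀ ω, F N x ω - x ∈ U)
    (GN : ℕ → EuclideanSpace ℝ (Fin d) → (EuclideanSpace ℝ (Fin d) → ℝ) → ℝ)
    (hGN : ∀ N x H, GN N x H = v N * ∫ ω, H (F N x ω - x) ∂P)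
    -- Hypothesis (H0)
    (hH0 : ∀ ε > (0 : ℝ), ∃ b₀ : ℝ, ∀ b ≥ b₀, ∀ N ≥ 1, ∀ x ∈ 𝒳,
      v N * (P {ω | b < ‖F N x ω - x‖}).toReal ≤ ε)
    -- specific function h
    (h : Fin d → EuclideanSpace ℝ (Fin d) → ℝ)
    (hhid : ∀ i, ∃ ε : EuclideanSpace ℝ (Fin d) → ℝ,
      (ε =o[𝓝[U] 0] fun u : EuclideanSpace ℝ (Fin d) => ‖u‖) ∧
        ∀ u ∈ U, h i u = u i * (1 + ε u))
    (hhne : ∀ i, ∀ u ∈ U, u ≠ 0 → h i u ≠ 0)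
    -- Hypothesis (H1)
    (ℋ : Set (EuclideanSpace ℝ (Fin d) → ℝ))
    (hℋsub : ∀ H ∈ ℋ, MemCb20 U H)
    (hH11 : (∀ i, h i ∈ Submodule.span ℝ ℋ) ∧
      ∀ i j, (fun u => h i u * h j u) ∈ Submodule.span ℝ ℋ)
    (hH12 : ∀ g : EuclideanSpace ℝ (Fin d) → ℝ, ContinuousOn g U →
      (∃ K : Set (EuclideanSpace ℝ (Fin d)), IsCompact K ∧ ∀ u ∈ U, u ∉ K → g u = 0) →
      g 0 = 0 →
      ∃ gs : ℕ → EuclideanSpace ℝ (Fin d) → ℝ,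
        (∀ n, MemCb20 U (gs n)) ∧
        (∀ ε > (0 : ℝ), ∃ n₀, ∀ n ≥ n₀, ∀ u ∈ U, |g u - gs n u| ≤ ε) ∧
        ∀ n, (fun u => (∑ i, (h i u) ^ 2) * gs n u) ∈ Submodule.span ℝ ℋ)
    (G0 : EuclideanSpace ℝ (Fin d) → (EuclideanSpace ℝ (Fin d) → ℝ) → ℝ)
    (hH13i : ∀ H ∈ ℋ, ∀ ε > (0 : ℝ), ∃ N₀, ∀ N ≥ N₀, ∀ x ∈ 𝒳, |GN N x H - G0 x H| ≤ ε) :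
    ∃ G : EuclideanSpace ℝ (Fin d) → (EuclideanSpace ℝ (Fin d) → ℝ) → ℝ,
      (∀ x ∈ 𝒳, ∀ H ∈ ℋ, G x H = G0 x H) ∧
      (∀ x ∈ 𝒳, ∀ H₁ H₂ : EuclideanSpace ℝ (Fin d) → ℝ,
        MemCb20 U H₁ → MemCb20 U H₂ → G x (H₁ + H₂) = G x H₁ + G x H₂) ∧
      (∀ x ∈ 𝒳, ∀ (c : ℝ) (H : EuclideanSpace ℝ (Fin d) → ℝ),
        MemCb20 U H → G x (c • H) = c * G x H) ∧
      ∀ H : EuclideanSpace ℝ (Fin d) → ℝ, MemCb20 U H →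
        (∀ ε > (0 : ℝ), ∃ N₀, ∀ N ≥ N₀, ∀ x ∈ 𝒳, |GN N x H - G x H| ≤ ε) ∧
        (∃ M : ℝ, ∀ N ≥ 1, ∀ x ∈ 𝒳, |GN N x H| ≤ M) ∧
        (∀ M : ℝ, (∀ N ≥ 1, ∀ x ∈ 𝒳, |GN N x H| ≤ M) → ∀ x ∈ 𝒳, |G x H| ≤ M) := by
  choose ε hε hh using hhid
  have hspan : Submodule.span ℝ ℋ ≤ cb20 U := Submodule.span_le.2 hℋsub
  have hadd := GN_add hFmeas hFU hGN
  have hUCspan := uniformCauchySeqOn_of_mem_span hspan hadd (GN_smul hGN) fun H hH =>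
    (tendstoUniformlyOn_atTop_iff_abs_sub_le.2 (hH13i H hH)).uniformCauchySeqOn
  have hUC : ∀ H, MemCb20 U H → UniformCauchySeqOn (fun N x => GN N x H) atTop 𝒳 := by
    intro H hH
    obtain ⟨L, hL, g, hg, hg0, hHL⟩ :=
      exists_sub_eq_sum_sq_mul (mem_of_mem_nhds hU0) hε hh hhne hspan hH11.1 hH11.2 hH
    exact uniformCauchySeqOn_GN_of_sub_eq_mul (fun N => (hv N).le) hFmeas hFU hGN hH0 hspan
      hUCspan (sum_sq_mem hH11.2) (fun u _ => by positivity)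
      (fun g hg hsupp hg0 => (hH12 g hg hsupp hg0).imp fun _ h => h.2) hH hL hg hg0 hHL
  have hlim := fun H (hH : MemCb20 U H) => (hUC H hH).tendstoUniformlyOn_limUnder
  refine ⟨fun x H => limUnder atTop fun N => GN N x H, fun x hx H hH => ?_,
    fun x hx H₁ H₂ h₁ h₂ => ?_, fun x hx c H hH => ?_, fun H hH => ⟨?_, ?_, ?_⟩⟩
  · exact ((tendstoUniformlyOn_atTop_iff_abs_sub_le.2 (hH13i H hH)).tendsto_at hx).limUnder_eq
  · exact (((hlim H₁ h₁).tendsto_at hx).add ((hlim H₂ h₂).tendsto_at hx)).congr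
      (fun N => (hadd N x hx H₁ h₁ H₂ h₂).symm) |>.limUnder_eq
  · exact (((hlim H hH).tendsto_at hx).const_mul c).congr
      (fun N => (GN_smul hGN N x c H).symm) |>.limUnder_eq
  · exact tendstoUniformlyOn_atTop_iff_abs_sub_le.1 (hlim H hH)
  · obtain ⟨M, hM⟩ := (hUC H hH).exists_forall_abs_le (exists_forall_abs_GN_le hFU hGN hH.2.1)
    exact ⟨M, fun N _ => hM N⟩
  · exact fun M hM x hx => le_of_tendsto ((hlim H hH).tendsto_at hx).abs
      (eventually_atTop.2 ⟨1, fun N hN => hM N hN x hx⟩)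

/-- Lemma 2.5: extension of the limiting characteristics to `C²_{b,0}(U)`. -/
theorem stmt1 {d : ℕ} (hd : 1 ≤ d)
    {Ω : Type*} [MeasurableSpace Ω] (P : Measure Ω) [IsProbabilityMeasure P]
    (𝒳 U : Set (EuclideanSpace ℝ (Fin d))) (h𝒳 : MeasurableSet 𝒳)
    (hUc : IsClosed U) (hU0 : U ∈ 𝓝 (0 : EuclideanSpace ℝ (Fin d)))
    (v : ℕ → ℝ) (hv : ∀ N, 0 < v N)
    (F : ℕ → EuclideanSpace ℝ (Fin d) → Ω → EuclideanSpace ℝ (Fin d))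
    (hFmeas : ∀ N, ∀ x ∈ 𝒳, Measurable (F N x))
    (hFU : ∀ N, ∀ x ∈ 𝒳, ∀ ω, F N x ω - x ∈ U)
    (GN : ℕ → EuclideanSpace ℝ (Fin d) → (EuclideanSpace ℝ (Fin d) → ℝ) → ℝ)
    (hGN : ∀ N x H, GN N x H = v N * ∫ ω, H (F N x ω - x) ∂P)
    -- Hypothesis (H0)
    (hH0 : ∀ ε > (0 : ℝ), ∃ b₀ : ℝ, ∀ b ≥ b₀, ∀ N ≥ 1, ∀ x ∈ 𝒳,
      v N * (P {ω | b < ‖F N x ω - x‖}).toReal ≤ ε)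
    -- specific function h
    (h : Fin d → EuclideanSpace ℝ (Fin d) → ℝ)
    (hhmem : ∀ i, MemCb20 U (h i))
    (hhid : ∀ i, ∃ ε : EuclideanSpace ℝ (Fin d) → ℝ,
      (ε =o[𝓝[U] 0] fun u : EuclideanSpace ℝ (Fin d) => ‖u‖) ∧
        ∀ u ∈ U, h i u = u i * (1 + ε u))
    (hhne : ∀ i, ∀ u ∈ U, u ≠ 0 → h i u ≠ 0)
    -- Hypothesis (H1)
    (ℋ : Set (EuclideanSpace ℝ (Fin d) → ℝ))
    (hℋsub : ∀ H ∈ ℋ, MemCb20 U H)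
    (hH11 : (∀ i, h i ∈ Submodule.span ℝ ℋ) ∧
      ∀ i j, (fun u => h i u * h j u) ∈ Submodule.span ℝ ℋ)
    (hH12 : ∀ g : EuclideanSpace ℝ (Fin d) → ℝ, ContinuousOn g U →
      (∃ K : Set (EuclideanSpace ℝ (Fin d)), IsCompact K ∧ ∀ u ∈ U, u ∉ K → g u = 0) →
      g 0 = 0 →
      ∃ gs : ℕ → EuclideanSpace ℝ (Fin d) → ℝ,
        (∀ n, MemCb20 U (gs n)) ∧
        (∀ ε > (0 : ℝ), ∃ n₀, ∀ n ≥ n₀, ∀ u ∈ U, |g u - gs n u| ≤ ε) ∧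
        ∀ n, (fun u => (∑ i, (h i u) ^ 2) * gs n u) ∈ Submodule.span ℝ ℋ)
    (G0 : EuclideanSpace ℝ (Fin d) → (EuclideanSpace ℝ (Fin d) → ℝ) → ℝ)
    (hH13i : ∀ H ∈ ℋ, ∀ ε > (0 : ℝ), ∃ N₀, ∀ N ≥ N₀, ∀ x ∈ 𝒳, |GN N x H - G0 x H| ≤ ε)
    (hH13ii : ∀ H ∈ ℋ, ∃ M : ℝ, ∀ x ∈ 𝒳, |G0 x H| ≤ M) :
    ∃ G : EuclideanSpace ℝ (Fin d) → (EuclideanSpace ℝ (Fin d) → ℝ) → ℝ,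
      (∀ x ∈ 𝒳, ∀ H ∈ ℋ, G x H = G0 x H) ∧
      (∀ x ∈ 𝒳, ∀ H₁ H₂ : EuclideanSpace ℝ (Fin d) → ℝ,
        MemCb20 U H₁ → MemCb20 U H₂ → G x (H₁ + H₂) = G x H₁ + G x H₂) ∧
      (∀ x ∈ 𝒳, ∀ (c : ℝ) (H : EuclideanSpace ℝ (Fin d) → ℝ),
        MemCb20 U H → G x (c • H) = c * G x H) ∧
      ∀ H : EuclideanSpace ℝ (Fin d) → ℝ, MemCb20 U H →
        (∀ ε > (0 : ℝ), ∃ N₀, ∀ N ≥ N₀, ∀ x ∈ 𝒳, |GN N x H - G x H| ≤ ε) ∧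
        (∃ M : ℝ, ∀ N ≥ 1, ∀ x ∈ 𝒳, |GN N x H| ≤ M) ∧
        (∀ M : ℝ, (∀ N ≥ 1, ∀ x ∈ 𝒳, |GN N x H| ≤ M) → ∀ x ∈ 𝒳, |G x H| ≤ M) :=
  stmt1_general P 𝒳 U hU0 v hv F hFmeas hFU GN hGN hH0 h hhid hhne ℋ hℋsub hH11 hH12 G0 hH13i
end

section
/- Let 𝒳 be a nonempty set, let (v_N)_N be positive reals with v_N → ∞, and let G^N : 𝒳 → ℝ (N ≥ 1) and G : 𝒳 → ℝ be functions such that lim_{N→∞} sup_{x∈𝒳} |G^N(x) − G(x)| = 0 and α := sup_{N≥1} sup_{x∈𝒳} |G^N(x)| < ∞. Then for every T > 0 and every family of sequences (x^N_k)_{k≥0} in 𝒳, sup_{0≤t≤T} | (1/v_N) Σ_{k=1}^{⌊v_N t⌋} G^N(x^N_{k−1}) − ∫_0^t G(x^N_{⌊v_N s⌋}) ds | → 0 as N → ∞. (Applied pathwise along a Markov chain X^N with transition characteristics G^N, this gives the almost sure uniform convergence of the compensator sums φ^N_t(H) = Σ_{k≤⌊v_N t⌋} E[H(X^N_k − X^N_{k−1})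 | ℱ^N_{k−1}] to ∫_0^t G_{X^N_{⌊v_N s⌋}}(H) ds.) -/
/-!
On the cell `[k/v, (k+1)/v)` the integrand `s ↦ G (x ⌊v s⌋₊)` is the constant `G (x k)`, so
`∫₀ᵗ G (x ⌊v s⌋₊) ds` is exactly the Riemann sum `(1/v) ∑_{k < ⌊vt⌋} G (x k)` plus the share of
the last, partial cell, which is at most `sup |G| / v`. Replacing `G` by `Gᴺ` in the Riemann sum
costs at most `t · sup |Gᴺ - G|`. Both errors vanish uniformly in `t ≤ T` as `N → ∞`; `G` is
bounded as a uniform limit of the uniformly bounded `Gᴺ`.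
-/

open Filter Set MeasureTheory

section StepFunction

variable {v : ℝ} {f : ℕ → ℝ} {k : ℕ} {b : ℝ}

lemma nat_floor_mul_eq_of_mem_Ioo (hv : 0 < v) {s : ℝ}
    (hs : s ∈ Ioo ((k : ℝ) / v) ((k + 1) / v)) : ⌊v * s⌋₊ = k := by
  obtain ⟨hks, hsk⟩ := hs
  rw [div_lt_iff₀' hv] at hks
  rw [lt_div_iff₀' hv] at hsk
  exact Nat.floor_eq_on_Ico k _ ⟨hks.le, hsk⟩

lemma eqOn_comp_nat_floor_mul (hv : 0 < v) (hb : b ≤ (k + 1) / v) :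
    EqOn (fun s => f ⌊v * s⌋₊) (fun _ => f k) (Ioo ((k : ℝ) / v) b) := fun _ hs => by
  simp only [nat_floor_mul_eq_of_mem_Ioo hv ⟨hs.1, hs.2.trans_le hb⟩]

lemma intervalIntegrable_comp_nat_floor_mul (hv : 0 < v) (hkb : k / v ≤ b)
    (hb : b ≤ (k + 1) / v) :
    IntervalIntegrable (fun s => f ⌊v * s⌋₊) volume ((k : ℝ) / v) b :=
  intervalIntegrable_const.congr_uIoo <| uIoo_of_le hkb ▸ (eqOn_comp_nat_floor_mul hv hb).symm

lemma integral_comp_nat_floor_mul_of_le (hv : 0 < v) (hkb : k / v ≤ b)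
    (hb : b ≤ (k + 1) / v) :
    ∫ s in ((k : ℝ) / v)..b, f ⌊v * s⌋₊ = (b - k / v) * f k := by
  rw [intervalIntegral.integral_congr_Ioo_of_le hkb (eqOn_comp_nat_floor_mul hv hb),
    intervalIntegral.integral_const, smul_eq_mul]

lemma integral_comp_nat_floor_mul (hv : 0 < v) {t : ℝ} (ht : 0 ≤ t) :
    ∫ s in (0 : ℝ)..t, f ⌊v * s⌋₊ =
      (1 / v) * ∑ k ∈ Finset.range ⌊v * t⌋₊, f k + (t - ⌊v * t⌋₊ / v) * f ⌊v * t⌋₊ := by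
  set n := ⌊v * t⌋₊
  have hcell : ∀ k : ℕ, ((k : ℝ) + 1) / v = ((k + 1 : ℕ) : ℝ) / v := fun k => by
    rw [Nat.cast_succ]
  have hcell_le : ∀ k : ℕ, (k : ℝ) / v ≤ (k + 1) / v := fun k => by gcongr; linarith
  have hcells : ∀ k < n, IntervalIntegrable (fun s => f ⌊v * s⌋₊) volume
      ((k : ℝ) / v) (((k + 1 : ℕ) : ℝ) / v) :=
    fun k _ => intervalIntegrable_comp_nat_floor_mul hv ((hcell_le k).trans_eq (hcell k))
      (hcell k).ge
  have hn_le : (n : ℝ) / v ≤ t := by rw [div_le_iff₀' hv]; exact Nat.floor_le (by positivity)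
  have ht_lt : t < (n + 1) / v := by
    rw [lt_div_iff₀' hv]; exact Nat.lt_floor_add_one _
  have hfull := intervalIntegral.sum_integral_adjacent_intervals hcells
  have hsplit := intervalIntegral.integral_add_adjacent_intervals
    (IntervalIntegrable.trans_iterate hcells)
    (intervalIntegrable_comp_nat_floor_mul hv hn_le ht_lt.le)
  simp only [Nat.cast_zero, zero_div] at hfull hsplit
  rw [← hsplit, ← hfull, integral_comp_nat_floor_mul_of_le hv hn_le ht_lt.le, Finset.mul_sum]
  congr 1
  refine Finset.sum_congr rfl fun k _ => ?_
  rw [← hcell, integral_comp_nat_floor_mul_of_le hv (hcell_le k) le_rfl]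
  ring

lemma abs_riemannSum_sub_integral_le {g : ℕ → ℝ} {δ C t : ℝ} (hv : 0 < v) (ht : 0 ≤ t)
    (hfg : ∀ k, |f k - g k| ≤ δ) (hg : ∀ k, |g k| ≤ C) :
    |(1 / v) * ∑ k ∈ Finset.range ⌊v * t⌋₊, f k - ∫ s in (0 : ℝ)..t, g ⌊v * s⌋₊|
      ≤ t * δ + C / v := by
  rw [integral_comp_nat_floor_mul hv ht]
  set n := ⌊v * t⌋₊
  have hn_le : (n : ℝ) / v ≤ t := by rw [div_le_iff₀' hv]; exact Nat.floor_le (by positivity)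
  have hlast_le : t - n / v ≤ 1 / v := by
    rw [sub_le_iff_le_add, ← add_div, le_div_iff₀' hv, add_comm]
    exact (Nat.lt_floor_add_one _).le
  have hsum : |∑ k ∈ Finset.range n, (f k - g k)| ≤ n * δ := calc
    _ ≤ ∑ k ∈ Finset.range n, |f k - g k| := Finset.abs_sum_le_sum_abs _ _
    _ ≤ ∑ _k ∈ Finset.range n, δ := Finset.sum_le_sum fun k _ => hfg k
    _ = n * δ := by simp
  have hδ : 0 ≤ δ := (abs_nonneg _).trans (hfg 0)
  calc _ = |(1 / v) * ∑ k ∈ Finset.range n, (f k - g k) - (t - n / v) * g n| := by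
        rw [Finset.sum_sub_distrib]; congr 1; ring
    _ ≤ (1 / v) * |∑ k ∈ Finset.range n, (f k - g k)| + (t - n / v) * |g n| := by
        refine (abs_sub _ _).trans_eq ?_
        rw [abs_mul, abs_mul, abs_of_pos (by positivity), abs_of_nonneg (sub_nonneg.2 hn_le)]
    _ ≤ (1 / v) * (n * δ) + (1 / v) * C :=
        add_le_add (by gcongr) (mul_le_mul hlast_le (hg n) (abs_nonneg _) (by positivity))
    _ ≤ t * δ + C / v := by
        rw [← mul_assoc, one_div_mul_eq_div, one_div_mul_eq_div]
        gcongr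

end StepFunction

lemma abs_le_of_forall_abs_sub_le {𝒳 : Type*} {F : ℕ → 𝒳 → ℝ} {G : 𝒳 → ℝ} {α : ℝ}
    (hconv : ∀ ε > (0 : ℝ), ∃ N₀, ∀ N ≥ N₀, ∀ x : 𝒳, |F N x - G x| ≤ ε)
    (hbdd : ∀ N ≥ 1, ∀ x : 𝒳, |F N x| ≤ α) (x : 𝒳) : |G x| ≤ α := by
  refine le_of_forall_pos_le_add fun ε hε => ?_
  obtain ⟨N₀, hN₀⟩ := hconv ε hε
  have hF := hbdd (N₀ + 1) (by omega) x
  have hFG := hN₀ (N₀ + 1) (by omega) x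
  linarith [abs_sub_abs_le_abs_sub (G x) (F (N₀ + 1) x), abs_sub_comm (G x) (F (N₀ + 1) x)]

theorem stmt3_general {𝒳 : Type*}
    (v : ℕ → ℝ) (hvtop : Tendsto v atTop atTop)
    (GN : ℕ → 𝒳 → ℝ) (G : 𝒳 → ℝ)
    (hconv : ∀ ε > (0 : ℝ), ∃ N₀, ∀ N ≥ N₀, ∀ x : 𝒳, |GN N x - G x| ≤ ε)
    (hbdd : ∃ α : ℝ, ∀ N ≥ 1, ∀ x : 𝒳, |GN N x| ≤ α) :
    ∀ T > (0 : ℝ), ∀ xs : ℕ → ℕ → 𝒳, ∀ ε > (0 : ℝ), ∃ N₀, ∀ N ≥ N₀,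
      ∀ t ∈ Icc (0 : ℝ) T,
        |(1 / v N) * ∑ k ∈ Finset.range ⌊v N * t⌋₊, GN N (xs N k) -
          ∫ s in (0 : ℝ)..t, G (xs N ⌊v N * s⌋₊)| ≤ ε := by
  intro T hT xs ε hε
  obtain ⟨α, hα⟩ := hbdd
  have hG := abs_le_of_forall_abs_sub_le hconv hα
  obtain ⟨N₁, hN₁⟩ := hconv (ε / (2 * T)) (by positivity)
  have hsmall : ∀ᶠ N in atTop, 0 < v N ∧ α / v N < ε / 2 ∧ N₁ ≤ N :=
    (hvtop.eventually_gt_atTop 0).and <|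
      ((tendsto_const_nhds.div_atTop hvtop).eventually (gt_mem_nhds (half_pos hε))).and
        (eventually_ge_atTop N₁)
  obtain ⟨N₀, hN₀⟩ := hsmall.exists_forall_of_atTop
  refine ⟨N₀, fun N hN t ht => ?_⟩
  obtain ⟨hv, hαv, hN⟩ := hN₀ N hN
  calc _ ≤ t * (ε / (2 * T)) + α / v N :=
        abs_riemannSum_sub_integral_le hv ht.1 (fun _ => hN₁ N hN _) (fun _ => hG _)
    _ ≤ T * (ε / (2 * T)) + ε / 2 := by gcongr; exact ht.2
    _ = ε := by field_simp; ring

/-- Proposition 2.7 (key proposition): uniform convergence of the Riemann-sum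
compensators to the time integral of the limiting characteristics, along any family
of sequences in `𝒳`. -/
theorem stmt3 {𝒳 : Type*} [Nonempty 𝒳]
    (v : ℕ → ℝ) (hvpos : ∀ N, 0 < v N) (hvtop : Tendsto v atTop atTop)
    (GN : ℕ → 𝒳 → ℝ) (G : 𝒳 → ℝ)
    (hconv : ∀ ε > (0 : ℝ), ∃ N₀, ∀ N ≥ N₀, ∀ x : 𝒳, |GN N x - G x| ≤ ε)
    (hbdd : ∃ α : ℝ, ∀ N ≥ 1, ∀ x : 𝒳, |GN N x| ≤ α) :
    ∀ T > (0 : ℝ), ∀ xs : ℕ → ℕ → 𝒳, ∀ ε > (0 : ℝ), ∃ N₀, ∀ N ≥ N₀,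
      ∀ t ∈ Icc (0 : ℝ) T,
        |(1 / v N) * ∑ k ∈ Finset.range ⌊v N * t⌋₊, GN N (xs N k) -
          ∫ s in (0 : ℝ)..t, G (xs N ⌊v N * s⌋₊)| ≤ ε :=
  stmt3_general v hvtop GN G hconv hbdd
end

section
/- Assume Assumption A. Then for every continuous bounded function f : (−1,∞) → ℝ with f(w) = o(w²) as w → 0, the function f is ν_E-integrable and lim_{N→∞} N·E[f(E^N)] = ∫_{(−1,∞)} f(w) dν_E(w). -/
/-!
Fix `ε > 0` and `δ > 0` so small that `|f w| ≤ ε w²` and `h_E w = w` on `(-δ, δ)`, and let `χ` be a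
continuous cutoff with values in `[0, 1]` that vanishes near `0` and equals `1` off `(-δ, δ)`.
Then `f χ` and `h_E² χ` vanish near `0`, so Assumption A gives the limits of their scaled
expectations, while `|f - f χ| ≤ ε (h_E² - h_E² χ)` pointwise. Since `N·E[h_E²(Eᴺ)]` converges and
`h_E² χ ≥ 0`, the error made by replacing `f` with `f χ` is `O(ε)`, both for `N·E[f(Eᴺ)]` and for
`∫ f dν_E`; integrability of `f` comes from `|f w| ≤ C min(w², 1)`.
-/

open MeasureTheory Filter Set Topology Asymptotics

lemma integrable_comp_of_continuousOn {Ω : Type*} [MeasurableSpace Ω] {P : Measure Ω}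
    [IsFiniteMeasure P] {s : Set ℝ} {X : Ω → ℝ} (hX : Measurable X) (hXs : ∀ ω, X ω ∈ s)
    {g : ℝ → ℝ} (hg : ContinuousOn g s) {M : ℝ} (hgM : ∀ w ∈ s, |g w| ≤ M) :
    Integrable (fun ω => g (X ω)) P := by
  have hmeas : Measurable fun ω => g (X ω) :=
    hg.domRestrict.measurable.comp (hX.subtype_mk (h := hXs))
  exact (integrable_const M).mono' hmeas.aestronglyMeasurable
    (ae_of_all _ fun ω => hgM _ (hXs ω))

lemma abs_le_mul_min_sq_one {g : ℝ → ℝ} {s : Set ℝ} {δ C M : ℝ} (hδ : 0 < δ)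
    (hg0 : ∀ w, |w| < δ → |g w| ≤ C * w ^ 2) (hgM : ∀ w ∈ s, |g w| ≤ M) :
    ∀ w ∈ s, |g w| ≤ max C (M / min δ 1 ^ 2) * min (w ^ 2) 1 := by
  intro w hw
  have hδ' : 0 < min δ 1 := lt_min hδ one_pos
  rcases lt_or_ge |w| (min δ 1) with hsmall | hlarge
  · have hw1 : w ^ 2 ≤ 1 := by
      rw [← sq_abs]; nlinarith [abs_nonneg w, min_le_right δ 1]
    rw [min_eq_left hw1]
    calc |g w| ≤ C * w ^ 2 := hg0 w (hsmall.trans_le (min_le_left _ _))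
      _ ≤ max C (M / min δ 1 ^ 2) * w ^ 2 := by gcongr; exact le_max_left _ _
  · have hmin : min δ 1 ^ 2 ≤ min (w ^ 2) 1 := by
      refine le_min ?_ ?_
      · rw [← sq_abs w]; gcongr
      · exact pow_le_one₀ hδ'.le (min_le_right _ _)
    calc |g w| ≤ M := hgM w hw
      _ = M / min δ 1 ^ 2 * min δ 1 ^ 2 := by field_simp
      _ ≤ max C (M / min δ 1 ^ 2) * min (w ^ 2) 1 := by
        have : 0 ≤ M := (abs_nonneg _).trans (hgM w hw)
        gcongr
        exact le_max_right _ _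

lemma integrableOn_of_abs_le_mul_sq {ν : Measure ℝ} {s : Set ℝ} (hs : MeasurableSet s)
    (hν : IntegrableOn (fun w => min (w ^ 2) 1) s ν) {g : ℝ → ℝ} (hg : ContinuousOn g s)
    {δ C M : ℝ} (hδ : 0 < δ) (hg0 : ∀ w, |w| < δ → |g w| ≤ C * w ^ 2)
    (hgM : ∀ w ∈ s, |g w| ≤ M) :
    IntegrableOn g s ν := by
  refine (hν.const_mul (max C (M / min δ 1 ^ 2))).mono' (hg.aestronglyMeasurable hs) ?_
  rw [ae_restrict_iff' hs]
  exact ae_of_all _ (abs_le_mul_min_sq_one hδ hg0 hgM)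

lemma exists_abs_le_mul_sq_of_isLittleO {f : ℝ → ℝ} (hf : ContinuousAt f 0)
    (ho : f =o[𝓝[≠] 0] fun w => w ^ 2) {ε : ℝ} (hε : 0 < ε) :
    ∃ δ > 0, ∀ w, |w| < δ → |f w| ≤ ε * w ^ 2 := by
  have hsq : Tendsto (fun w : ℝ => w ^ 2) (𝓝[≠] 0) (𝓝 0) :=
    ((continuous_pow 2).tendsto' 0 0 (by norm_num)).mono_left nhdsWithin_le_nhds
  have hf0 : f 0 = 0 :=
    tendsto_nhds_unique (hf.tendsto.mono_left nhdsWithin_le_nhds) (ho.trans_tendsto hsq)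
  have ho' : f =o[𝓝 0] fun w => w ^ 2 := by
    simpa only [insert_eq, union_compl_self, nhdsWithin_univ] using ho.insert hf0
  obtain ⟨δ, hδ, hfδ⟩ := Metric.eventually_nhds_iff.mp (ho'.def hε)
  refine ⟨δ, hδ, fun w hw => ?_⟩
  simpa [Real.dist_eq] using hfδ (by simpa [Real.dist_eq] using hw)

lemma exists_continuous_cutoff {δ : ℝ} (hδ : 0 < δ) :
    ∃ χ : ℝ → ℝ, Continuous χ ∧ (∀ w, χ w ∈ Icc 0 1) ∧
      (∀ w, |w| < δ / 2 → χ w = 0) ∧ ∀ w, δ ≤ |w| → χ w = 1 := by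
  obtain ⟨χ, hχ0, hχ1, hχI⟩ := exists_continuous_zero_one_of_isClosed
    (Metric.isClosed_closedBall (x := (0 : ℝ)) (ε := δ / 2))
    (Metric.isOpen_ball (x := (0 : ℝ)) (ε := δ)).isClosed_compl
    (Set.disjoint_compl_right_iff_subset.mpr (Metric.closedBall_subset_ball (by linarith)))
  refine ⟨χ, χ.continuous, hχI, fun w hw => hχ0 ?_, fun w hw => hχ1 ?_⟩
  · simpa using hw.le
  · simpa using hw

lemma abs_mul_le_of_mem_Icc (a : ℝ) {c : ℝ} (hc : c ∈ Icc 0 1) : |a * c| ≤ |a| := by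
  rw [abs_mul, abs_of_nonneg hc.1]
  exact mul_le_of_le_one_right (abs_nonneg a) hc.2

lemma abs_sub_mul_cutoff_le {f h χ : ℝ → ℝ} {δ ε : ℝ} (hχI : ∀ w, χ w ∈ Icc 0 1)
    (hχ1 : ∀ w, δ ≤ |w| → χ w = 1) (hf : ∀ w, |w| < δ → |f w| ≤ ε * w ^ 2)
    (hh : ∀ w, |w| < δ → h w = w) (w : ℝ) :
    |f w - f w * χ w| ≤ ε * (h w ^ 2 - h w ^ 2 * χ w) := by
  rcases lt_or_ge |w| δ with hw | hw
  · have h1χ : 0 ≤ 1 - χ w := sub_nonneg.mpr (hχI w).2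
    calc |f w - f w * χ w| = |f w| * (1 - χ w) := by
          rw [← mul_one_sub, abs_mul, abs_of_nonneg h1χ]
      _ ≤ ε * w ^ 2 * (1 - χ w) := by gcongr; exact hf w hw
      _ = ε * (h w ^ 2 - h w ^ 2 * χ w) := by rw [hh w hw]; ring
  · simp [hχ1 w hw]

lemma abs_integral_sub_mul_le {α : Type*} [MeasurableSpace α] {μ : Measure α}
    {f h χ : α → ℝ} {ε : ℝ} (hf : Integrable f μ) (hh : Integrable h μ)
    (hχ : AEStronglyMeasurable χ μ) (hχI : ∀ x, χ x ∈ Icc 0 1)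
    (hfh : ∀ x, |f x - f x * χ x| ≤ ε * (h x - h x * χ x)) :
    |∫ x, f x ∂μ - ∫ x, f x * χ x ∂μ| ≤ ε * (∫ x, h x ∂μ - ∫ x, h x * χ x ∂μ) := by
  have hχb : ∀ᵐ x ∂μ, ‖χ x‖ ≤ 1 :=
    ae_of_all _ fun x => by simpa using abs_le.mpr ⟨by linarith [(hχI x).1], (hχI x).2⟩
  have hfχ := hf.mul_bdd hχ hχb
  have hhχ := hh.mul_bdd hχ hχb
  rw [← integral_sub hf hfχ, ← integral_sub hh hhχ, ← integral_const_mul]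
  exact norm_integral_le_of_norm_le (f := fun x => f x - f x * χ x)
    ((hh.sub hhχ).const_mul ε) (ae_of_all _ hfh)

lemma tendsto_nhds_of_forall_eventually_abs_sub_le {ι : Type*} {l : Filter ι} {u : ι → ℝ}
    {L C : ℝ} (h : ∀ ε > 0, ∀ᶠ i in l, |u i - L| ≤ ε * C) : Tendsto u l (𝓝 L) := by
  refine Metric.tendsto_nhds.mpr fun ε hε => ?_
  have hC : 0 < |C| + 1 := by positivity
  filter_upwards [h (ε / (|C| + 1)) (div_pos hε hC)] with i hi
  rw [Real.dist_eq]
  calc |u i - L| ≤ ε / (|C| + 1) * C := hi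
    _ ≤ ε / (|C| + 1) * |C| := by gcongr; exact le_abs_self C
    _ < ε / (|C| + 1) * (|C| + 1) := by gcongr; linarith
    _ = ε := div_mul_cancel₀ ε hC.ne'

lemma tendsto_of_forall_approx {ι : Type*} {l : Filter ι} {u : ι → ℝ} {L B : ℝ}
    (h : ∀ ε > 0, ∃ (v d : ι → ℝ) (L' b : ℝ), Tendsto v l (𝓝 L') ∧ Tendsto d l (𝓝 b) ∧
      b ≤ B ∧ (∀ i, |u i - v i| ≤ ε * d i) ∧ |L - L'| ≤ ε * B) :
    Tendsto u l (𝓝 L) := by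
  refine tendsto_nhds_of_forall_eventually_abs_sub_le (C := 2 * B + 2) fun ε hε => ?_
  obtain ⟨v, d, L', b, hv, hd, hbB, huv, hL⟩ := h ε hε
  filter_upwards [Metric.tendsto_nhds.mp hv ε hε, hd.eventually_lt_const (lt_add_one b)]
    with i hvi hdi
  rw [Real.dist_eq] at hvi
  have hud : ε * d i ≤ ε * (B + 1) := by gcongr; linarith
  linarith [abs_sub_le (u i) (v i) L, abs_sub_le (v i) L' L, abs_sub_comm L' L, huv i]

theorem stmt5_general {Ω : Type*} [MeasurableSpace Ω] (P : Measure Ω) [IsProbabilityMeasure P]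
    (EN : ℕ → Ω → ℝ) (hENmeas : ∀ N, Measurable (EN N))
    (hENval : ∀ N ω, -1 < EN N ω)
    -- truncation function h_E on (-1, ∞)
    (hE : ℝ → ℝ) (hEcont : ContinuousOn hE (Ioi (-1)))
    (hEbdd : ∃ M : ℝ, ∀ w ∈ Ioi (-1 : ℝ), |hE w| ≤ M)
    (hEid : ∃ δ > (0 : ℝ), ∀ w : ℝ, |w| < δ → hE w = w)
    -- Assumption A
    (νE : Measure ℝ)
    (hνEint : IntegrableOn (fun w => min (w ^ 2) 1) (Ioi (-1)) νE)
    (βE : ℝ)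
    (hA2 : Tendsto (fun N : ℕ => (N : ℝ) * ∫ ω, hE (EN N ω) ^ 2 ∂P) atTop (𝓝 βE))
    (hA3 : ∀ f : ℝ → ℝ, ContinuousOn f (Ioi (-1)) →
      (∃ M : ℝ, ∀ w ∈ Ioi (-1 : ℝ), |f w| ≤ M) →
      (∃ δ > (0 : ℝ), ∀ w : ℝ, |w| < δ → f w = 0) →
      Tendsto (fun N : ℕ => (N : ℝ) * ∫ ω, f (EN N ω) ∂P) atTop
        (𝓝 (∫ w in Ioi (-1 : ℝ), f w ∂νE))) :
    ∀ f : ℝ → ℝ, ContinuousOn f (Ioi (-1)) →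
      (∃ M : ℝ, ∀ w ∈ Ioi (-1 : ℝ), |f w| ≤ M) →
      (f =o[𝓝[≠] (0 : ℝ)] fun w => w ^ 2) →
      IntegrableOn f (Ioi (-1)) νE ∧
      Tendsto (fun N : ℕ => (N : ℝ) * ∫ ω, f (EN N ω) ∂P) atTop
        (𝓝 (∫ w in Ioi (-1 : ℝ), f w ∂νE)) := by
  intro f hfc ⟨M, hfM⟩ hfo
  obtain ⟨MH, hMH⟩ := hEbdd
  obtain ⟨δE, hδE, hEid⟩ := hEid
  have hfc0 : ContinuousAt f 0 := hfc.continuousAt (Ioi_mem_nhds (by norm_num))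
  have hH2c : ContinuousOn (fun w => hE w ^ 2) (Ioi (-1)) := hEcont.pow 2
  have hH2M : ∀ w ∈ Ioi (-1 : ℝ), |hE w ^ 2| ≤ MH ^ 2 := fun w hw => by
    rw [abs_pow]; exact pow_le_pow_left₀ (abs_nonneg _) (hMH w hw) 2
  have hH2sq : ∀ w, |w| < δE → |hE w ^ 2| ≤ 1 * w ^ 2 := fun w hw => by simp [hEid w hw]
  obtain ⟨δf, hδf, hfδf⟩ := exists_abs_le_mul_sq_of_isLittleO hfc0 hfo one_pos
  have hfν := integrableOn_of_abs_le_mul_sq measurableSet_Ioi hνEint hfc hδf hfδf hfM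
  have hH2ν := integrableOn_of_abs_le_mul_sq measurableSet_Ioi hνEint hH2c hδE hH2sq hH2M
  have hint : ∀ N {g : ℝ → ℝ} {C : ℝ}, ContinuousOn g (Ioi (-1)) →
      (∀ w ∈ Ioi (-1 : ℝ), |g w| ≤ C) → Integrable (fun ω => g (EN N ω)) P :=
    fun N _ _ hg hgC => integrable_comp_of_continuousOn (hENmeas N) (hENval N) hg hgC
  set K := ∫ w in Ioi (-1 : ℝ), hE w ^ 2 ∂νE
  refine ⟨hfν, tendsto_of_forall_approx (B := max βE K) fun ε hε => ?_⟩
  obtain ⟨δ, hδ, hfδ⟩ := exists_abs_le_mul_sq_of_isLittleO hfc0 hfo hε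
  obtain ⟨χ, hχc, hχI, hχ0, hχ1⟩ := exists_continuous_cutoff (lt_min hδ hδE)
  have hkey := abs_sub_mul_cutoff_le hχI hχ1 (fun w hw => hfδ w (hw.trans_le (min_le_left _ _)))
    (fun w hw => hEid w (hw.trans_le (min_le_right _ _)))
  have hlim : ∀ {g : ℝ → ℝ} {C : ℝ}, ContinuousOn g (Ioi (-1)) →
      (∀ w ∈ Ioi (-1 : ℝ), |g w| ≤ C) →
      Tendsto (fun N : ℕ => (N : ℝ) * ∫ ω, g (EN N ω) * χ (EN N ω) ∂P) atTop
        (𝓝 (∫ w in Ioi (-1 : ℝ), g w * χ w ∂νE)) := fun hg hgC =>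
    hA3 _ (hg.mul hχc.continuousOn)
      ⟨_, fun w hw => (abs_mul_le_of_mem_Icc _ (hχI w)).trans (hgC w hw)⟩
      ⟨min δ δE / 2, by positivity, fun w hw => by simp [hχ0 w hw]⟩
  have hχK : 0 ≤ ∫ w in Ioi (-1 : ℝ), hE w ^ 2 * χ w ∂νE :=
    integral_nonneg fun w => mul_nonneg (sq_nonneg _) (hχI w).1
  refine ⟨_, _, _, _, hlim hfc hfM, hA2.sub (hlim hH2c hH2M),
    by linarith [le_max_left βE K], fun N => ?_, ?_⟩
  · rw [← mul_sub, ← mul_sub, abs_mul, Nat.abs_cast, mul_left_comm]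
    gcongr
    exact abs_integral_sub_mul_le (hint N hfc hfM) (hint N hH2c hH2M)
      (hχc.measurable.comp (hENmeas N)).aestronglyMeasurable (fun _ => hχI _) (fun _ => hkey _)
  · have hν := abs_integral_sub_mul_le hfν hH2ν hχc.aestronglyMeasurable hχI hkey
    have hKB : ε * K ≤ ε * max βE K := by gcongr; exact le_max_right _ _
    nlinarith [mul_nonneg hε.le hχK]

/-- Under Assumption A, the convergence `N·E[f(Eᴺ)] → ∫ f dν_E` extends to every
continuous bounded `f : (-1,∞) → ℝ` with `f(w) = o(w²)` as `w → 0`. -/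
theorem stmt5 {Ω : Type*} [MeasurableSpace Ω] (P : Measure Ω) [IsProbabilityMeasure P]
    (EN : ℕ → Ω → ℝ) (hENmeas : ∀ N, Measurable (EN N))
    (hENval : ∀ N ω, -1 < EN N ω)
    -- truncation function h_E on (-1, ∞)
    (hE : ℝ → ℝ) (hEcont : ContinuousOn hE (Ioi (-1)))
    (hEbdd : ∃ M : ℝ, ∀ w ∈ Ioi (-1 : ℝ), |hE w| ≤ M)
    (hEid : ∃ δ > (0 : ℝ), ∀ w : ℝ, |w| < δ → hE w = w)
    (hEne : ∀ w ∈ Ioi (-1 : ℝ), w ≠ 0 → hE w ≠ 0)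
    -- Assumption A
    (αE σE : ℝ) (hσE : 0 ≤ σE)
    (νE : Measure ℝ) (hνE0 : νE (Iic (-1)) = 0)
    (hνEint : IntegrableOn (fun w => min (w ^ 2) 1) (Ioi (-1)) νE)
    (βE : ℝ) (hβE : βE = σE ^ 2 + ∫ w in Ioi (-1 : ℝ), hE w ^ 2 ∂νE)
    (hA1 : Tendsto (fun N : ℕ => (N : ℝ) * ∫ ω, hE (EN N ω) ∂P) atTop (𝓝 αE))
    (hA2 : Tendsto (fun N : ℕ => (N : ℝ) * ∫ ω, hE (EN N ω) ^ 2 ∂P) atTop (𝓝 βE))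
    (hA3 : ∀ f : ℝ → ℝ, ContinuousOn f (Ioi (-1)) →
      (∃ M : ℝ, ∀ w ∈ Ioi (-1 : ℝ), |f w| ≤ M) →
      (∃ δ > (0 : ℝ), ∀ w : ℝ, |w| < δ → f w = 0) →
      Tendsto (fun N : ℕ => (N : ℝ) * ∫ ω, f (EN N ω) ∂P) atTop
        (𝓝 (∫ w in Ioi (-1 : ℝ), f w ∂νE))) :
    ∀ f : ℝ → ℝ, ContinuousOn f (Ioi (-1)) →
      (∃ M : ℝ, ∀ w ∈ Ioi (-1 : ℝ), |f w| ≤ M) →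
      (f =o[𝓝[≠] (0 : ℝ)] fun w => w ^ 2) →
      IntegrableOn f (Ioi (-1)) νE ∧
      Tendsto (fun N : ℕ => (N : ℝ) * ∫ ω, f (EN N ω) ∂P) atTop
        (𝓝 (∫ w in Ioi (-1 : ℝ), f w ∂νE)) :=
  stmt5_general P EN hENmeas hENval hE hEcont hEbdd hEid νE hνEint βE hA2 hA3
end

section
/- For every real k ≥ 0 there exists a constant C > 0 such that for all integers N ≥ 1 and all p, z ∈ [0,1]: | log( e^{−k(1−z)/N} p + e^{kz/N}(1−p) ) − (k/N)(z − p) − (k²/(2N²)) p(1−p) | ≤ C / N³. -/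
open Set Real

/-!
With `y = -k/N`, the quantity inside the absolute value is the error of the second-order Taylor
expansion at `0` of the cumulant generating function `K(y) = log(1 - p + p e^y)` of a
Bernoulli(`p`) variable. Its derivative is the tilted success probability
`q(y) = p e^y / (1 - p + p e^y)`, which satisfies `q' = q(1 - q) ∈ [0, 1/4]`. Three applications
of the mean value inequality give `|q(y) - p| ≤ |y|/4`, then `|q(y) - p - p(1-p)y| ≤ y²/4`
since `|q(1-q) - p(1-p)| = |q - p| |1 - q - p| ≤ |q - p|`, and finally
`|K(y) - py - p(1-p)y²/2| ≤ |y|³/4`.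
-/

theorem abs_sub_le_mul_abs_pow_succ_of_hasDerivAt {f f' : ℝ → ℝ} {c : ℝ} {n : ℕ}
    (hf : ∀ t, HasDerivAt f (f' t) t) (hf' : ∀ t, |f' t| ≤ c * |t| ^ n) (x : ℝ) :
    |f x - f 0| ≤ c * |x| ^ (n + 1) := by
  have hc : 0 ≤ c := by simpa using (abs_nonneg _).trans (hf' 1)
  have hbound : ∀ t ∈ uIcc 0 x, ‖f' t‖ ≤ c * |x| ^ n := fun t ht =>
    calc ‖f' t‖ ≤ c * |t| ^ n := hf' t
      _ ≤ c * |x| ^ n := by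
        have htx : |t| ≤ |x| := by simpa using abs_sub_left_of_mem_uIcc ht
        gcongr
  have := (convex_uIcc (0 : ℝ) x).norm_image_sub_le_of_norm_hasDerivWithin_le
    (fun t _ => (hf t).hasDerivWithinAt) hbound left_mem_uIcc right_mem_uIcc
  simpa [pow_succ, mul_assoc] using this

noncomputable section

def bernoulliCgf (p y : ℝ) : ℝ := log (1 - p + p * exp y)

def bernoulliTilt (p y : ℝ) : ℝ := p * exp y / (1 - p + p * exp y)

variable {p : ℝ}

theorem bernoulli_mgf_pos (hp : p ∈ Icc (0 : ℝ) 1) (y : ℝ) : 0 < 1 - p + p * exp y := by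
  obtain ⟨hp0, hp1⟩ := hp
  nlinarith [exp_pos y, mul_nonneg hp0 (exp_pos y).le]

@[simp]
theorem bernoulliCgf_zero (p : ℝ) : bernoulliCgf p 0 = 0 := by
  simp [bernoulliCgf]

@[simp]
theorem bernoulliTilt_zero (p : ℝ) : bernoulliTilt p 0 = p := by
  simp [bernoulliTilt]

theorem bernoulliTilt_mem_Icc (hp : p ∈ Icc (0 : ℝ) 1) (y : ℝ) :
    bernoulliTilt p y ∈ Icc 0 1 := by
  have hpos := bernoulli_mgf_pos hp y
  refine ⟨div_nonneg (mul_nonneg hp.1 (exp_pos y).le) hpos.le, (div_le_one hpos).2 ?_⟩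
  linarith [hp.2]

theorem hasDerivAt_bernoulliCgf (hp : p ∈ Icc (0 : ℝ) 1) (y : ℝ) :
    HasDerivAt (bernoulliCgf p) (bernoulliTilt p y) y := by
  have hmgf : HasDerivAt (fun y => 1 - p + p * exp y) (p * exp y) y := by
    simpa using ((hasDerivAt_exp y).const_mul p).const_add (1 - p)
  exact hmgf.log (bernoulli_mgf_pos hp y).ne'

theorem hasDerivAt_bernoulliTilt (hp : p ∈ Icc (0 : ℝ) 1) (y : ℝ) :
    HasDerivAt (bernoulliTilt p) (bernoulliTilt p y * (1 - bernoulliTilt p y)) y := by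
  have hnum : HasDerivAt (fun y => p * exp y) (p * exp y) y := (hasDerivAt_exp y).const_mul p
  have hden : HasDerivAt (fun y => 1 - p + p * exp y) (p * exp y) y := by
    simpa using hnum.const_add (1 - p)
  have hpos := bernoulli_mgf_pos hp y
  refine (hnum.div hden hpos.ne').congr_deriv ?_
  simp only [bernoulliTilt]
  field_simp

theorem abs_bernoulliTilt_sub_le (hp : p ∈ Icc (0 : ℝ) 1) (y : ℝ) :
    |bernoulliTilt p y - p| ≤ 1 / 4 * |y| := by
  have hderiv : ∀ t, |bernoulliTilt p t * (1 - bernoulliTilt p t)| ≤ 1 / 4 * |t| ^ 0 := by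
    intro t
    obtain ⟨hq0, hq1⟩ := bernoulliTilt_mem_Icc hp t
    rw [pow_zero, mul_one, abs_of_nonneg (mul_nonneg hq0 (by linarith))]
    nlinarith [sq_nonneg (2 * bernoulliTilt p t - 1)]
  simpa using abs_sub_le_mul_abs_pow_succ_of_hasDerivAt (hasDerivAt_bernoulliTilt hp) hderiv y

theorem abs_bernoulliTilt_sub_taylor_le (hp : p ∈ Icc (0 : ℝ) 1) (y : ℝ) :
    |bernoulliTilt p y - p - p * (1 - p) * y| ≤ 1 / 4 * |y| ^ 2 := by
  have hf : ∀ t, HasDerivAt (fun t => bernoulliTilt p t - p - p * (1 - p) * t)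
      (bernoulliTilt p t * (1 - bernoulliTilt p t) - p * (1 - p)) t := fun t =>
    (((hasDerivAt_bernoulliTilt hp t).sub_const p).sub
      ((hasDerivAt_id t).const_mul (p * (1 - p)))).congr_deriv (by ring)
  have hf' : ∀ t,
      |bernoulliTilt p t * (1 - bernoulliTilt p t) - p * (1 - p)| ≤ 1 / 4 * |t| ^ 1 := by
    intro t
    obtain ⟨hq0, hq1⟩ := bernoulliTilt_mem_Icc hp t
    have hfactor : bernoulliTilt p t * (1 - bernoulliTilt p t) - p * (1 - p)
        = (bernoulliTilt p t - p) * (1 - bernoulliTilt p t - p) := by ring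
    have hsecond : |1 - bernoulliTilt p t - p| ≤ 1 :=
      abs_le.2 ⟨by linarith [hp.2], by linarith [hp.1]⟩
    calc _ = |bernoulliTilt p t - p| * |1 - bernoulliTilt p t - p| := by rw [hfactor, abs_mul]
      _ ≤ |bernoulliTilt p t - p| := mul_le_of_le_one_right (abs_nonneg _) hsecond
      _ ≤ 1 / 4 * |t| ^ 1 := by simpa using abs_bernoulliTilt_sub_le hp t
  simpa using abs_sub_le_mul_abs_pow_succ_of_hasDerivAt hf hf' y

theorem abs_bernoulliCgf_sub_taylor_le (hp : p ∈ Icc (0 : ℝ) 1) (y : ℝ) :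
    |bernoulliCgf p y - p * y - p * (1 - p) / 2 * y ^ 2| ≤ 1 / 4 * |y| ^ 3 := by
  have hf : ∀ t, HasDerivAt (fun t => bernoulliCgf p t - p * t - p * (1 - p) / 2 * t ^ 2)
      (bernoulliTilt p t - p - p * (1 - p) * t) t := fun t =>
    (((hasDerivAt_bernoulliCgf hp t).sub ((hasDerivAt_id t).const_mul p)).sub
      ((hasDerivAt_pow 2 t).const_mul (p * (1 - p) / 2))).congr_deriv (by ring)
  simpa using
    abs_sub_le_mul_abs_pow_succ_of_hasDerivAt hf (abs_bernoulliTilt_sub_taylor_le hp) y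

theorem log_exp_mul_add_exp_mul_eq (hp : p ∈ Icc (0 : ℝ) 1) (a z : ℝ) :
    log (exp (-a * (1 - z)) * p + exp (a * z) * (1 - p)) = a * z + bernoulliCgf p (-a) := by
  have hsplit : exp (-a * (1 - z)) * p + exp (a * z) * (1 - p)
      = exp (a * z) * (1 - p + p * exp (-a)) := by
    rw [show -a * (1 - z) = a * z + -a by ring, exp_add]
    ring
  rw [hsplit, log_mul (exp_ne_zero _) (bernoulli_mgf_pos hp _).ne', log_exp, bernoulliCgf]

end

theorem stmt7_general (k : ℝ) :
    ∃ C > (0 : ℝ), ∀ N : ℕ, 1 ≤ N → ∀ p ∈ Icc (0 : ℝ) 1, ∀ z ∈ Icc (0 : ℝ) 1,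
      |Real.log (Real.exp (-k * (1 - z) / N) * p + Real.exp (k * z / N) * (1 - p)) -
          (k / N) * (z - p) - k ^ 2 / (2 * (N : ℝ) ^ 2) * (p * (1 - p))| ≤
        C / (N : ℝ) ^ 3 := by
  refine ⟨|k| ^ 3 / 4 + 1, by positivity, fun N hN p hp z _ => ?_⟩
  have hN0 : (0 : ℝ) < N := by exact_mod_cast hN
  have hlog := log_exp_mul_add_exp_mul_eq hp (k / N) z
  rw [show -(k / N) * (1 - z) = -k * (1 - z) / N by ring, show k / N * z = k * z / N by ring]
    at hlog
  have herror : Real.log (Real.exp (-k * (1 - z) / N) * p + Real.exp (k * z / N) * (1 - p)) -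
      (k / N) * (z - p) - k ^ 2 / (2 * (N : ℝ) ^ 2) * (p * (1 - p))
      = bernoulliCgf p (-(k / N)) - p * -(k / N) - p * (1 - p) / 2 * (-(k / N)) ^ 2 := by
    rw [hlog]
    ring
  calc _ ≤ 1 / 4 * |-(k / N)| ^ 3 := herror ▸ abs_bernoulliCgf_sub_taylor_le hp _
    _ = |k| ^ 3 / 4 / (N : ℝ) ^ 3 := by
      rw [abs_neg, abs_div, Nat.abs_cast, div_pow]
      ring
    _ ≤ (|k| ^ 3 / 4 + 1) / (N : ℝ) ^ 3 := by gcongr; linarith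

/-- Taylor expansion used in the Wright–Fisher computation: uniformly in
`p, z ∈ [0,1]`, `log(e^{-k(1-z)/N} p + e^{kz/N}(1-p)) = (k/N)(z-p) + (k²/2N²)p(1-p) + O(1/N³)`. -/
theorem stmt7 (k : ℝ) (hk : 0 ≤ k) :
    ∃ C > (0 : ℝ), ∀ N : ℕ, 1 ≤ N → ∀ p ∈ Icc (0 : ℝ) 1, ∀ z ∈ Icc (0 : ℝ) 1,
      |Real.log (Real.exp (-k * (1 - z) / N) * p + Real.exp (k * z / N) * (1 - p)) -
          (k / N) * (z - p) - k ^ 2 / (2 * (N : ℝ) ^ 2) * (p * (1 - p))| ≤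
        C / (N : ℝ) ^ 3 :=
  stmt7_general k
end

section
/- Assume Assumption A1. Then for every real ℓ ≥ 1, v_N · E[1 − e^{−ℓ E^N}] converges as N → ∞ to γ_ℓ^E = α_E ℓ − (1/2) σ_E² ℓ² + ∫_{(−1,∞)} (1 − e^{−ℓ w} − ℓ h_E(w)) dν_E(w). -/
/-!
Write `1 - e^{-ℓw} = ℓ h(w) - ℓ² h(w)² / 2 + R(w)`. The first two terms are handled by the first
two limits of A1. The remainder `R` is continuous and bounded on `(-1, ∞)` and, since `h` is the
identity near `0`, `R = o(h²)` at `0`. Cutting `R` with a bump function `φ` concentrated near `0`,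
`R (1 - φ)` vanishes near `0`, so the third limit of A1 applies to it, while `|R φ| ≤ ε h²`; the
contributions of `R φ` on both sides are then `O(ε)`, because `v_N E[h(Eᴺ)²]` is bounded and `h²`
is `ν`-integrable.
-/

open MeasureTheory Filter Set Topology
open Asymptotics

theorem tendsto_of_forall_approx_s9 {ι α : Type*} [PseudoMetricSpace α] {l : Filter ι}
    {u : ι → α} {a : α} {C : ℝ}
    (h : ∀ ε > 0, ∃ (w : ι → α) (b : α), Tendsto w l (𝓝 b) ∧
      (∀ᶠ i in l, dist (u i) (w i) ≤ C * ε) ∧ dist b a ≤ C * ε) :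
    Tendsto u l (𝓝 a) := by
  rw [Metric.tendsto_nhds]
  intro η hη
  set ε := η / (3 * (|C| + 1))
  have hε : 0 < ε := by positivity
  have hCε : C * ε < η / 3 := calc
    C * ε ≤ |C| * ε := by gcongr; exact le_abs_self C
    _ < (|C| + 1) * ε := by gcongr; linarith
    _ = η / 3 := by simp only [ε]; field_simp
  obtain ⟨w, b, hwb, huw, hba⟩ := h ε hε
  filter_upwards [huw, Metric.tendsto_nhds.mp hwb (η / 3) (by positivity)] with i hi hwi
  calc dist (u i) a ≤ dist (u i) (w i) + dist (w i) b + dist b a := dist_triangle4 _ _ _ _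
    _ < η := by linarith

theorem ContinuousOn.measurable_comp {Ω α β : Type*} [MeasurableSpace Ω] [TopologicalSpace α]
    [MeasurableSpace α] [OpensMeasurableSpace α] [TopologicalSpace β] [MeasurableSpace β]
    [BorelSpace β] {s : Set α} {f : α → β} (hf : ContinuousOn f s) {X : Ω → α}
    (hX : Measurable X) (hXs : ∀ ω, X ω ∈ s) : Measurable fun ω => f (X ω) :=
  (continuousOn_iff_continuous_domRestrict.mp hf).measurable.comp (hX.subtype_mk (h := hXs))

theorem ContinuousOn.integrable_comp {Ω α : Type*} [MeasurableSpace Ω] {P : Measure Ω}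
    [IsFiniteMeasure P] [TopologicalSpace α] [MeasurableSpace α] [OpensMeasurableSpace α]
    {s : Set α} {f : α → ℝ} (hf : ContinuousOn f s)
    (hbdd : ∃ M, ∀ w ∈ s, |f w| ≤ M) {X : Ω → α} (hX : Measurable X) (hXs : ∀ ω, X ω ∈ s) :
    Integrable (fun ω => f (X ω)) P := by
  obtain ⟨M, hM⟩ := hbdd
  exact .of_bound (hf.measurable_comp hX hXs).aestronglyMeasurable M
    (ae_of_all _ fun ω => hM _ (hXs ω))

theorem abs_le_mul_min_sq_one_s9 {y w M C r : ℝ} (hr0 : 0 < r) (hr1 : r ≤ 1) (hM : |y| ≤ M)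
    (hC : |w| < r → |y| ≤ C * w ^ 2) : |y| ≤ max C (M / r ^ 2) * min (w ^ 2) 1 := by
  rcases lt_or_ge |w| r with hw | hw
  · have hw1 : w ^ 2 ≤ 1 := by nlinarith [sq_abs w, abs_nonneg w]
    rw [min_eq_left hw1]
    exact (hC hw).trans (by gcongr; exact le_max_left _ _)
  · have hr2 : r ^ 2 ≤ min (w ^ 2) 1 := le_min (by nlinarith [sq_abs w]) (by nlinarith)
    have hM0 : 0 ≤ M := (abs_nonneg y).trans hM
    calc |y| ≤ M / r ^ 2 * r ^ 2 := by rwa [div_mul_cancel₀ _ (by positivity)]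
      _ ≤ max C (M / r ^ 2) * min (w ^ 2) 1 := by gcongr; exact le_max_right _ _

theorem integrableOn_of_isBigO_sq {ν : Measure ℝ} {s : Set ℝ} (hs : MeasurableSet s)
    (hν : IntegrableOn (fun w => min (w ^ 2) 1) s ν) {f : ℝ → ℝ} (hf : ContinuousOn f s)
    (hbdd : ∃ M, ∀ w ∈ s, |f w| ≤ M) (hf0 : f =O[𝓝 0] fun w => w ^ 2) :
    IntegrableOn f s ν := by
  obtain ⟨M, hM⟩ := hbdd
  obtain ⟨C, hC⟩ := hf0.bound
  obtain ⟨r, hr, hCr⟩ := Metric.eventually_nhds_iff.mp hC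
  refine (hν.const_mul (max C (M / min r 1 ^ 2))).mono' (hf.aestronglyMeasurable hs) ?_
  refine (ae_restrict_iff' hs).mpr (ae_of_all _ fun w hw => ?_)
  refine abs_le_mul_min_sq_one_s9 (lt_min hr one_pos) (min_le_right _ _) (hM w hw) fun hw' => ?_
  simpa [abs_of_nonneg (sq_nonneg w)] using
    hCr (y := w) (by simpa using hw'.trans_le (min_le_left _ _))

section Cutoff

variable {Ω : Type*} [MeasurableSpace Ω] {P : Measure Ω} [IsFiniteMeasure P]
  {s : Set ℝ} {X : ℕ → Ω → ℝ} {v : ℕ → ℝ} {ν : Measure ℝ}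

theorem abs_mul_bump_le_of_isLittleO {g k : ℝ → ℝ} (hk : ∀ w ∈ s, 0 ≤ k w)
    (hgk : g =o[𝓝 0] k) {ε : ℝ} (hε : 0 < ε) :
    ∃ φ : ContDiffBump (0 : ℝ), ∀ w ∈ s, |g w * φ w| ≤ ε * k w := by
  obtain ⟨r, hr, hgr⟩ := Metric.eventually_nhds_iff.mp (hgk.bound hε)
  refine ⟨⟨r / 2, r, half_pos hr, half_lt_self hr⟩, fun w hw => ?_⟩
  set φ : ContDiffBump (0 : ℝ) := ⟨r / 2, r, half_pos hr, half_lt_self hr⟩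
  rcases lt_or_ge (dist w 0) r with hwr | hwr
  · calc |g w * φ w| ≤ |g w| * 1 := by
          rw [abs_mul, abs_of_nonneg φ.nonneg]; gcongr; exact φ.le_one
      _ ≤ ε * k w := by simpa [abs_of_nonneg (hk w hw)] using hgr hwr
  · rw [φ.zero_of_le_dist hwr, mul_zero, abs_zero]
    exact mul_nonneg hε.le (hk w hw)

theorem tendsto_mul_integral_of_isLittleO (hs : MeasurableSet s) (hX : ∀ N, Measurable (X N))
    (hXs : ∀ N ω, X N ω ∈ s) (hv : ∀ N, 0 ≤ v N)
    (hlim : ∀ f : ℝ → ℝ, ContinuousOn f s → (∃ M : ℝ, ∀ w ∈ s, |f w| ≤ M) →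
      (∃ δ > (0 : ℝ), ∀ w : ℝ, |w| < δ → f w = 0) →
      Tendsto (fun N => v N * ∫ ω, f (X N ω) ∂P) atTop (𝓝 (∫ w in s, f w ∂ν)))
    {g k : ℝ → ℝ} (hg : ContinuousOn g s) (hg_bdd : ∃ M : ℝ, ∀ w ∈ s, |g w| ≤ M)
    (hgν : IntegrableOn g s ν) (hk : ∀ w ∈ s, 0 ≤ k w)
    (hkP : ∀ N, Integrable (fun ω => k (X N ω)) P) (hkν : IntegrableOn k s ν)
    (hkP_bdd : IsBoundedUnder (· ≤ ·) atTop fun N => v N * ∫ ω, k (X N ω) ∂P)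
    (hgk : g =o[𝓝 0] k) :
    Tendsto (fun N => v N * ∫ ω, g (X N ω) ∂P) atTop (𝓝 (∫ w in s, g w ∂ν)) := by
  obtain ⟨K, hK⟩ := hkP_bdd
  refine tendsto_of_forall_approx_s9 (C := max K (∫ w in s, k w ∂ν)) fun ε hε => ?_
  obtain ⟨φ, hφ⟩ := abs_mul_bump_le_of_isLittleO hk hgk hε
  have hφ_bdd : ∀ w, ‖φ w‖ ≤ 1 := fun w => by
    rw [Real.norm_eq_abs, abs_of_nonneg φ.nonneg]; exact φ.le_one
  have hgφ : ContinuousOn (fun w => g w * φ w) s := hg.mul φ.continuous.continuousOn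
  have hgφν : IntegrableOn (fun w => g w * φ w) s ν :=
    hgν.mul_bdd (φ.continuous.aestronglyMeasurable) (ae_of_all _ hφ_bdd)
  have hgP : ∀ N, Integrable (fun ω => g (X N ω)) P := fun N =>
    hg.integrable_comp hg_bdd (hX N) (hXs N)
  have hgφP : ∀ N, Integrable (fun ω => g (X N ω) * φ (X N ω)) P := fun N =>
    (hgP N).mul_bdd (φ.continuous.measurable.comp (hX N)).aestronglyMeasurable
      (ae_of_all _ fun ω => hφ_bdd _)
  refine ⟨fun N => v N * ∫ ω, (g (X N ω) - g (X N ω) * φ (X N ω)) ∂P,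
    ∫ w in s, (g w - g w * φ w) ∂ν, hlim _ (hg.sub hgφ) ?_ ?_, ?_, ?_⟩
  · obtain ⟨M, hM⟩ := hg_bdd
    refine ⟨M, fun w hw => ?_⟩
    have h1φ : |1 - φ w| ≤ 1 :=
      abs_le.mpr ⟨by linarith [φ.le_one (x := w)], by linarith [φ.nonneg (x := w)]⟩
    calc |g w - g w * φ w| = |g w| * |1 - φ w| := by rw [← abs_mul, mul_one_sub]
      _ ≤ M := by nlinarith [hM w hw, abs_nonneg (g w), abs_nonneg (1 - φ w)]
  · refine ⟨φ.rIn, φ.rIn_pos, fun w hw => ?_⟩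
    rw [φ.one_of_mem_closedBall (by simpa using hw.le), mul_one, sub_self]
  · filter_upwards [eventually_map.mp hK] with N hN
    rw [integral_sub (hgP N) (hgφP N), Real.dist_eq, mul_sub, sub_sub_cancel, abs_mul,
      abs_of_nonneg (hv N)]
    calc v N * |∫ ω, g (X N ω) * φ (X N ω) ∂P| ≤ v N * ∫ ω, ε * k (X N ω) ∂P := by
          refine mul_le_mul_of_nonneg_left ?_ (hv N)
          exact norm_integral_le_of_norm_le (f := fun ω => g (X N ω) * φ (X N ω))
            ((hkP N).const_mul ε) (ae_of_all _ fun ω => hφ _ (hXs N ω))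
      _ = (v N * ∫ ω, k (X N ω) ∂P) * ε := by rw [integral_const_mul]; ring
      _ ≤ max K (∫ w in s, k w ∂ν) * ε := by gcongr; exact hN.trans (le_max_left _ _)
  · rw [integral_sub hgν hgφν, Real.dist_eq, sub_sub_cancel_left, abs_neg]
    calc |∫ w in s, g w * φ w ∂ν| ≤ ∫ w in s, ε * k w ∂ν :=
          norm_integral_le_of_norm_le (f := fun w => g w * φ w) (hkν.const_mul ε)
            ((ae_restrict_iff' hs).mpr (ae_of_all _ hφ))
      _ = (∫ w in s, k w ∂ν) * ε := by rw [integral_const_mul, mul_comm]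
      _ ≤ max K (∫ w in s, k w ∂ν) * ε := by gcongr; exact le_max_right _ _

end Cutoff

noncomputable def expRemainder (h : ℝ → ℝ) (ℓ w : ℝ) : ℝ :=
  1 - Real.exp (-ℓ * w) - ℓ * h w + ℓ ^ 2 / 2 * h w ^ 2

section ExpRemainder

variable {h : ℝ → ℝ} {ℓ : ℝ}

theorem continuousOn_expRemainder {s : Set ℝ} (hh : ContinuousOn h s) :
    ContinuousOn (expRemainder h ℓ) s := by
  unfold expRemainder
  fun_prop

theorem exists_abs_expRemainder_le (hℓ : 0 ≤ ℓ) (hbdd : ∃ M : ℝ, ∀ w ∈ Ioi (-1 : ℝ), |h w| ≤ M) :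
    ∃ M : ℝ, ∀ w ∈ Ioi (-1 : ℝ), |expRemainder h ℓ w| ≤ M := by
  obtain ⟨M, hM⟩ := hbdd
  refine ⟨Real.exp ℓ + ℓ * M + ℓ ^ 2 / 2 * M ^ 2, fun w hw => ?_⟩
  have hexp : |1 - Real.exp (-ℓ * w)| ≤ Real.exp ℓ := by
    have : Real.exp (-ℓ * w) ≤ Real.exp ℓ := Real.exp_le_exp.mpr (by nlinarith [mem_Ioi.mp hw])
    exact abs_le.mpr ⟨by linarith, by linarith [Real.exp_pos (-ℓ * w), Real.one_le_exp hℓ]⟩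
  have hsq : |h w| ^ 2 ≤ M ^ 2 := pow_le_pow_left₀ (abs_nonneg _) (hM w hw) 2
  calc |expRemainder h ℓ w|
      ≤ |1 - Real.exp (-ℓ * w)| + |ℓ * h w| + |ℓ ^ 2 / 2 * h w ^ 2| :=
        (abs_add_le _ _).trans (by gcongr; exact abs_sub _ _)
    _ = |1 - Real.exp (-ℓ * w)| + ℓ * |h w| + ℓ ^ 2 / 2 * |h w| ^ 2 := by
        rw [abs_mul, abs_mul, abs_of_nonneg hℓ,
          abs_of_nonneg (by positivity : (0 : ℝ) ≤ ℓ ^ 2 / 2), abs_pow]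
    _ ≤ Real.exp ℓ + ℓ * M + ℓ ^ 2 / 2 * M ^ 2 := by gcongr; exact hM w hw

theorem expRemainder_isLittleO (hid : h =ᶠ[𝓝 0] id) :
    expRemainder h ℓ =o[𝓝 0] fun w => h w ^ 2 := by
  have hexp := (Real.exp_sub_sum_range_succ_isLittleO_pow 2).comp_tendsto
    ((continuous_const_mul (-ℓ)).tendsto' 0 0 (mul_zero _))
  have hsq : (fun w => (-ℓ * w) ^ 2) =O[𝓝 0] fun w => w ^ 2 := by
    simpa only [mul_pow] using isBigO_const_mul_self ((-ℓ) ^ 2) (fun w : ℝ => w ^ 2) (𝓝 0)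
  refine (hexp.trans_isBigO hsq).neg_left.congr' ?_ ?_ <;> filter_upwards [hid] with w hw
  · simp [expRemainder, hw, Finset.sum_range_succ]
    ring
  · simp [hw]

theorem integral_one_sub_exp_neg_mul_eq {α : Type*} [MeasurableSpace α] {μ : Measure α}
    {Y : α → ℝ} (h1 : Integrable (fun a => h (Y a)) μ) (h2 : Integrable (fun a => h (Y a) ^ 2) μ)
    (hR : Integrable (fun a => expRemainder h ℓ (Y a)) μ) :
    ∫ a, (1 - Real.exp (-ℓ * Y a)) ∂μ =
      ℓ * ∫ a, h (Y a) ∂μ - ℓ ^ 2 / 2 * ∫ a, h (Y a) ^ 2 ∂μ + ∫ a, expRemainder h ℓ (Y a) ∂μ := by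
  calc ∫ a, (1 - Real.exp (-ℓ * Y a)) ∂μ
      = ∫ a, (ℓ * h (Y a) - ℓ ^ 2 / 2 * h (Y a) ^ 2 + expRemainder h ℓ (Y a)) ∂μ := by
        congr 1 with a
        simp only [expRemainder]
        ring
    _ = _ := by
        rw [integral_add (f := fun a => ℓ * h (Y a) - ℓ ^ 2 / 2 * h (Y a) ^ 2)
          ((h1.const_mul _).sub (h2.const_mul _)) hR,
          integral_sub (h1.const_mul _) (h2.const_mul _), integral_const_mul, integral_const_mul]

theorem integral_one_sub_exp_neg_mul_sub_eq {μ : Measure ℝ} (h2 : Integrable (fun w => h w ^ 2) μ)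
    (hR : Integrable (expRemainder h ℓ) μ) :
    ∫ w, (1 - Real.exp (-ℓ * w) - ℓ * h w) ∂μ =
      ∫ w, expRemainder h ℓ w ∂μ - ℓ ^ 2 / 2 * ∫ w, h w ^ 2 ∂μ := by
  rw [← integral_const_mul, ← integral_sub hR (h2.const_mul _)]
  congr 1 with w
  simp only [expRemainder]
  ring

end ExpRemainder

theorem stmt9_general {Ω : Type*} [MeasurableSpace Ω] (P : Measure Ω) [IsProbabilityMeasure P]
    (EN : ℕ → Ω → ℝ) (hENmeas : ∀ N, Measurable (EN N))
    (hENval : ∀ N ω, -1 < EN N ω)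
    (v : ℕ → ℝ) (hvpos : ∀ N, 0 < v N)
    -- truncation function h_E on (-1, ∞)
    (hE : ℝ → ℝ) (hEcont : ContinuousOn hE (Ioi (-1)))
    (hEbdd : ∃ M : ℝ, ∀ w ∈ Ioi (-1 : ℝ), |hE w| ≤ M)
    (hEid : ∃ δ > (0 : ℝ), ∀ w : ℝ, |w| < δ → hE w = w)
    -- Assumption A1
    (αE σE : ℝ)
    (νE : Measure ℝ)
    (hνEint : IntegrableOn (fun w => min (w ^ 2) 1) (Ioi (-1)) νE)
    (βE : ℝ) (hβE : βE = σE ^ 2 + ∫ w in Ioi (-1 : ℝ), hE w ^ 2 ∂νE)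
    (hA1 : Tendsto (fun N : ℕ => v N * ∫ ω, hE (EN N ω) ∂P) atTop (𝓝 αE))
    (hA2 : Tendsto (fun N : ℕ => v N * ∫ ω, hE (EN N ω) ^ 2 ∂P) atTop (𝓝 βE))
    (hA3 : ∀ f : ℝ → ℝ, ContinuousOn f (Ioi (-1)) →
      (∃ M : ℝ, ∀ w ∈ Ioi (-1 : ℝ), |f w| ≤ M) →
      (∃ δ > (0 : ℝ), ∀ w : ℝ, |w| < δ → f w = 0) →
      Tendsto (fun N : ℕ => v N * ∫ ω, f (EN N ω) ∂P) atTop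
        (𝓝 (∫ w in Ioi (-1 : ℝ), f w ∂νE))) :
    ∀ ℓ : ℝ, 1 ≤ ℓ →
      Tendsto (fun N : ℕ => v N * ∫ ω, (1 - Real.exp (-ℓ * EN N ω)) ∂P) atTop
        (𝓝 (αE * ℓ - 1 / 2 * σE ^ 2 * ℓ ^ 2 +
          ∫ w in Ioi (-1 : ℝ), (1 - Real.exp (-ℓ * w) - ℓ * hE w) ∂νE)) := by
  intro ℓ hℓ
  have hid : hE =ᶠ[𝓝 0] id := by
    obtain ⟨δ, hδ, hδid⟩ := hEid
    exact Metric.eventually_nhds_iff.mpr ⟨δ, hδ, fun w hw => hδid w (by simpa using hw)⟩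
  have hsq_bdd : ∃ M : ℝ, ∀ w ∈ Ioi (-1 : ℝ), |hE w ^ 2| ≤ M := by
    obtain ⟨M, hM⟩ := hEbdd
    exact ⟨M ^ 2, fun w hw => by rw [abs_pow]; exact pow_le_pow_left₀ (abs_nonneg _) (hM w hw) 2⟩
  have hsq_O : (fun w => hE w ^ 2) =O[𝓝 0] fun w => w ^ 2 :=
    (isBigO_refl _ _).congr' (hid.fun_comp (· ^ 2)).symm .rfl
  have hR_o := expRemainder_isLittleO (ℓ := ℓ) hid
  have hR_bdd := exists_abs_expRemainder_le (zero_le_one.trans hℓ) hEbdd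
  have hsqν := integrableOn_of_isBigO_sq measurableSet_Ioi hνEint (hEcont.pow 2) hsq_bdd hsq_O
  have hRν := integrableOn_of_isBigO_sq measurableSet_Ioi hνEint (continuousOn_expRemainder hEcont)
    hR_bdd (hR_o.isBigO.trans hsq_O)
  have hR := tendsto_mul_integral_of_isLittleO measurableSet_Ioi hENmeas hENval
    (fun N => (hvpos N).le) hA3 (continuousOn_expRemainder hEcont) hR_bdd hRν
    (fun w _ => sq_nonneg _)
    (fun N => (hEcont.pow 2).integrable_comp hsq_bdd (hENmeas N) (hENval N)) hsqν
    hA2.isBoundedUnder_le hR_o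
  have hΩ : ∀ N, ∫ ω, (1 - Real.exp (-ℓ * EN N ω)) ∂P = ℓ * ∫ ω, hE (EN N ω) ∂P
      - ℓ ^ 2 / 2 * ∫ ω, hE (EN N ω) ^ 2 ∂P + ∫ ω, expRemainder hE ℓ (EN N ω) ∂P := fun N =>
    integral_one_sub_exp_neg_mul_eq (hEcont.integrable_comp hEbdd (hENmeas N) (hENval N))
      ((hEcont.pow 2).integrable_comp hsq_bdd (hENmeas N) (hENval N))
      ((continuousOn_expRemainder hEcont).integrable_comp hR_bdd (hENmeas N) (hENval N))
  subst hβE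
  simp_rw [hΩ, integral_one_sub_exp_neg_mul_sub_eq hsqν hRν]
  convert ((hA1.const_mul ℓ).sub (hA2.const_mul (ℓ ^ 2 / 2))).add hR using 2 <;> ring

/-- Under Assumption A1, `v_N · E[1 - e^{-ℓ Eᴺ}] → γ_ℓ^E` for every `ℓ ≥ 1`. -/
theorem stmt9 {Ω : Type*} [MeasurableSpace Ω] (P : Measure Ω) [IsProbabilityMeasure P]
    (EN : ℕ → Ω → ℝ) (hENmeas : ∀ N, Measurable (EN N))
    (hENval : ∀ N ω, -1 < EN N ω)
    (v : ℕ → ℝ) (hvpos : ∀ N, 0 < v N) (hvtop : Tendsto v atTop atTop)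
    -- truncation function h_E on (-1, ∞)
    (hE : ℝ → ℝ) (hEcont : ContinuousOn hE (Ioi (-1)))
    (hEbdd : ∃ M : ℝ, ∀ w ∈ Ioi (-1 : ℝ), |hE w| ≤ M)
    (hEid : ∃ δ > (0 : ℝ), ∀ w : ℝ, |w| < δ → hE w = w)
    (hEne : ∀ w ∈ Ioi (-1 : ℝ), w ≠ 0 → hE w ≠ 0)
    -- Assumption A1
    (αE σE : ℝ) (hσE : 0 ≤ σE)
    (νE : Measure ℝ) (hνE0 : νE (Iic (-1)) = 0)
    (hνEint : IntegrableOn (fun w => min (w ^ 2) 1) (Ioi (-1)) νE)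
    (βE : ℝ) (hβE : βE = σE ^ 2 + ∫ w in Ioi (-1 : ℝ), hE w ^ 2 ∂νE)
    (hA1 : Tendsto (fun N : ℕ => v N * ∫ ω, hE (EN N ω) ∂P) atTop (𝓝 αE))
    (hA2 : Tendsto (fun N : ℕ => v N * ∫ ω, hE (EN N ω) ^ 2 ∂P) atTop (𝓝 βE))
    (hA3 : ∀ f : ℝ → ℝ, ContinuousOn f (Ioi (-1)) →
      (∃ M : ℝ, ∀ w ∈ Ioi (-1 : ℝ), |f w| ≤ M) →
      (∃ δ > (0 : ℝ), ∀ w : ℝ, |w| < δ → f w = 0) →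
      Tendsto (fun N : ℕ => v N * ∫ ω, f (EN N ω) ∂P) atTop
        (𝓝 (∫ w in Ioi (-1 : ℝ), f w ∂νE))) :
    ∀ ℓ : ℝ, 1 ≤ ℓ →
      Tendsto (fun N : ℕ => v N * ∫ ω, (1 - Real.exp (-ℓ * EN N ω)) ∂P) atTop
        (𝓝 (αE * ℓ - 1 / 2 * σE ^ 2 * ℓ ^ 2 +
          ∫ w in Ioi (-1 : ℝ), (1 - Real.exp (-ℓ * w) - ℓ * hE w) ∂νE)) :=
  stmt9_general P EN hENmeas hENval v hvpos hE hEcont hEbdd hEid αE σE νE hνEint βE hβE hA1 hA2 hA3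
end

section
/- Let g : [0,∞) → ℝ be any function. For every integer k ≥ 3 and all reals z ≥ 0, ℓ ≥ 0, the functions w ↦ e^{−ℓw}(1 − e^{−zw})^k and r ↦ (1 − e^{−r})^k are integrable with respect to ν_E and ν_D respectively, and Σ_{j=0}^{k} C(k,j) (−1)^{k−j} ( −j z g(z) − γ_j^D z + γ_ℓ^E − γ_{jz+ℓ}^E ) = (−1)^k ( ∫_{(−1,∞)} e^{−ℓ w} (1 − e^{−z w})^k dν_E(w) + z ∫_{(0,∞)} (1 − e^{−r})^k dν_D(r) ). -/
/-!
The weights `C(k,j) (-1)^(k-j)` compute the `k`-th forward difference at `0`: they annihilate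
polynomials in `j` of degree `< k` and send `x ^ j` to `(x - 1) ^ k`. After expanding `γ`, the
Gaussian and drift parts are quadratic in `j`, hence vanish for `k ≥ 3`, and in the jump part the
integrand `1 - e^{-(jz+ℓ)w} - (jz+ℓ) h(w)` is affine in `j` plus `e^{-ℓw} (e^{-zw})^j`, so the
weighted sum of integrands is `-(-1)^k e^{-ℓw} (1 - e^{-zw})^k`. Exchanging the finite sum with the
integral is legitimate because every integrand involved is `O(w²)` near `0` and bounded, hence
dominated by a multiple of `min(w², 1)`. The `D`-terms are the case `z = 1`, `ℓ = 0`.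
-/

open MeasureTheory Set Real

section CommRing

variable {R : Type*} [CommRing R]

theorem sum_range_choose_mul_neg_one_pow_mul_pow (k : ℕ) (x : R) :
    ∑ j ∈ Finset.range (k + 1), (k.choose j : R) * (-1) ^ (k - j) * x ^ j = (x - 1) ^ k := by
  rw [sub_eq_add_neg, add_pow]
  exact Finset.sum_congr rfl fun j _ => by ring

theorem sum_range_choose_mul_neg_one_pow_mul_cast_pow {k m : ℕ} (hmk : m < k) :
    ∑ j ∈ Finset.range (k + 1), (k.choose j : R) * (-1) ^ (k - j) * (j : R) ^ m = 0 := by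
  have h := congr_fun (fwdDiff_iter_pow_eq_zero_of_lt (R := R) hmk) 0
  rw [fwdDiff_iter_eq_sum_shift, Pi.zero_apply] at h
  rw [← h]
  refine Finset.sum_congr rfl fun j _ => ?_
  simp only [zero_add, nsmul_eq_mul, mul_one, zsmul_eq_mul]
  push_cast
  ring

theorem sum_range_choose_mul_neg_one_pow_mul_quadratic {k : ℕ} (hk : 3 ≤ k) (a b c : R) :
    ∑ j ∈ Finset.range (k + 1), (k.choose j : R) * (-1) ^ (k - j) * (a + b * j + c * j ^ 2)
      = 0 := by
  have h0 := sum_range_choose_mul_neg_one_pow_mul_cast_pow (R := R) (k := k) (m := 0) (by omega)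
  have h1 := sum_range_choose_mul_neg_one_pow_mul_cast_pow (R := R) (k := k) (m := 1) (by omega)
  have h2 := sum_range_choose_mul_neg_one_pow_mul_cast_pow (R := R) (k := k) (m := 2) (by omega)
  calc _ = a * ∑ j ∈ Finset.range (k + 1), (k.choose j : R) * (-1) ^ (k - j) * (j : R) ^ 0
        + b * ∑ j ∈ Finset.range (k + 1), (k.choose j : R) * (-1) ^ (k - j) * (j : R) ^ 1
        + c * ∑ j ∈ Finset.range (k + 1), (k.choose j : R) * (-1) ^ (k - j) * (j : R) ^ 2 := by
        simp only [Finset.mul_sum, ← Finset.sum_add_distrib]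
        exact Finset.sum_congr rfl fun j _ => by ring
    _ = 0 := by rw [h0, h1, h2]; ring

end CommRing

theorem sum_range_choose_mul_neg_one_pow_mul_levyIntegrand {k : ℕ} (hk : 2 ≤ k)
    (z ℓ w t : ℝ) :
    ∑ j ∈ Finset.range (k + 1), (k.choose j : ℝ) * (-1) ^ (k - j) *
        (1 - exp (-((j : ℝ) * z + ℓ) * w) - ((j : ℝ) * z + ℓ) * t)
      = -(-1) ^ k * (exp (-ℓ * w) * (1 - exp (-z * w)) ^ k) := by
  have h0 := sum_range_choose_mul_neg_one_pow_mul_cast_pow (R := ℝ) (k := k) (m := 0) (by omega)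
  have h1 := sum_range_choose_mul_neg_one_pow_mul_cast_pow (R := ℝ) (k := k) (m := 1) (by omega)
  have hexp := sum_range_choose_mul_neg_one_pow_mul_pow k (exp (-z * w))
  have hsplit : ∀ j : ℕ, exp (-((j : ℝ) * z + ℓ) * w) = exp (-ℓ * w) * exp (-z * w) ^ j := by
    intro j
    rw [← exp_nat_mul, ← exp_add]
    ring_nf
  calc _ = (1 - ℓ * t) *
            ∑ j ∈ Finset.range (k + 1), (k.choose j : ℝ) * (-1) ^ (k - j) * (j : ℝ) ^ 0
        - z * t * ∑ j ∈ Finset.range (k + 1), (k.choose j : ℝ) * (-1) ^ (k - j) * (j : ℝ) ^ 1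
        - exp (-ℓ * w) * ∑ j ∈ Finset.range (k + 1),
            (k.choose j : ℝ) * (-1) ^ (k - j) * exp (-z * w) ^ j := by
        simp only [Finset.mul_sum, ← Finset.sum_sub_distrib, hsplit]
        exact Finset.sum_congr rfl fun j _ => by ring
    _ = _ := by rw [h0, h1, hexp, ← neg_sub 1, neg_pow]; ring

theorem integrableOn_of_abs_le_sq_of_abs_le {ν : Measure ℝ} {s : Set ℝ} (hs : MeasurableSet s)
    (hν : IntegrableOn (fun w => min (w ^ 2) 1) s ν) {f : ℝ → ℝ}
    (hf : AEStronglyMeasurable f (ν.restrict s)) {δ A B : ℝ} (hδ : 0 < δ)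
    (hnear : ∀ w ∈ s, |w| < δ → |f w| ≤ A * w ^ 2) (hbdd : ∀ w ∈ s, |f w| ≤ B) :
    IntegrableOn f s ν := by
  set ε := min δ 1
  have hε : 0 < ε := lt_min hδ one_pos
  have hbound : ∀ w ∈ s, |f w| ≤ (|A| + |B| / ε ^ 2) * min (w ^ 2) 1 := by
    intro w hw
    have hmin : 0 ≤ min (w ^ 2) 1 := le_min (sq_nonneg w) zero_le_one
    have hB : 0 ≤ |B| / ε ^ 2 * min (w ^ 2) 1 := by positivity
    rcases lt_or_ge |w| ε with hsmall | hlarge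
    · have hw1 : w ^ 2 ≤ 1 := by
        rw [← sq_abs]; nlinarith [abs_nonneg w, min_le_right δ 1]
      rw [min_eq_left hw1]
      calc |f w| ≤ A * w ^ 2 := hnear w hw (hsmall.trans_le (min_le_left _ _))
        _ ≤ |A| * w ^ 2 := by gcongr; exact le_abs_self A
        _ ≤ _ := by rw [add_mul]; linarith [min_eq_left hw1 ▸ hB]
    · have hε2 : ε ^ 2 ≤ min (w ^ 2) 1 :=
        le_min ((pow_le_pow_left₀ hε.le hlarge 2).trans_eq (sq_abs w))
          (pow_le_one₀ hε.le (min_le_right _ _))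
      calc |f w| ≤ |B| := (hbdd w hw).trans (le_abs_self B)
        _ = |B| / ε ^ 2 * ε ^ 2 := by field_simp
        _ ≤ |B| / ε ^ 2 * min (w ^ 2) 1 := by gcongr
        _ ≤ _ := by rw [add_mul]; linarith [mul_nonneg (abs_nonneg A) hmin]
  refine Integrable.mono' (hν.const_mul (|A| + |B| / ε ^ 2)) hf
    ((ae_restrict_iff' hs).mpr (ae_of_all _ fun w hw => ?_))
  exact (Real.norm_eq_abs _).trans_le (hbound w hw)

theorem exp_neg_mul_le_exp {x w : ℝ} (hx : 0 ≤ x) (hw : -1 < w) : exp (-x * w) ≤ exp x :=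
  exp_le_exp.mpr (by nlinarith)

theorem integrableOn_levyIntegrand {ν : Measure ℝ} {s : Set ℝ} (hs : MeasurableSet s)
    (hs₁ : s ⊆ Ioi (-1)) (hν : IntegrableOn (fun w => min (w ^ 2) 1) s ν) {h : ℝ → ℝ}
    (hcont : ContinuousOn h s) {M : ℝ} (hM : ∀ w ∈ s, |h w| ≤ M) {δ : ℝ} (hδ : 0 < δ)
    (hid : ∀ w ∈ s, |w| < δ → h w = w) {x : ℝ} (hx : 0 ≤ x) :
    IntegrableOn (fun w => 1 - exp (-x * w) - x * h w) s ν := by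
  have hmeas : AEStronglyMeasurable (fun w => 1 - exp (-x * w) - x * h w) (ν.restrict s) :=
    ((continuousOn_const.sub (by fun_prop)).sub (continuousOn_const.mul hcont)).aestronglyMeasurable
      hs
  refine integrableOn_of_abs_le_sq_of_abs_le hs hν hmeas (δ := min δ (1 / (x + 1)))
    (A := x ^ 2) (B := 1 + exp x + x * M) (lt_min hδ (by positivity)) ?_ ?_
  · intro w hw hwδ
    rw [hid w hw (hwδ.trans_le (min_le_left _ _))]
    have hxw : |-x * w| ≤ 1 := by
      have hw' : |w| * (x + 1) ≤ 1 :=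
        (le_div_iff₀ (by positivity)).mp (hwδ.trans_le (min_le_right _ _)).le
      rw [abs_mul, abs_neg, abs_of_nonneg hx]; nlinarith [abs_nonneg w]
    calc |1 - exp (-x * w) - x * w| = |exp (-x * w) - 1 - (-x * w)| := by
          rw [← abs_neg]; ring_nf
      _ ≤ (-x * w) ^ 2 := abs_exp_sub_one_sub_id_le hxw
      _ = x ^ 2 * w ^ 2 := by ring
  · intro w hw
    have he := exp_neg_mul_le_exp hx (hs₁ hw)
    have hxh : |x * h w| ≤ x * M := by
      rw [abs_mul, abs_of_nonneg hx]; exact mul_le_mul_of_nonneg_left (hM w hw) hx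
    calc |1 - exp (-x * w) - x * h w| ≤ |1 - exp (-x * w)| + |x * h w| := abs_sub _ _
      _ ≤ 1 + exp x + x * M := by
        refine add_le_add ?_ hxh
        rw [abs_le]; constructor <;> linarith [exp_pos (-x * w)]

theorem integrableOn_exp_mul_one_sub_exp_pow {ν : Measure ℝ} {s : Set ℝ} (hs : MeasurableSet s)
    (hs₁ : s ⊆ Ioi (-1)) (hν : IntegrableOn (fun w => min (w ^ 2) 1) s ν) {k : ℕ} (hk : 2 ≤ k)
    {z ℓ : ℝ} (hz : 0 ≤ z) (hℓ : 0 ≤ ℓ) :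
    IntegrableOn (fun w => exp (-ℓ * w) * (1 - exp (-z * w)) ^ k) s ν := by
  have hmeas : AEStronglyMeasurable (fun w => exp (-ℓ * w) * (1 - exp (-z * w)) ^ k)
      (ν.restrict s) := by fun_prop
  refine integrableOn_of_abs_le_sq_of_abs_le hs hν hmeas (δ := 1 / (2 * z + 1))
    (A := exp ℓ * (2 * z) ^ 2) (B := exp ℓ * (1 + exp z) ^ k) (by positivity) ?_ ?_
  · intro w hw hwδ
    have hw' : |w| * (2 * z + 1) ≤ 1 := (le_div_iff₀ (by positivity)).mp hwδ.le
    have hzw : 2 * z * |w| ≤ 1 := by nlinarith [abs_nonneg w]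
    have hsub : |1 - exp (-z * w)| ≤ 2 * z * |w| := by
      rw [abs_sub_comm]
      calc |exp (-z * w) - 1| ≤ 2 * |-z * w| :=
            abs_exp_sub_one_le (by
              rw [abs_mul, abs_neg, abs_of_nonneg hz]; nlinarith [abs_nonneg w])
        _ = 2 * z * |w| := by rw [abs_mul, abs_neg, abs_of_nonneg hz]; ring
    calc |exp (-ℓ * w) * (1 - exp (-z * w)) ^ k|
        = exp (-ℓ * w) * |1 - exp (-z * w)| ^ k := by
          rw [abs_mul, abs_pow, abs_of_pos (exp_pos _)]
      _ ≤ exp ℓ * |1 - exp (-z * w)| ^ 2 :=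
          mul_le_mul (exp_neg_mul_le_exp hℓ (hs₁ hw))
            (pow_le_pow_of_le_one (abs_nonneg _) (hsub.trans hzw) hk)
            (by positivity) (by positivity)
      _ ≤ exp ℓ * (2 * z * |w|) ^ 2 := by gcongr
      _ = exp ℓ * (2 * z) ^ 2 * w ^ 2 := by rw [mul_pow, sq_abs]; ring
  · intro w hw
    rw [abs_mul, abs_pow, abs_of_pos (exp_pos _)]
    refine mul_le_mul (exp_neg_mul_le_exp hℓ (hs₁ hw)) (pow_le_pow_left₀ (abs_nonneg _) ?_ k)
      (by positivity) (by positivity)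
    rw [abs_le]; constructor <;> linarith [exp_pos (-z * w), exp_neg_mul_le_exp hz (hs₁ hw)]

theorem sum_range_choose_mul_neg_one_pow_mul_integral_levyIntegrand {ν : Measure ℝ} {s : Set ℝ}
    {h : ℝ → ℝ} {k : ℕ} (hk : 2 ≤ k) (z ℓ : ℝ)
    (hint : ∀ j ∈ Finset.range (k + 1),
      IntegrableOn (fun w => 1 - exp (-((j : ℝ) * z + ℓ) * w) - ((j : ℝ) * z + ℓ) * h w) s ν) :
    ∑ j ∈ Finset.range (k + 1), (k.choose j : ℝ) * (-1) ^ (k - j) *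
        ∫ w in s, (1 - exp (-((j : ℝ) * z + ℓ) * w) - ((j : ℝ) * z + ℓ) * h w) ∂ν
      = -(-1) ^ k * ∫ w in s, exp (-ℓ * w) * (1 - exp (-z * w)) ^ k ∂ν := by
  simp_rw [← integral_const_mul]
  rw [← integral_finsetSum _ fun j hj => (hint j hj).const_mul _]
  simp_rw [sum_range_choose_mul_neg_one_pow_mul_levyIntegrand hk]

theorem sum_range_choose_mul_neg_one_pow_mul_levyExponent {ν : Measure ℝ} {s : Set ℝ}
    {h : ℝ → ℝ} {α σ : ℝ} {γ : ℝ → ℝ}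
    (hγ : ∀ x : ℝ, γ x = α * x - 1 / 2 * σ ^ 2 * x ^ 2 +
      ∫ w in s, (1 - exp (-x * w) - x * h w) ∂ν)
    {k : ℕ} (hk : 3 ≤ k) (z ℓ : ℝ)
    (hint : ∀ j ∈ Finset.range (k + 1),
      IntegrableOn (fun w => 1 - exp (-((j : ℝ) * z + ℓ) * w) - ((j : ℝ) * z + ℓ) * h w) s ν) :
    ∑ j ∈ Finset.range (k + 1), (k.choose j : ℝ) * (-1) ^ (k - j) * γ ((j : ℝ) * z + ℓ)
      = -(-1) ^ k * ∫ w in s, exp (-ℓ * w) * (1 - exp (-z * w)) ^ k ∂ν := by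
  have hquad := sum_range_choose_mul_neg_one_pow_mul_quadratic (R := ℝ) hk
    (α * ℓ - 1 / 2 * σ ^ 2 * ℓ ^ 2) (α * z - σ ^ 2 * z * ℓ) (-(1 / 2 * σ ^ 2 * z ^ 2))
  rw [← sum_range_choose_mul_neg_one_pow_mul_integral_levyIntegrand (by omega) z ℓ hint,
    ← sub_eq_zero, ← Finset.sum_sub_distrib, ← hquad]
  refine Finset.sum_congr rfl fun j _ => ?_
  rw [hγ]
  ring

theorem stmt13_general
    -- truncation function h_E on (-1, ∞) and Lévy triplet of the environment
    (hE : ℝ → ℝ) (hEcont : ContinuousOn hE (Ioi (-1 : ℝ)))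
    (hEbdd : ∃ M : ℝ, ∀ w ∈ Ioi (-1 : ℝ), |hE w| ≤ M)
    (hEid : ∃ δ > (0 : ℝ), ∀ w : ℝ, |w| < δ → hE w = w)
    (αE σE : ℝ)
    (νE : Measure ℝ) (hνEint : IntegrableOn (fun w => min (w ^ 2) 1) (Ioi (-1)) νE)
    -- truncation function h_D on (0, ∞) and Lévy triplet of the demography
    (hD : ℝ → ℝ) (hDcont : ContinuousOn hD (Ioi (0 : ℝ)))
    (hDbdd : ∃ M : ℝ, ∀ r ∈ Ioi (0 : ℝ), |hD r| ≤ M)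
    (hDid : ∃ δ > (0 : ℝ), ∀ r ∈ Ioo (0 : ℝ) δ, hD r = r)
    (αD σD : ℝ)
    (νD : Measure ℝ) (hνDint : IntegrableOn (fun r => min (r ^ 2) 1) (Ioi 0) νD)
    -- the γ functions
    (γE γD : ℝ → ℝ)
    (hγE : ∀ x : ℝ, γE x = αE * x - 1 / 2 * σE ^ 2 * x ^ 2 +
      ∫ w in Ioi (-1 : ℝ), (1 - Real.exp (-x * w) - x * hE w) ∂νE)
    (hγD : ∀ x : ℝ, γD x = αD * x - 1 / 2 * σD ^ 2 * x ^ 2 +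
      ∫ r in Ioi (0 : ℝ), (1 - Real.exp (-x * r) - x * hD r) ∂νD)
    -- interaction function
    (g : ℝ → ℝ)
    (k : ℕ) (hk : 3 ≤ k) (z : ℝ) (hz : 0 ≤ z) (ℓ : ℝ) (hℓ : 0 ≤ ℓ) :
    IntegrableOn (fun w => Real.exp (-ℓ * w) * (1 - Real.exp (-z * w)) ^ k)
      (Ioi (-1)) νE ∧
    IntegrableOn (fun r => (1 - Real.exp (-r)) ^ k) (Ioi 0) νD ∧
    (∑ j ∈ Finset.range (k + 1), (k.choose j : ℝ) * (-1 : ℝ) ^ (k - j) *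
        (-(j : ℝ) * z * g z - γD (j : ℝ) * z + γE ℓ - γE ((j : ℝ) * z + ℓ))) =
      (-1 : ℝ) ^ k *
        ((∫ w in Ioi (-1 : ℝ), Real.exp (-ℓ * w) * (1 - Real.exp (-z * w)) ^ k ∂νE) +
          z * ∫ r in Ioi (0 : ℝ), (1 - Real.exp (-r)) ^ k ∂νD) := by
  obtain ⟨ME, hME⟩ := hEbdd
  obtain ⟨δE, hδE, hidE⟩ := hEid
  obtain ⟨MD, hMD⟩ := hDbdd
  obtain ⟨δD, hδD, hidD⟩ := hDid
  have hsubD : Ioi (0 : ℝ) ⊆ Ioi (-1) := Ioi_subset_Ioi (by norm_num)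
  have hintE : ∀ x : ℝ, 0 ≤ x →
      IntegrableOn (fun w => 1 - Real.exp (-x * w) - x * hE w) (Ioi (-1)) νE :=
    fun x hx => integrableOn_levyIntegrand measurableSet_Ioi subset_rfl hνEint hEcont hME hδE
      (fun w _ hw => hidE w hw) hx
  have hintD : ∀ x : ℝ, 0 ≤ x →
      IntegrableOn (fun r => 1 - Real.exp (-x * r) - x * hD r) (Ioi 0) νD :=
    fun x hx => integrableOn_levyIntegrand measurableSet_Ioi hsubD hνDint hDcont hMD hδD
      (fun r hr hrδ => hidD r ⟨hr, (le_abs_self r).trans_lt hrδ⟩) hx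
  refine ⟨integrableOn_exp_mul_one_sub_exp_pow measurableSet_Ioi subset_rfl hνEint
    (by omega) hz hℓ, ?_, ?_⟩
  · simpa using integrableOn_exp_mul_one_sub_exp_pow (ℓ := 0) (z := 1) measurableSet_Ioi hsubD
      hνDint (k := k) (by omega) zero_le_one le_rfl
  have hsumE := sum_range_choose_mul_neg_one_pow_mul_levyExponent hγE hk z ℓ
    fun j _ => hintE _ (by positivity)
  have hsumD := sum_range_choose_mul_neg_one_pow_mul_levyExponent hγD hk 1 0
    fun j _ => hintD _ (by positivity)
  simp only [mul_one, add_zero, neg_zero, zero_mul, Real.exp_zero, one_mul, neg_one_mul]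
    at hsumD
  have hlinear := sum_range_choose_mul_neg_one_pow_mul_quadratic (R := ℝ) hk (γE ℓ) (-z * g z) 0
  have hsplit : ∀ j ∈ Finset.range (k + 1), (k.choose j : ℝ) * (-1) ^ (k - j) *
        (-(j : ℝ) * z * g z - γD (j : ℝ) * z + γE ℓ - γE ((j : ℝ) * z + ℓ))
      = (k.choose j : ℝ) * (-1) ^ (k - j) * (γE ℓ + -z * g z * j + 0 * (j : ℝ) ^ 2)
        - z * ((k.choose j : ℝ) * (-1) ^ (k - j) * γD j)
        - (k.choose j : ℝ) * (-1) ^ (k - j) * γE ((j : ℝ) * z + ℓ) :=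
    fun j _ => by ring
  rw [Finset.sum_congr rfl hsplit, Finset.sum_sub_distrib, Finset.sum_sub_distrib,
    ← Finset.mul_sum, hlinear, hsumD, hsumE]
  ring

/-- Identity (4.18) for `k ≥ 3`: the alternating binomial sum of the limiting
characteristics reduces to the jump integrals. -/
theorem stmt13
    -- truncation function h_E on (-1, ∞) and Lévy triplet of the environment
    (hE : ℝ → ℝ) (hEcont : ContinuousOn hE (Ioi (-1 : ℝ)))
    (hEbdd : ∃ M : ℝ, ∀ w ∈ Ioi (-1 : ℝ), |hE w| ≤ M)
    (hEid : ∃ δ > (0 : ℝ), ∀ w : ℝ, |w| < δ → hE w = w)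
    (αE σE : ℝ) (hσE : 0 ≤ σE)
    (νE : Measure ℝ) (hνEint : IntegrableOn (fun w => min (w ^ 2) 1) (Ioi (-1)) νE)
    -- truncation function h_D on (0, ∞) and Lévy triplet of the demography
    (hD : ℝ → ℝ) (hDcont : ContinuousOn hD (Ioi (0 : ℝ)))
    (hDbdd : ∃ M : ℝ, ∀ r ∈ Ioi (0 : ℝ), |hD r| ≤ M)
    (hDid : ∃ δ > (0 : ℝ), ∀ r ∈ Ioo (0 : ℝ) δ, hD r = r)
    (αD σD : ℝ) (hσD : 0 ≤ σD)
    (νD : Measure ℝ) (hνDint : IntegrableOn (fun r => min (r ^ 2) 1) (Ioi 0) νD)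
    -- the γ functions
    (γE γD : ℝ → ℝ)
    (hγE : ∀ x : ℝ, γE x = αE * x - 1 / 2 * σE ^ 2 * x ^ 2 +
      ∫ w in Ioi (-1 : ℝ), (1 - Real.exp (-x * w) - x * hE w) ∂νE)
    (hγD : ∀ x : ℝ, γD x = αD * x - 1 / 2 * σD ^ 2 * x ^ 2 +
      ∫ r in Ioi (0 : ℝ), (1 - Real.exp (-x * r) - x * hD r) ∂νD)
    -- interaction function
    (g : ℝ → ℝ)
    (k : ℕ) (hk : 3 ≤ k) (z : ℝ) (hz : 0 ≤ z) (ℓ : ℝ) (hℓ : 0 ≤ ℓ) :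
    IntegrableOn (fun w => Real.exp (-ℓ * w) * (1 - Real.exp (-z * w)) ^ k)
      (Ioi (-1)) νE ∧
    IntegrableOn (fun r => (1 - Real.exp (-r)) ^ k) (Ioi 0) νD ∧
    (∑ j ∈ Finset.range (k + 1), (k.choose j : ℝ) * (-1 : ℝ) ^ (k - j) *
        (-(j : ℝ) * z * g z - γD (j : ℝ) * z + γE ℓ - γE ((j : ℝ) * z + ℓ))) =
      (-1 : ℝ) ^ k *
        ((∫ w in Ioi (-1 : ℝ), Real.exp (-ℓ * w) * (1 - Real.exp (-z * w)) ^ k ∂νE) +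
          z * ∫ r in Ioi (0 : ℝ), (1 - Real.exp (-r)) ^ k ∂νD) :=
  stmt13_general hE hEcont hEbdd hEid αE σE νE hνEint hD hDcont hDbdd hDid αD σD νD hνDint γE γD hγE
    hγD g k hk z hz ℓ hℓ
end

section
/- For every integer j ≥ 1 and every real ℓ ≥ 0: the map z ↦ γ_{jz+ℓ}^E is continuous on [0,∞), and e^{−jz} γ_{jz+ℓ}^E → 0 as z → ∞ (equivalently, e^{−jz}(γ_ℓ^E − γ_{jz+ℓ}^E) → 0 as z → ∞). -/
open MeasureTheory Set Filter Topology
open Real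

/-!
For `w > -1` and `x ≥ 0` the integrand `1 - e^{-xw} - x h(w)` is at most `K e^x min(w², 1)`:
near `w = 0`, where `h(w) = w`, by the second-order Taylor bound of `exp`, and away from `0`
because `e^{-xw} ≤ e^x` and `h` is bounded. Dominated convergence with this bound gives continuity
of the jump integral on `[0, ∞)` and, after multiplying by `e^{-x}`, its decay, since
`e^{-x}(1 - e^{-xw} - x h(w)) → 0` for each `w > -1`. The drift and Gaussian terms are polynomial,
hence `o(e^x)`.
-/
lemma abs_exp_sub_one_sub_le (u : ℝ) : |exp u - 1 - u| ≤ u ^ 2 * exp |u| := by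
  have h := Complex.norm_exp_sub_sum_le_norm_mul_exp (u : ℂ) 2
  simp only [Finset.sum_range_succ, Finset.sum_range_zero] at h
  rw [sub_sub, ← Real.norm_eq_abs, ← Complex.norm_real]
  simpa [← Complex.ofReal_exp] using h

lemma sq_le_eight_mul_exp_half {x : ℝ} (hx : 0 ≤ x) : x ^ 2 ≤ 8 * exp (x / 2) := by
  nlinarith [quadratic_le_exp_of_nonneg (by positivity : 0 ≤ x / 2)]

noncomputable def levyIntegrand (h : ℝ → ℝ) (x w : ℝ) : ℝ := 1 - exp (-x * w) - x * h w

section LevyIntegrand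

variable {h : ℝ → ℝ} {x w : ℝ}

lemma abs_levyIntegrand_le_of_eq (hx : 0 ≤ x) (hw : |w| ≤ 1 / 2) (hhw : h w = w) :
    |levyIntegrand h x w| ≤ 8 * exp x * w ^ 2 := by
  have hxw : |x * w| ≤ x / 2 := by
    rw [abs_mul, abs_of_nonneg hx]; nlinarith
  calc |levyIntegrand h x w| = |exp (-(x * w)) - 1 - -(x * w)| := by
        rw [levyIntegrand, hhw, ← abs_neg]; ring_nf
    _ ≤ (x * w) ^ 2 * exp (x / 2) := by
        refine (abs_exp_sub_one_sub_le _).trans ?_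
        rw [abs_neg, neg_sq]
        gcongr
    _ = x ^ 2 * exp (x / 2) * w ^ 2 := by ring
    _ ≤ 8 * exp (x / 2) * exp (x / 2) * w ^ 2 := by
        gcongr; exact sq_le_eight_mul_exp_half hx
    _ = 8 * exp x * w ^ 2 := by rw [mul_assoc 8, ← exp_add, add_halves]

lemma abs_levyIntegrand_le_of_abs_le {M : ℝ} (hx : 0 ≤ x) (hw : -1 < w) (hM : |h w| ≤ M) :
    |levyIntegrand h x w| ≤ (2 + M) * exp x := by
  have hexp : exp (-x * w) ≤ exp x := exp_le_exp.2 (by nlinarith)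
  have hxM : x * |h w| ≤ exp x * M :=
    mul_le_mul (by linarith [add_one_le_exp x]) hM (abs_nonneg _) (exp_pos x).le
  calc |levyIntegrand h x w| ≤ |1 - exp (-x * w)| + |x * h w| := abs_sub _ _
    _ ≤ (1 + exp (-x * w)) + x * |h w| := by
        gcongr
        · exact (abs_sub _ _).trans_eq (by rw [abs_one, abs_of_pos (exp_pos _)])
        · rw [abs_mul, abs_of_nonneg hx]
    _ ≤ (2 + M) * exp x := by nlinarith [one_le_exp hx]

lemma exists_abs_levyIntegrand_le (hbdd : ∃ M : ℝ, ∀ w ∈ Ioi (-1 : ℝ), |h w| ≤ M)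
    (hid : ∃ δ > (0 : ℝ), ∀ w : ℝ, |w| < δ → h w = w) :
    ∃ K : ℝ, ∀ x : ℝ, 0 ≤ x → ∀ w ∈ Ioi (-1 : ℝ),
      |levyIntegrand h x w| ≤ K * exp x * min (w ^ 2) 1 := by
  obtain ⟨M, hM⟩ := hbdd
  obtain ⟨δ, hδ, hid⟩ := hid
  set ε := min δ (1 / 2)
  have hε : 0 < ε := lt_min hδ one_half_pos
  refine ⟨max 8 ((2 + M) / ε ^ 2), fun x hx w hw => ?_⟩
  rcases lt_or_ge |w| ε with hsmall | hlarge
  · have hw2 : min (w ^ 2) 1 = w ^ 2 := by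
      refine min_eq_left ?_
      nlinarith [sq_abs w, abs_nonneg w, min_le_right δ (1 / 2 : ℝ)]
    rw [hw2]
    calc |levyIntegrand h x w|
        ≤ 8 * exp x * w ^ 2 :=
          abs_levyIntegrand_le_of_eq hx (hsmall.le.trans (min_le_right _ _))
            (hid w (hsmall.trans_le (min_le_left _ _)))
      _ ≤ max 8 ((2 + M) / ε ^ 2) * exp x * w ^ 2 := by gcongr; exact le_max_left _ _
  · have hεw : ε ^ 2 ≤ min (w ^ 2) 1 := by
      refine le_min ?_ ?_
      · nlinarith [sq_abs w]
      · nlinarith [min_le_right δ (1 / 2 : ℝ)]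
    calc |levyIntegrand h x w| ≤ (2 + M) * exp x := abs_levyIntegrand_le_of_abs_le hx hw (hM w hw)
      _ = (2 + M) / ε ^ 2 * exp x * ε ^ 2 := by field_simp
      _ ≤ max 8 ((2 + M) / ε ^ 2) * exp x * min (w ^ 2) 1 := by
        gcongr
        exact le_max_right _ _

lemma aestronglyMeasurable_levyIntegrand {μ : Measure ℝ} (hmeas : AEStronglyMeasurable h μ)
    (x : ℝ) : AEStronglyMeasurable (levyIntegrand h x) μ := by
  unfold levyIntegrand
  fun_prop

lemma continuous_levyIntegrand_left (w : ℝ) : Continuous fun x => levyIntegrand h x w := by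
  unfold levyIntegrand
  fun_prop

lemma tendsto_exp_neg_mul_levyIntegrand (hw : -1 < w) :
    Tendsto (fun x => exp (-x) * levyIntegrand h x w) atTop (𝓝 0) := by
  have hsplit : (fun x => exp (-x) * levyIntegrand h x w) =
      fun x => exp (-x) - exp (-((1 + w) * x)) - h w * (x * exp (-x)) := by
    funext x
    rw [levyIntegrand, show -((1 + w) * x) = -x + -x * w by ring, exp_add]
    ring
  have hexp : Tendsto (fun x : ℝ => exp (-x)) atTop (𝓝 0) := tendsto_exp_neg_atTop_nhds_zero
  have hexp' : Tendsto (fun x : ℝ => exp (-((1 + w) * x))) atTop (𝓝 0) :=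
    hexp.comp (tendsto_id.const_mul_atTop (by linarith))
  have hpow : Tendsto (fun x : ℝ => x * exp (-x)) atTop (𝓝 0) := by
    simpa using tendsto_pow_mul_exp_neg_atTop_nhds_zero 1
  rw [hsplit]
  simpa using (hexp.sub hexp').sub (hpow.const_mul (h w))

end LevyIntegrand

noncomputable def laplaceExponent (h : ℝ → ℝ) (α σ : ℝ) (ν : Measure ℝ) (x : ℝ) : ℝ :=
  α * x - 1 / 2 * σ ^ 2 * x ^ 2 + ∫ w in Ioi (-1 : ℝ), levyIntegrand h x w ∂ν

section LevyIntegral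

variable {h : ℝ → ℝ} {ν : Measure ℝ} {K : ℝ}
  (hmeas : AEStronglyMeasurable h (ν.restrict (Ioi (-1))))
  (hint : IntegrableOn (fun w => min (w ^ 2) 1) (Ioi (-1)) ν)
  (hK : ∀ x : ℝ, 0 ≤ x → ∀ w ∈ Ioi (-1 : ℝ), |levyIntegrand h x w| ≤ K * exp x * min (w ^ 2) 1)
include hmeas hint hK

lemma continuousOn_integral_levyIntegrand :
    ContinuousOn (fun x => ∫ w in Ioi (-1 : ℝ), levyIntegrand h x w ∂ν) (Ici 0) := by
  have hK0 : 0 ≤ K := by simpa [abs_nonneg] using (abs_nonneg _).trans (hK 0 le_rfl 1 (by norm_num))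
  intro x₀ _
  have hnear : ∀ᶠ x in 𝓝[Ici 0] x₀, x ∈ Icc 0 (x₀ + 1) := by
    filter_upwards [self_mem_nhdsWithin,
      mem_nhdsWithin_of_mem_nhds (Iio_mem_nhds (lt_add_one x₀))] with x hx0 hx1
    exact ⟨hx0, hx1.le⟩
  refine continuousWithinAt_of_dominated
    (bound := fun w => K * exp (x₀ + 1) * min (w ^ 2) 1)
    (Eventually.of_forall (aestronglyMeasurable_levyIntegrand hmeas)) ?_ (hint.const_mul _)
    (ae_of_all _ fun w => (continuous_levyIntegrand_left w).continuousWithinAt)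
  filter_upwards [hnear] with x hx
  rw [ae_restrict_iff' measurableSet_Ioi]
  refine ae_of_all _ fun w hw => (hK x hx.1 w hw).trans ?_
  gcongr
  exact hx.2

lemma tendsto_exp_neg_mul_integral_levyIntegrand :
    Tendsto (fun x => exp (-x) * ∫ w in Ioi (-1 : ℝ), levyIntegrand h x w ∂ν) atTop (𝓝 0) := by
  simp_rw [← integral_const_mul]
  rw [← integral_zero ℝ ℝ]
  refine tendsto_integral_filter_of_dominated_convergence (fun w => K * min (w ^ 2) 1)
    (Eventually.of_forall fun x => (aestronglyMeasurable_levyIntegrand hmeas x).const_mul _)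
    ?_ (hint.const_mul _) ?_
  · filter_upwards [eventually_ge_atTop 0] with x hx
    rw [ae_restrict_iff' measurableSet_Ioi]
    refine ae_of_all _ fun w hw => ?_
    rw [norm_mul, Real.norm_of_nonneg (exp_pos _).le, Real.norm_eq_abs]
    calc exp (-x) * |levyIntegrand h x w| ≤ exp (-x) * (K * exp x * min (w ^ 2) 1) := by
          gcongr; exact hK x hx w hw
      _ = K * (exp x * exp (-x)) * min (w ^ 2) 1 := by ring
      _ = K * min (w ^ 2) 1 := by rw [← exp_add, add_neg_cancel, exp_zero, mul_one]
  · rw [ae_restrict_iff' measurableSet_Ioi]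
    exact ae_of_all _ fun w hw => tendsto_exp_neg_mul_levyIntegrand hw

lemma continuousOn_laplaceExponent (α σ : ℝ) : ContinuousOn (laplaceExponent h α σ ν) (Ici 0) :=
  (Continuous.continuousOn (by fun_prop)).add (continuousOn_integral_levyIntegrand hmeas hint hK)

lemma tendsto_exp_neg_mul_laplaceExponent (α σ : ℝ) :
    Tendsto (fun x => exp (-x) * laplaceExponent h α σ ν x) atTop (𝓝 0) := by
  have hpow (n : ℕ) : Tendsto (fun x : ℝ => x ^ n * exp (-x)) atTop (𝓝 0) :=
    tendsto_pow_mul_exp_neg_atTop_nhds_zero n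
  have hsplit : (fun x => exp (-x) * laplaceExponent h α σ ν x) = fun x =>
      α * (x ^ 1 * exp (-x)) - 1 / 2 * σ ^ 2 * (x ^ 2 * exp (-x)) +
        exp (-x) * ∫ w in Ioi (-1 : ℝ), levyIntegrand h x w ∂ν := by
    funext x; rw [laplaceExponent]; ring
  rw [hsplit]
  simpa using ((hpow 1).const_mul α).sub ((hpow 2).const_mul _) |>.add
    (tendsto_exp_neg_mul_integral_levyIntegrand hmeas hint hK)

end LevyIntegral

lemma tendsto_exp_neg_mul_comp_affine {g : ℝ → ℝ}
    (hg : Tendsto (fun x => exp (-x) * g x) atTop (𝓝 0)) {a : ℝ} (ha : 0 < a) (b : ℝ) :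
    Tendsto (fun z => exp (-a * z) * g (a * z + b)) atTop (𝓝 0) := by
  have hlin : Tendsto (fun z => a * z + b) atTop atTop :=
    tendsto_atTop_add_const_right _ b (tendsto_id.const_mul_atTop ha)
  have hrw : (fun z => exp (-a * z) * g (a * z + b)) =
      fun z => exp b * (exp (-(a * z + b)) * g (a * z + b)) := by
    funext z
    rw [← mul_assoc, ← exp_add]
    ring_nf
  rw [hrw]
  simpa using (hg.comp hlin).const_mul (exp b)

theorem stmt15_general
    -- truncation function h_E on (-1, ∞) and Lévy triplet of the environment
    (hE : ℝ → ℝ) (hEcont : ContinuousOn hE (Ioi (-1 : ℝ)))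
    (hEbdd : ∃ M : ℝ, ∀ w ∈ Ioi (-1 : ℝ), |hE w| ≤ M)
    (hEid : ∃ δ > (0 : ℝ), ∀ w : ℝ, |w| < δ → hE w = w)
    (αE σE : ℝ)
    (νE : Measure ℝ) (hνEint : IntegrableOn (fun w => min (w ^ 2) 1) (Ioi (-1)) νE)
    (γE : ℝ → ℝ)
    (hγE : ∀ x : ℝ, γE x = αE * x - 1 / 2 * σE ^ 2 * x ^ 2 +
      ∫ w in Ioi (-1 : ℝ), (1 - Real.exp (-x * w) - x * hE w) ∂νE)
    (j : ℕ) (hj : 1 ≤ j) (ℓ : ℝ) (hℓ : 0 ≤ ℓ) :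
    ContinuousOn (fun z : ℝ => γE ((j : ℝ) * z + ℓ)) (Ici 0) ∧
    Tendsto (fun z : ℝ => Real.exp (-(j : ℝ) * z) * γE ((j : ℝ) * z + ℓ))
      atTop (𝓝 0) ∧
    Tendsto (fun z : ℝ => Real.exp (-(j : ℝ) * z) * (γE ℓ - γE ((j : ℝ) * z + ℓ)))
      atTop (𝓝 0) := by
  obtain ⟨K, hK⟩ := exists_abs_levyIntegrand_le hEbdd hEid
  have hmeas : AEStronglyMeasurable hE (νE.restrict (Ioi (-1))) :=
    hEcont.aestronglyMeasurable measurableSet_Ioi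
  have hγ : γE = laplaceExponent hE αE σE νE := funext hγE
  have hj0 : (0 : ℝ) < j := by exact_mod_cast hj
  have hdecay := tendsto_exp_neg_mul_comp_affine
    (tendsto_exp_neg_mul_laplaceExponent hmeas hνEint hK αE σE) hj0 ℓ
  subst hγ
  refine ⟨(continuousOn_laplaceExponent hmeas hνEint hK αE σE).comp (by fun_prop)
    fun z (hz : 0 ≤ z) => (by positivity : (0 : ℝ) ≤ j * z + ℓ), hdecay, ?_⟩
  have hexp : Tendsto (fun z : ℝ => exp (-(j : ℝ) * z)) atTop (𝓝 0) :=
    tendsto_exp_atBot.comp (tendsto_id.const_mul_atTop_of_neg (neg_neg_of_pos hj0))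
  simpa [mul_sub] using (hexp.mul_const (laplaceExponent hE αE σE νE ℓ)).sub hdecay

/-- Continuity of `z ↦ γ_{jz+ℓ}^E` on `[0,∞)` and vanishing of `e^{-jz} γ_{jz+ℓ}^E`
(equivalently of `e^{-jz}(γ_ℓ^E - γ_{jz+ℓ}^E)`) as `z → ∞`. -/
theorem stmt15
    -- truncation function h_E on (-1, ∞) and Lévy triplet of the environment
    (hE : ℝ → ℝ) (hEcont : ContinuousOn hE (Ioi (-1 : ℝ)))
    (hEbdd : ∃ M : ℝ, ∀ w ∈ Ioi (-1 : ℝ), |hE w| ≤ M)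
    (hEid : ∃ δ > (0 : ℝ), ∀ w : ℝ, |w| < δ → hE w = w)
    (αE σE : ℝ) (hσE : 0 ≤ σE)
    (νE : Measure ℝ) (hνEint : IntegrableOn (fun w => min (w ^ 2) 1) (Ioi (-1)) νE)
    (γE : ℝ → ℝ)
    (hγE : ∀ x : ℝ, γE x = αE * x - 1 / 2 * σE ^ 2 * x ^ 2 +
      ∫ w in Ioi (-1 : ℝ), (1 - Real.exp (-x * w) - x * hE w) ∂νE)
    (j : ℕ) (hj : 1 ≤ j) (ℓ : ℝ) (hℓ : 0 ≤ ℓ) :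
    ContinuousOn (fun z : ℝ => γE ((j : ℝ) * z + ℓ)) (Ici 0) ∧
    Tendsto (fun z : ℝ => Real.exp (-(j : ℝ) * z) * γE ((j : ℝ) * z + ℓ))
      atTop (𝓝 0) ∧
    Tendsto (fun z : ℝ => Real.exp (-(j : ℝ) * z) * (γE ℓ - γE ((j : ℝ) * z + ℓ)))
      atTop (𝓝 0) :=
  stmt15_general hE hEcont hEbdd hEid αE σE νE hνEint γE hγE j hj ℓ hℓ
end

section
/- Let U = [−1,1] × (−1,∞) and for k, ℓ ≥ 0 let H_{k,ℓ}(u,w) = 1 − e^{−k u − ℓ w}. Then for every continuous compactly supported function g : U → ℝ with g(0,0) = 0 and every ε > 0, there exist finitely many reals c_1, …, c_m and pairs (k_1,ℓ_1), …, (k_m,ℓ_m) with k_i, ℓ_i ≥ 0 such that sup_{(u,w)∈U} | g(u,w) − Σ_{i=1}^m c_i H_{k_i,ℓ_i}(u,w) | ≤ ε. -/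
/-!
The substitution `x = e^{-u}`, `y = e^{-w}` turns `e^{-ku-ℓw}` into the monomial `x^k y^ℓ` and
maps `U` into the compact rectangle `[e⁻¹, e] × [0, e]`, with `w → ∞` becoming `y → 0`. Because `g`
has compact support in `U`, it does not change when `w` is clamped to a suitable interval `[a, b]`;
after clamping, `g` read in the variables `x, y` extends continuously to the whole rectangle, and
Stone–Weierstrass approximates it by a polynomial `Q`. Since `g(0,0) = 0`, the constant `Q(1,1)` is
small, and `Q - Q(1,1) = -∑ dᵢ (1 - x^{Mᵢ} y^{Nᵢ})` is the required combination.
-/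

open Set Real MvPolynomial

theorem MvPolynomial.exists_eval_near_of_isCompact {ι : Type*} {S : Set (ι → ℝ)}
    (hS : IsCompact S) {F : (ι → ℝ) → ℝ} (hF : ContinuousOn F S) {ε : ℝ} (hε : 0 < ε) :
    ∃ P : MvPolynomial ι ℝ, ∀ q ∈ S, |F q - eval q P| < ε := by
  have : CompactSpace S := isCompact_iff_compactSpace.mp hS
  let coord : ι → C(S, ℝ) := fun i =>
    ⟨fun q => (q : ι → ℝ) i, (continuous_apply i).comp continuous_subtype_val⟩
  have hsep : (aeval (R := ℝ) coord).range.SeparatesPoints := by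
    intro p q hpq
    obtain ⟨i, hi⟩ := Function.ne_iff.mp (Subtype.coe_ne_coe.mpr hpq)
    exact ⟨coord i, ⟨coord i, ⟨X i, aeval_X _ _⟩, rfl⟩, hi⟩
  obtain ⟨⟨_, P, rfl⟩, hP⟩ := ContinuousMap.exists_mem_subalgebra_near_continuous_of_separatesPoints
    _ hsep (S.domRestrict F) hF.domRestrict ε hε
  refine ⟨P, fun q hq => ?_⟩
  have hPq : aeval coord P ⟨q, hq⟩ = eval q P := by
    rw [← ContinuousMap.evalAlgHom_apply (S := ℝ), comp_aeval_apply, ← coe_aeval_eq_eval]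
    rfl
  simpa [abs_sub_comm, hPq] using hP ⟨q, hq⟩

noncomputable def expNegCoords (p : ℝ × ℝ) : Fin 2 → ℝ := ![exp (-p.1), exp (-p.2)]

def expRect : Set (Fin 2 → ℝ) := univ.pi ![Icc (exp (-1)) (exp 1), Icc 0 (exp 1)]

lemma isCompact_expRect : IsCompact expRect :=
  isCompact_univ_pi fun i => by fin_cases i <;> exact isCompact_Icc

lemma mem_expRect {q : Fin 2 → ℝ} :
    q ∈ expRect ↔ q 0 ∈ Icc (exp (-1)) (exp 1) ∧ q 1 ∈ Icc 0 (exp 1) := by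
  simp [expRect, Fin.forall_fin_two]

lemma mapsTo_expNegCoords : MapsTo expNegCoords (Icc (-1) 1 ×ˢ Ioi (-1)) expRect := by
  rintro ⟨u, w⟩ ⟨⟨hu₁, hu₂⟩, hw⟩
  simp only [mem_Ioi] at hw
  simp only [mem_expRect, expNegCoords, Matrix.cons_val_zero, Matrix.cons_val_one, mem_Icc,
    exp_le_exp]
  exact ⟨⟨by linarith, by linarith⟩, (exp_pos _).le, by linarith⟩

lemma exists_exp_sum_eq_eval (P : MvPolynomial (Fin 2) ℝ) :
    ∃ (m : ℕ) (d k ℓ : Fin m → ℝ), (∀ i, 0 ≤ k i) ∧ (∀ i, 0 ≤ ℓ i) ∧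
      ∀ p : ℝ × ℝ, eval (expNegCoords p) P = ∑ i, d i * exp (-(k i) * p.1 - ℓ i * p.2) := by
  let e := P.support.equivFin.symm
  refine ⟨P.support.card, fun i => P.coeff (e i), fun i => (e i : Fin 2 →₀ ℕ) 0,
    fun i => (e i : Fin 2 →₀ ℕ) 1, fun i => Nat.cast_nonneg _, fun i => Nat.cast_nonneg _,
    fun p => ?_⟩
  rw [eval_eq', ← Finset.sum_coe_sort, ← Equiv.sum_comp e]
  refine Fintype.sum_congr _ _ fun i => ?_
  simp only [Fin.prod_univ_two, expNegCoords, Matrix.cons_val_zero, Matrix.cons_val_one,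
    ← exp_nat_mul, ← exp_add]
  ring_nf

lemma max_neg_log_max_exp_neg (a b w : ℝ) :
    max a (-log (max (exp (-w)) (exp (-b)))) = max a (min w b) := by
  rw [← exp_monotone.map_max, max_neg_neg, log_exp, neg_neg]

lemma exists_lt_snd_lt_of_isCompact {K : Set (ℝ × ℝ)} {c : ℝ} (hK : IsCompact K)
    (hKc : ∀ p ∈ K, c < p.2) : ∃ a b, c < a ∧ ∀ p ∈ K, a < p.2 ∧ p.2 < b := by
  have hK₂ := hK.image continuous_snd
  obtain ⟨a₀, ha₀, ha₀_le⟩ := (hK₂.insert (c + 1)).exists_isLeast (insert_nonempty _ _)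
  obtain ⟨b₀, hb₀⟩ := hK₂.bddAbove
  have hca₀ : c < a₀ := by
    rcases ha₀ with rfl | ⟨p, hp, rfl⟩
    exacts [lt_add_one c, hKc p hp]
  refine ⟨(c + a₀) / 2, b₀ + 1, by linarith, fun p hp => ⟨?_, ?_⟩⟩
  · linarith [ha₀_le (mem_insert_of_mem _ (mem_image_of_mem _ hp))]
  · linarith [hb₀ (mem_image_of_mem Prod.snd hp)]

lemma apply_max_min_snd_eq {s : Set ℝ} {K : Set (ℝ × ℝ)} {g : ℝ × ℝ → ℝ} {a b c : ℝ}
    (hca : c < a) (hK : ∀ p ∈ K, a < p.2 ∧ p.2 < b)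
    (hg : ∀ p ∈ s ×ˢ Ioi c, p ∉ K → g p = 0) {p : ℝ × ℝ} (hp : p ∈ s ×ˢ Ioi c) :
    g (p.1, max a (min p.2 b)) = g p := by
  obtain ⟨hp₁, hp₂⟩ := hp
  by_cases hw : p.2 ∈ Ioo a b
  · rw [min_eq_left hw.2.le, max_eq_right hw.1.le]
  · have hclamp : max a (min p.2 b) ∉ Ioo a b := by
      intro h
      simp only [mem_Ioo, lt_max_iff, max_lt_iff, lt_min_iff, min_lt_iff, lt_irrefl] at h hw
      grind
    have hc : max a (min p.2 b) ∈ Ioi c := lt_max_of_lt_left hca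
    rw [hg p ⟨hp₁, hp₂⟩ fun h => hw (hK p h),
      hg (p.1, max a (min p.2 b)) ⟨hp₁, hc⟩ fun h => hclamp (hK _ h)]

lemma exists_continuousOn_expRect_comp_expNegCoords {g : ℝ × ℝ → ℝ}
    (hgcont : ContinuousOn g (Icc (-1 : ℝ) 1 ×ˢ Ioi (-1 : ℝ)))
    (hgsupp : ∃ K : Set (ℝ × ℝ), IsCompact K ∧ K ⊆ Icc (-1 : ℝ) 1 ×ˢ Ioi (-1 : ℝ) ∧
      ∀ p ∈ Icc (-1 : ℝ) 1 ×ˢ Ioi (-1 : ℝ), p ∉ K → g p = 0) :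
    ∃ F : (Fin 2 → ℝ) → ℝ, ContinuousOn F expRect ∧
      ∀ p ∈ Icc (-1 : ℝ) 1 ×ˢ Ioi (-1 : ℝ), F (expNegCoords p) = g p := by
  obtain ⟨K, hK, hKU, hgK⟩ := hgsupp
  obtain ⟨a, b, ha, hKab⟩ := exists_lt_snd_lt_of_isCompact hK fun p hp => (hKU hp).2
  -- Flooring `y` at `e^{-b}` keeps `log` away from `0`; composed with `expNegCoords` it clamps `w`.
  let φ : (Fin 2 → ℝ) → ℝ × ℝ := fun q => (-log (q 0), max a (-log (max (q 1) (exp (-b)))))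
  have hφ : ContinuousOn φ expRect := by
    refine ((continuous_apply 0).continuousOn.log fun q hq => ?_).neg.prodMk
      (continuous_const.max (((continuous_apply 1).max continuous_const).log ?_).neg).continuousOn
    · exact ((exp_pos _).trans_le (mem_expRect.mp hq).1.1).ne'
    · exact fun q => (lt_max_of_lt_right (exp_pos _)).ne'
  have hφU : MapsTo φ expRect (Icc (-1 : ℝ) 1 ×ˢ Ioi (-1 : ℝ)) := by
    intro q hq
    obtain ⟨⟨hq₁, hq₂⟩, -⟩ := mem_expRect.mp hq
    have hq₀ : 0 < q 0 := (exp_pos _).trans_le hq₁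
    refine ⟨⟨?_, ?_⟩, lt_max_of_lt_left ha⟩
    · linarith [(log_le_iff_le_exp hq₀).mpr hq₂]
    · linarith [(le_log_iff_exp_le hq₀).mpr hq₁]
  refine ⟨g ∘ φ, hgcont.comp hφ hφU, fun p hp => ?_⟩
  simp only [Function.comp_apply, φ, expNegCoords, Matrix.cons_val_zero, Matrix.cons_val_one,
    log_exp, neg_neg, max_neg_log_max_exp_neg]
  exact apply_max_min_snd_eq ha hKab hgK hp

/-- Stone–Weierstrass type density: on `U = [-1,1] × (-1,∞)`, every continuous
compactly supported function vanishing at the origin is uniformly approximable by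
linear combinations of the functions `H_{k,ℓ}(u,w) = 1 - e^{-ku-ℓw}`, `k, ℓ ≥ 0`. -/
theorem stmt16 (g : ℝ × ℝ → ℝ)
    (hgcont : ContinuousOn g (Icc (-1 : ℝ) 1 ×ˢ Ioi (-1 : ℝ)))
    (hgsupp : ∃ K : Set (ℝ × ℝ), IsCompact K ∧ K ⊆ Icc (-1 : ℝ) 1 ×ˢ Ioi (-1 : ℝ) ∧
      ∀ p ∈ Icc (-1 : ℝ) 1 ×ˢ Ioi (-1 : ℝ), p ∉ K → g p = 0)
    (hg0 : g (0, 0) = 0) :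
    ∀ ε > (0 : ℝ), ∃ (m : ℕ) (c k ℓ : Fin m → ℝ),
      (∀ i, 0 ≤ k i) ∧ (∀ i, 0 ≤ ℓ i) ∧
      ∀ p ∈ Icc (-1 : ℝ) 1 ×ˢ Ioi (-1 : ℝ),
        |g p - ∑ i, c i * (1 - Real.exp (-(k i) * p.1 - (ℓ i) * p.2))| ≤ ε := by
  intro ε hε
  obtain ⟨F, hF, hFg⟩ := exists_continuousOn_expRect_comp_expNegCoords hgcont hgsupp
  obtain ⟨P, hP⟩ := exists_eval_near_of_isCompact isCompact_expRect hF (half_pos hε)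
  obtain ⟨m, d, k, ℓ, hk, hℓ, hPexp⟩ := exists_exp_sum_eq_eval P
  refine ⟨m, fun i => -d i, k, ℓ, hk, hℓ, fun p hp => ?_⟩
  have h0 : ((0 : ℝ), (0 : ℝ)) ∈ Icc (-1 : ℝ) 1 ×ˢ Ioi (-1 : ℝ) := by norm_num
  have hsum : ∑ i, -d i * (1 - exp (-k i * p.1 - ℓ i * p.2)) =
      eval (expNegCoords p) P - eval (expNegCoords (0, 0)) P := by
    simp only [hPexp, mul_zero, sub_zero, exp_zero, mul_one, ← Finset.sum_sub_distrib]
    exact Fintype.sum_congr _ _ fun i => by ring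
  have hp' : |g p - eval (expNegCoords p) P| < ε / 2 := hFg p hp ▸ hP _ (mapsTo_expNegCoords hp)
  have h0' : |eval (expNegCoords (0, 0)) P| < ε / 2 := by
    simpa [hFg _ h0, hg0] using hP _ (mapsTo_expNegCoords h0)
  calc |g p - ∑ i, -d i * (1 - exp (-k i * p.1 - ℓ i * p.2))|
      = |(g p - eval (expNegCoords p) P) + eval (expNegCoords (0, 0)) P| := by rw [hsum]; ring_nf
    _ ≤ |g p - eval (expNegCoords p) P| + |eval (expNegCoords (0, 0)) P| := abs_add_le _ _
    _ ≤ ε := by linarith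
end

section
/- (i) There exists a constant L > 0 such that for all y, y' ∈ (0,1]: min(−log y, −log y') (y − y')² + min(y, y')² |log y − log y'| ≤ L |y − y'| (and the left-hand side, extended by 0 when y or y' equals 0, satisfies the same bound on [0,1]²). (ii) Define g₂(y,u) = y (e^{u log y} − 1) for y ∈ (0,1] and u ∈ [−1/2, 1]. There exists a constant C > 0 such that for all u ∈ [−1/2,1] and all y, y' ∈ (0,1]: ( g₂(y,u) − g₂(y',u) )² ≤ C |y − y'| u². -/
/-!
Write `E = exp (u log y) = y ^ u`. For (i), take `y' ≤ y`; both terms are at most `y - y'`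
by `a log (b / a) ≤ b - a`, applied to `(y, 1)` and to `(y', y)`.

For (ii), with `t = -log y / 2 ≥ 0` we have `E = exp (-2u t)` and `exp t = 1 / √y`, so the
convexity of `exp` gives `|E - 1| ≤ 2|u| / √y` and `|E - E'| ≤ |u| log (y / y') / √y'`.
Splitting `y (E - 1) - y' (E' - 1) = (y - y') (E - 1) + y' (E - E')`, each part is at most
`2|u| √(y - y')`, the second one because
`√y' log (√y / √y') ≤ √y - √y' ≤ √(y - y')`.
-/

open Set Real

namespace Real

lemma exp_sub_exp_le_mul_exp (a b : ℝ) : exp a - exp b ≤ (a - b) * exp a := by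
  have h := mul_le_mul_of_nonneg_right (add_one_le_exp (b - a)) (exp_nonneg a)
  rw [← exp_add, sub_add_cancel] at h
  linarith

lemma abs_exp_sub_exp_le {a b c : ℝ} (ha : a ≤ c) (hb : b ≤ c) :
    |exp a - exp b| ≤ |a - b| * exp c := by
  wlog hba : b ≤ a generalizing a b
  · rw [abs_sub_comm, abs_sub_comm a]
    exact this hb ha (le_of_not_ge hba)
  rw [abs_of_nonneg (sub_nonneg.2 (exp_le_exp.2 hba)), abs_of_nonneg (sub_nonneg.2 hba)]
  calc exp a - exp b ≤ (a - b) * exp a := exp_sub_exp_le_mul_exp a b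
    _ ≤ (a - b) * exp c := by gcongr

lemma exp_mul_le_one_add_mul_sub_one {p : ℝ} (hp0 : 0 ≤ p) (hp1 : p ≤ 1) (t : ℝ) :
    exp (p * t) ≤ 1 + p * (exp t - 1) := by
  have h := convexOn_exp.2 (mem_univ t) (mem_univ 0) hp0 (sub_nonneg.2 hp1) (add_sub_cancel p 1)
  simp only [smul_eq_mul, mul_zero, add_zero, exp_zero, mul_one] at h
  linarith

lemma abs_exp_mul_sub_one_le {q t : ℝ} (hq : q ≤ 1) (ht : 0 ≤ t) :
    |exp (q * t) - 1| ≤ |q| * exp t := by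
  rcases le_total q 0 with hq0 | hq0
  · calc |exp (q * t) - 1| = |exp (q * t) - exp 0| := by rw [exp_zero]
      _ ≤ |q * t - 0| * exp 0 := abs_exp_sub_exp_le (mul_nonpos_of_nonpos_of_nonneg hq0 ht) le_rfl
      _ = |q| * t := by rw [sub_zero, exp_zero, mul_one, abs_mul, abs_of_nonneg ht]
      _ ≤ |q| * exp t := by gcongr; linarith [add_one_le_exp t]
  · have h := exp_mul_le_one_add_mul_sub_one hq0 hq t
    rw [abs_of_nonneg (sub_nonneg.2 (one_le_exp (mul_nonneg hq0 ht))), abs_of_nonneg hq0]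
    nlinarith

lemma mul_log_div_le_sub {a b : ℝ} (ha : 0 < a) (hb : 0 < b) : a * log (b / a) ≤ b - a :=
  calc a * log (b / a) ≤ a * (b / a - 1) := by
        gcongr; exact log_le_sub_one_of_pos (by positivity)
    _ = b - a := by field_simp

lemma exp_neg_log_div_two {y : ℝ} (hy : 0 < y) : exp (-log y / 2) = (√y)⁻¹ := by
  rw [exp_half, exp_neg, exp_log hy, sqrt_inv]

lemma sqrt_sub_sqrt_le_sqrt_sub {x y : ℝ} (hy : 0 ≤ y) (hyx : y ≤ x) :
    √x - √y ≤ √(x - y) := by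
  have hsq : √x ≤ √(x - y) + √y := by
    rw [sqrt_le_left (by positivity)]
    nlinarith [sq_sqrt hy, sq_sqrt (sub_nonneg.2 hyx), sqrt_nonneg y, sqrt_nonneg (x - y)]
  linarith

end Real

lemma min_neg_log_mul_sq_add_le_two_mul_sub {y y' : ℝ} (hy' : 0 < y') (hle : y' ≤ y)
    (hy1 : y ≤ 1) :
    min (-log y) (-log y') * (y - y') ^ 2 + min y y' ^ 2 * |log y - log y'| ≤ 2 * (y - y') := by
  have hy : 0 < y := hy'.trans_le hle
  have hlog : log y' ≤ log y := log_le_log hy' hle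
  have hlog0 : 0 ≤ -log y := neg_nonneg.2 (log_nonpos hy.le hy1)
  rw [min_eq_left (neg_le_neg hlog), min_eq_right hle, abs_of_nonneg (sub_nonneg.2 hlog)]
  have hy_log : y * -log y ≤ 1 - y := by
    simpa only [one_div, log_inv] using mul_log_div_le_sub hy one_pos
  have hy'_log : y' * (log y - log y') ≤ y - y' := by
    simpa only [log_div hy.ne' hy'.ne'] using mul_log_div_le_sub hy' hy
  have h1 : -log y * (y - y') ^ 2 ≤ y - y' := by
    nlinarith [mul_nonneg hlog0 (sub_nonneg.2 hle)]
  have h2 : y' ^ 2 * (log y - log y') ≤ y - y' := by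
    nlinarith [mul_nonneg hy'.le (sub_nonneg.2 hlog)]
  linarith

lemma min_neg_log_mul_sq_add_le_two_mul_abs_sub {y y' : ℝ} (hy : y ∈ Ioc (0 : ℝ) 1)
    (hy' : y' ∈ Ioc (0 : ℝ) 1) :
    min (-log y) (-log y') * (y - y') ^ 2 + min y y' ^ 2 * |log y - log y'| ≤
      2 * |y - y'| := by
  wlog hle : y' ≤ y generalizing y y'
  · rw [min_comm, min_comm y, sub_sq_comm, abs_sub_comm, abs_sub_comm y]
    exact this hy' hy (le_of_not_ge hle)
  rw [abs_of_nonneg (sub_nonneg.2 hle)]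
  exact min_neg_log_mul_sq_add_le_two_mul_sub hy'.1 hle hy.2

lemma abs_exp_mul_log_sub_one_le {u y : ℝ} (hu : -1 / 2 ≤ u) (hy : 0 < y) (hy1 : y ≤ 1) :
    |exp (u * log y) - 1| ≤ 2 * |u| / √y := by
  have ht : 0 ≤ -log y / 2 := by linarith [log_nonpos hy.le hy1]
  calc |exp (u * log y) - 1| = |exp (-2 * u * (-log y / 2)) - 1| := by ring_nf
    _ ≤ |-2 * u| * exp (-log y / 2) := abs_exp_mul_sub_one_le (by linarith) ht
    _ = 2 * |u| / √y := by rw [exp_neg_log_div_two hy, abs_mul]; norm_num; ring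

lemma abs_exp_mul_log_sub_exp_mul_log_le {u y y' : ℝ} (hu : -1 / 2 ≤ u) (hy' : 0 < y')
    (hle : y' ≤ y) (hy1 : y ≤ 1) :
    |exp (u * log y) - exp (u * log y')| ≤ |u| * log (y / y') / √y' := by
  have hy : 0 < y := hy'.trans_le hle
  have hlog : log y' ≤ log y := log_le_log hy' hle
  have hlog0 : log y ≤ 0 := log_nonpos hy.le hy1
  calc |exp (u * log y) - exp (u * log y')|
      ≤ |u * log y - u * log y'| * exp (-log y' / 2) :=
        abs_exp_sub_exp_le (by nlinarith) (by nlinarith)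
    _ = |u| * log (y / y') / √y' := by
        rw [exp_neg_log_div_two hy', ← mul_sub, abs_mul, abs_of_nonneg (sub_nonneg.2 hlog),
          log_div hy.ne' hy'.ne', div_eq_mul_inv]

lemma abs_mul_exp_mul_log_sub_one_sub_le {u y y' : ℝ} (hu : -1 / 2 ≤ u) (hy' : 0 < y')
    (hle : y' ≤ y) (hy1 : y ≤ 1) :
    |y * (exp (u * log y) - 1) - y' * (exp (u * log y') - 1)| ≤ 4 * |u| * √(y - y') := by
  have hy : 0 < y := hy'.trans_le hle
  have hsy' : 0 < √y' := sqrt_pos.2 hy'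
  set E := exp (u * log y)
  set E' := exp (u * log y')
  have h1 : (y - y') * |E - 1| ≤ 2 * |u| * √(y - y') := by
    have hdiv : (y - y') / √y ≤ √(y - y') := by
      rw [div_le_iff₀ (sqrt_pos.2 hy)]
      calc y - y' = √(y - y') * √(y - y') := (mul_self_sqrt (sub_nonneg.2 hle)).symm
        _ ≤ √(y - y') * √y := by gcongr; linarith
    calc (y - y') * |E - 1| ≤ (y - y') * (2 * |u| / √y) := by
          gcongr; exact abs_exp_mul_log_sub_one_le hu hy hy1
      _ = 2 * |u| * ((y - y') / √y) := by ring
      _ ≤ 2 * |u| * √(y - y') := by gcongr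
  have h2 : y' * |E - E'| ≤ 2 * |u| * √(y - y') := by
    have hlog : log (√y / √y') = log (y / y') / 2 := by
      rw [← sqrt_div hy.le, log_sqrt (div_nonneg hy.le hy'.le)]
    calc y' * |E - E'| ≤ y' * (|u| * log (y / y') / √y') := by
          gcongr; exact abs_exp_mul_log_sub_exp_mul_log_le hu hy' hle hy1
      _ = 2 * |u| * (√y' * log (√y / √y')) := by
          rw [hlog]; linear_combination |u| * log (y / y') * div_sqrt (x := y')
      _ ≤ 2 * |u| * (√y - √y') := by gcongr; exact mul_log_div_le_sub hsy' (sqrt_pos.2 hy)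
      _ ≤ 2 * |u| * √(y - y') := by gcongr; exact sqrt_sub_sqrt_le_sqrt_sub hy'.le hle
  calc |y * (E - 1) - y' * (E' - 1)| = |(y - y') * (E - 1) + y' * (E - E')| := by ring_nf
    _ ≤ (y - y') * |E - 1| + y' * |E - E'| := by
        refine (abs_add_le _ _).trans_eq ?_
        rw [abs_mul, abs_mul, abs_of_nonneg (sub_nonneg.2 hle), abs_of_pos hy']
    _ ≤ 4 * |u| * √(y - y') := by linarith

lemma sq_mul_exp_mul_log_sub_one_sub_le {u y y' : ℝ} (hu : -1 / 2 ≤ u)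
    (hy : y ∈ Ioc (0 : ℝ) 1) (hy' : y' ∈ Ioc (0 : ℝ) 1) :
    (y * (exp (u * log y) - 1) - y' * (exp (u * log y') - 1)) ^ 2 ≤ 16 * |y - y'| * u ^ 2 := by
  wlog hle : y' ≤ y generalizing y y'
  · rw [sub_sq_comm, abs_sub_comm]
    exact this hy' hy (le_of_not_ge hle)
  calc (y * (exp (u * log y) - 1) - y' * (exp (u * log y') - 1)) ^ 2
      = |y * (exp (u * log y) - 1) - y' * (exp (u * log y') - 1)| ^ 2 := (sq_abs _).symm
    _ ≤ (4 * |u| * √(y - y')) ^ 2 := by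
        gcongr; exact abs_mul_exp_mul_log_sub_one_sub_le hu hy'.1 hle hy.2
    _ = 16 * |y - y'| * u ^ 2 := by
        rw [mul_pow, mul_pow, sq_sqrt (sub_nonneg.2 hle), sq_abs, abs_of_nonneg (sub_nonneg.2 hle)]
        ring

/-- Lemma 6.3: (i) `min(-log y, -log y')(y-y')² + min(y,y')²|log y - log y'| ≤ L|y-y'|`
on `(0,1]` (extended by `0` when `y` or `y'` vanishes), and
(ii) with `g₂(y,u) = y(e^{u log y} - 1)`, `(g₂(y,u) - g₂(y',u))² ≤ C|y-y'|u²`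
for `u ∈ [-1/2,1]` and `y, y' ∈ (0,1]`. -/
theorem stmt19 :
    (∃ L > (0 : ℝ), ∀ y ∈ Icc (0 : ℝ) 1, ∀ y' ∈ Icc (0 : ℝ) 1,
      (if y = 0 ∨ y' = 0 then 0 else
        min (-Real.log y) (-Real.log y') * (y - y') ^ 2 +
          (min y y') ^ 2 * |Real.log y - Real.log y'|) ≤ L * |y - y'|) ∧
    (∃ C > (0 : ℝ), ∀ u ∈ Icc (-(1 : ℝ) / 2) 1, ∀ y ∈ Ioc (0 : ℝ) 1, ∀ y' ∈ Ioc (0 : ℝ) 1,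
      (y * (Real.exp (u * Real.log y) - 1) - y' * (Real.exp (u * Real.log y') - 1)) ^ 2 ≤
        C * |y - y'| * u ^ 2) := by
  refine ⟨⟨2, two_pos, fun y hy y' hy' => ?_⟩,
    ⟨16, by norm_num, fun u hu y hy y' hy' => sq_mul_exp_mul_log_sub_one_sub_le hu.1 hy hy'⟩⟩
  split_ifs with h0
  · positivity
  · push Not at h0
    exact min_neg_log_mul_sq_add_le_two_mul_abs_sub ⟨hy.1.lt_of_ne' h0.1, hy.2⟩
      ⟨hy'.1.lt_of_ne' h0.2, hy'.2⟩
end
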